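/- arXiv:math/0606233 — 9 statements merged into one kernel-verified Lean document; each statement's English description precedes it below -/
import Mathlib

section
/- Let X, Y be n×n complex matrices such that the matrix XY - YX + I has rank 1. Then the pair (X,Y) is irreducible: the only subspaces of ℂ^n invariant under both X and Y are 0 and ℂ^n. -/
open LinearMap Module


lemma trace_smulRight' {M : Type*} [AddCommGroup M] [Module ℂ M] [Module.Finite ℂ M] [Module.Free ℂ M]
    (φ : M →ₗ[ℂ] ℂ) (x : M) : LinearMap.trace ℂ M (φ.smulRight x) = φ x := by
  have : φ.smulRight x = dualTensorHom ℂ M M (φ ⊗ₜ x) := by ext w; simp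
  rw [this, LinearMap.trace_eq_contract_apply, contractLeft_apply]


/-- If `X Y : Matrix (Fin n) (Fin n) ℂ` satisfy `rank (X*Y - Y*X + 1) = 1`, then the pair
`(X, Y)` is irreducible: the only subspaces of `ℂⁿ` invariant under both `X` and `Y`
are `0` and `ℂⁿ`. -/
theorem cm_pair_irreducible (n : ℕ) (X Y : Matrix (Fin n) (Fin n) ℂ)
    (h : (X * Y - Y * X + 1).rank = 1)
    (W : Submodule ℂ (Fin n → ℂ))
    (hX : ∀ v ∈ W, X.mulVec v ∈ W) (hY : ∀ v ∈ W, Y.mulVec v ∈ W) :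
    W = ⊥ ∨ W = ⊤ := by
  set A := X * Y - Y * X + 1 with hA
  -- rank-one decomposition of A
  have hr : finrank ℂ (LinearMap.range A.mulVecLin) = 1 := h
  obtain ⟨v, hv0, hv⟩ := finrank_eq_one_iff'.mp hr
  set u : Fin n → ℂ := (v : Fin n → ℂ) with hu_def
  have hu0 : u ≠ 0 := fun hh => hv0 (Subtype.ext hh)
  obtain ⟨i0, hi0⟩ : ∃ i, u i ≠ 0 := by
    by_contra hc; push_neg at hc; exact hu0 (funext hc)
  set φ : (Fin n → ℂ) →ₗ[ℂ] ℂ := (u i0)⁻¹ • ((LinearMap.proj i0).comp A.mulVecLin) with hφ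
  have hAw : ∀ w, A.mulVec w = φ w • u := by
    intro w
    have hmem : A.mulVec w ∈ LinearMap.range A.mulVecLin := ⟨w, rfl⟩
    obtain ⟨c, hc⟩ := hv ⟨A.mulVec w, hmem⟩
    have hc' : c • u = A.mulVec w := congrArg Subtype.val hc
    have : φ w = c := by
      simp only [hφ, LinearMap.smul_apply, LinearMap.comp_apply, LinearMap.proj_apply,
        Matrix.mulVecLin_apply, smul_eq_mul]
      rw [← hc']
      field_simp [hi0]
      rw [Pi.smul_apply, smul_eq_mul, mul_comm]
    rw [this, hc']
  -- trace of A is n, and equals φ u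
  have htrA : Matrix.trace A = (n : ℂ) := by
    simp [hA, Matrix.trace_add, Matrix.trace_sub, Matrix.trace_mul_comm X Y, Matrix.trace_one]
  have hmvl : A.mulVecLin = φ.smulRight u := by
    apply LinearMap.ext
    intro w
    rw [Matrix.mulVecLin_apply, LinearMap.smulRight_apply, hAw w]
  have hφu : φ u = (n : ℂ) := by
    have h1 : LinearMap.trace ℂ (Fin n → ℂ) A.mulVecLin = Matrix.trace A := by
      rw [LinearMap.trace_eq_matrix_trace ℂ (Pi.basisFun ℂ (Fin n)),
        LinearMap.toMatrix_eq_toMatrix']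
      congr 1
      exact LinearMap.toMatrix'_toLin' A
    rw [hmvl, trace_smulRight'] at h1
    rw [h1, htrA]
  -- restricted maps
  have hX' : ∀ w ∈ W, X.mulVecLin w ∈ W := hX
  have hY' : ∀ w ∈ W, Y.mulVecLin w ∈ W := hY
  set f : W →ₗ[ℂ] W := X.mulVecLin.restrict hX' with hf
  set g : W →ₗ[ℂ] W := Y.mulVecLin.restrict hY' with hg
  set cW : W →ₗ[ℂ] W := f * g - g * f with hcW
  have htr : LinearMap.trace ℂ W cW = 0 := by
    rw [hcW, map_sub (LinearMap.trace ℂ ↥W) (f*g) (g*f), LinearMap.trace_mul_comm, sub_self]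
  have hcWapp : ∀ w : W, (cW w : Fin n → ℂ) = φ (w : Fin n → ℂ) • u - (w : Fin n → ℂ) := by
    intro w
    have h1 : (cW w : Fin n → ℂ)
        = X.mulVec (Y.mulVec w) - Y.mulVec (X.mulVec w) := by
      simp [hcW, hf, hg, LinearMap.restrict_apply, Matrix.mulVecLin_apply]
    have h2 : X.mulVec (Y.mulVec w) - Y.mulVec (X.mulVec w) = A.mulVec w - w := by
      rw [hA]
      simp [Matrix.add_mulVec, Matrix.sub_mulVec, Matrix.one_mulVec, Matrix.mulVec_mulVec]
    rw [h1, h2, hAw]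
  by_cases hw : ∃ w ∈ W, φ w ≠ 0
  · -- u ∈ W, and W = ⊤
    right
    obtain ⟨w0, hw0W, hw0⟩ := hw
    have huW : u ∈ W := by
      have h1 : (cW ⟨w0, hw0W⟩ : Fin n → ℂ) + w0 = φ w0 • u := by
        rw [hcWapp]; simp
      have h2 : φ w0 • u ∈ W := by
        rw [← h1]; exact W.add_mem (cW ⟨w0, hw0W⟩).2 hw0W
      have := W.smul_mem (φ w0)⁻¹ h2
      rwa [smul_smul, inv_mul_cancel₀ hw0, one_smul] at this
    have hcWeq : cW = (φ.comp W.subtype).smulRight ⟨u, huW⟩ - LinearMap.id := by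
      ext w : 1
      apply Subtype.ext
      simp [hcWapp w]
    have : LinearMap.trace ℂ W cW = (n : ℂ) - (finrank ℂ W : ℂ) := by
      rw [hcWeq, map_sub (LinearMap.trace ℂ ↥W) _ _, trace_smulRight', LinearMap.trace_id]
      simp [hφu]
    rw [htr] at this
    have hfr : (finrank ℂ W : ℂ) = (n : ℂ) := by linear_combination this
    have hfr' : finrank ℂ W = n := Nat.cast_injective hfr
    have : finrank ℂ W = finrank ℂ (Fin n → ℂ) := by
      rw [hfr', finrank_fintype_fun_eq_card, Fintype.card_fin]
    exact Submodule.eq_top_of_finrank_eq this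
  · -- φ vanishes on W, so W = ⊥
    left
    push_neg at hw
    have hcWeq : cW = -LinearMap.id := by
      ext w : 1
      apply Subtype.ext
      simp [hcWapp w, hw _ w.2]
    have : LinearMap.trace ℂ W cW = -(finrank ℂ W : ℂ) := by
      rw [hcWeq, map_neg (LinearMap.trace ℂ ↥W) _, LinearMap.trace_id]
    rw [htr] at this
    have hfr : finrank ℂ W = 0 := by
      have : (finrank ℂ W : ℂ) = 0 := by linear_combination this
      exact_mod_cast this
    exact Submodule.finrank_eq_zero.mp hfr
end

section
/- Let X, Y be n×n complex matrices such that XY - YX + I has rank 1, and suppose B ∈ GL_n(ℂ) satisfies BX = XB and BY = YB. Then B is a scalar multiple of the identity. -/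
/-- If `X Y : Matrix (Fin n) (Fin n) ℂ` satisfy `rank (X*Y - Y*X + 1) = 1` and an invertible
matrix `B` commutes with both `X` and `Y`, then `B` is a scalar multiple of the identity. -/
theorem cm_stabilizer_scalar (n : ℕ) (X Y B : Matrix (Fin n) (Fin n) ℂ)
    (h : (X * Y - Y * X + 1).rank = 1)
    (hB : IsUnit B) (hBX : B * X = X * B) (hBY : B * Y = Y * B) :
    ∃ c : ℂ, B = c • (1 : Matrix (Fin n) (Fin n) ℂ) := by
  classical
  set C : Matrix (Fin n) (Fin n) ℂ := X * Y - Y * X + 1 with hC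
  -- B commutes with C
  have h1 : B * (X * Y) = (X * Y) * B := by
    rw [← mul_assoc, hBX, mul_assoc, hBY, ← mul_assoc]
  have h2 : B * (Y * X) = (Y * X) * B := by
    rw [← mul_assoc, hBY, mul_assoc, hBX, ← mul_assoc]
  have hBC : B * C = C * B := by
    simp only [hC, mul_add, add_mul, mul_sub, sub_mul, mul_one, one_mul, h1, h2]
  -- linear map versions
  set fB := B.mulVecLin with hfB
  set fC := C.mulVecLin with hfC
  have hBCl : fB ∘ₗ fC = fC ∘ₗ fB := by
    rw [hfB, hfC, ← Matrix.mulVecLin_mul, ← Matrix.mulVecLin_mul, hBC]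
  -- a spanning vector of range fC
  have hrank : Module.finrank ℂ (LinearMap.range fC) = 1 := h
  obtain ⟨v, hv0, hvspan⟩ := finrank_eq_one_iff'.mp hrank
  set v0 : Fin n → ℂ := (v : Fin n → ℂ) with hv0def
  have hv0ne : v0 ≠ 0 := fun hh => hv0 (Subtype.ext hh)
  -- B v0 is a multiple of v0
  have hBv0mem : fB v0 ∈ LinearMap.range fC := by
    obtain ⟨x, hx⟩ := v.2
    refine ⟨fB x, ?_⟩
    have := congrFun (congrArg DFunLike.coe hBCl) x
    simpa [hx, hv0def] using this.symm
  obtain ⟨c, hc⟩ := hvspan ⟨fB v0, hBv0mem⟩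
  have hBv0 : fB v0 = c • v0 := by
    have := congrArg (Subtype.val) hc
    simpa [hv0def] using this.symm
  refine ⟨c, ?_⟩
  -- the kernel of fB - c • id is invariant and contains v0
  set g : (Fin n → ℂ) →ₗ[ℂ] (Fin n → ℂ) := fB - c • LinearMap.id with hg
  set K : Submodule ℂ (Fin n → ℂ) := LinearMap.ker g with hK
  have hv0K : v0 ∈ K := by
    simp [hK, hg, LinearMap.mem_ker, hBv0, sub_eq_zero]
  have hrange : LinearMap.range fC ≤ K := by
    rintro w hw
    obtain ⟨a, ha⟩ := hvspan ⟨w, hw⟩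
    have : w = a • v0 := by
      have := congrArg Subtype.val ha
      simpa [hv0def] using this.symm
    rw [this]
    exact K.smul_mem a hv0K
  -- invariance of K under X and Y
  have hinv : ∀ (A : Matrix (Fin n) (Fin n) ℂ), B * A = A * B →
      K ≤ K.comap A.mulVecLin := by
    intro A hA u hu
    simp only [hK, LinearMap.mem_ker, Submodule.mem_comap] at hu ⊢
    have hcomm : fB ∘ₗ A.mulVecLin = A.mulVecLin ∘ₗ fB := by
      rw [hfB, ← Matrix.mulVecLin_mul, ← Matrix.mulVecLin_mul, hA]
    have : g (A.mulVecLin u) = A.mulVecLin (g u) := by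
      simp only [hg, LinearMap.sub_apply, LinearMap.smul_apply, LinearMap.id_apply, map_sub,
        map_smul]
      have := congrFun (congrArg DFunLike.coe hcomm) u
      rw [LinearMap.comp_apply, LinearMap.comp_apply] at this
      rw [this]
    rw [this, hu, map_zero]
  have hXK := hinv X hBX
  have hYK := hinv Y hBY
  -- induced maps on the quotient
  set X' := K.mapQ K X.mulVecLin hXK with hX'
  set Y' := K.mapQ K Y.mulVecLin hYK with hY'
  have hfCdecomp : ∀ x, fC x = X.mulVecLin (Y.mulVecLin x) - Y.mulVecLin (X.mulVecLin x) + x := by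
    intro x
    simp [hfC, hC, Matrix.mulVecLin_apply, Matrix.add_mulVec, Matrix.sub_mulVec,
      Matrix.one_mulVec, ← Matrix.mulVec_mulVec]
  have key : X' * Y' - Y' * X' + 1 = (0 : Module.End ℂ ((Fin n → ℂ) ⧸ K)) := by
    apply Submodule.linearMap_qext
    refine LinearMap.ext fun x => ?_
    have hmem : fC x ∈ K := hrange ⟨x, rfl⟩
    have : K.mkQ (fC x) = 0 := (Submodule.Quotient.mk_eq_zero K).mpr hmem
    rw [hfCdecomp x] at this
    simp only [map_add, map_sub] at this
    simpa [hX', hY', Submodule.mapQ_apply, Module.End.mul_apply] using this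
  -- trace argument
  have htr := congrArg (LinearMap.trace ℂ ((Fin n → ℂ) ⧸ K)) key
  rw [map_add, map_sub, LinearMap.trace_mul_comm, sub_self, zero_add, map_zero,
    Module.End.one_eq_id, LinearMap.trace_id] at htr
  have hfrq : Module.finrank ℂ ((Fin n → ℂ) ⧸ K) = 0 := by exact_mod_cast htr
  have hKtop : K = ⊤ := by
    apply Submodule.eq_top_of_finrank_eq
    have := K.finrank_quotient_add_finrank
    rw [hfrq, zero_add] at this
    rw [this]
  -- conclude
  apply Matrix.toLin'.injective
  refine LinearMap.ext fun x => ?_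
  have hx : x ∈ K := hKtop ▸ Submodule.mem_top
  have : g x = 0 := hx
  simp only [hg, LinearMap.sub_apply, LinearMap.smul_apply, LinearMap.id_apply,
    sub_eq_zero] at this
  simp [Matrix.toLin'_apply, Matrix.smul_mulVec, Matrix.one_mulVec, hfB,
    Matrix.mulVecLin_apply] at this ⊢
  exact this
end

section
/- The algebra ℂ[x_1,...,x_n, p_1,...,p_n]^{S_n} of S_n-invariant polynomials (with S_n acting diagonally, permuting the x_i and p_i simultaneously) is generated as a Poisson algebra by the power sums f_m = Σ_i x_i^m and f_m* = Σ_i p_i^m, m ≥ 1. -/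
open MvPolynomial

/-- The standard Poisson bracket on `ℂ[x_1,...,x_n,p_1,...,p_n]`, where the `x`-variables are
indexed by `Sum.inl` and the `p`-variables by `Sum.inr`: `{p_i, x_j} = δ_{ij}`,
`{x_i, x_j} = {p_i, p_j} = 0`. -/
noncomputable def polyPoisson {n : ℕ} (f g : MvPolynomial (Fin n ⊕ Fin n) ℂ) :
    MvPolynomial (Fin n ⊕ Fin n) ℂ :=
  ∑ i : Fin n, (pderiv (Sum.inr i) f * pderiv (Sum.inl i) g
    - pderiv (Sum.inl i) f * pderiv (Sum.inr i) g)

noncomputable def mpsum {n : ℕ} (a b : ℕ) : MvPolynomial (Fin n ⊕ Fin n) ℂ :=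
  ∑ i : Fin n, X (Sum.inl i) ^ a * X (Sum.inr i) ^ b

variable {n : ℕ}

lemma dLL (i j : Fin n) (m : ℕ) :
    pderiv (Sum.inl i) ((X (Sum.inl j) : MvPolynomial (Fin n ⊕ Fin n) ℂ) ^ m) =
      if j = i then (m : MvPolynomial (Fin n ⊕ Fin n) ℂ) * X (Sum.inl j) ^ (m - 1) else 0 := by
  rw [pderiv_pow]
  by_cases h : j = i
  · subst h; simp [pderiv_X_self]
  · rw [pderiv_X_of_ne (by simpa using h)]; simp [h]

lemma dRL (i j : Fin n) (m : ℕ) :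
    pderiv (Sum.inl i) ((X (Sum.inr j) : MvPolynomial (Fin n ⊕ Fin n) ℂ) ^ m) = 0 := by
  rw [pderiv_pow, pderiv_X_of_ne (by simp)]; ring

lemma dRR (i j : Fin n) (m : ℕ) :
    pderiv (Sum.inr i) ((X (Sum.inr j) : MvPolynomial (Fin n ⊕ Fin n) ℂ) ^ m) =
      if j = i then (m : MvPolynomial (Fin n ⊕ Fin n) ℂ) * X (Sum.inr j) ^ (m - 1) else 0 := by
  rw [pderiv_pow]
  by_cases h : j = i
  · subst h; simp [pderiv_X_self]
  · rw [pderiv_X_of_ne (by simpa using h)]; simp [h]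

lemma dLR (i j : Fin n) (m : ℕ) :
    pderiv (Sum.inr i) ((X (Sum.inl j) : MvPolynomial (Fin n ⊕ Fin n) ℂ) ^ m) = 0 := by
  rw [pderiv_pow, pderiv_X_of_ne (by simp)]; ring

lemma pderiv_inl_mpsum (i : Fin n) (a b : ℕ) :
    pderiv (Sum.inl i) (mpsum a b : MvPolynomial (Fin n ⊕ Fin n) ℂ) =
      (a : MvPolynomial (Fin n ⊕ Fin n) ℂ) * (X (Sum.inl i) ^ (a-1) * X (Sum.inr i) ^ b) := by
  unfold mpsum
  rw [map_sum, Finset.sum_eq_single i]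
  · rw [Derivation.leibniz, dLL, dRL]
    simp; ring
  · intro j _ hj
    rw [Derivation.leibniz, dLL, dRL]
    simp [hj]
  · simp

lemma pderiv_inr_mpsum (i : Fin n) (a b : ℕ) :
    pderiv (Sum.inr i) (mpsum a b : MvPolynomial (Fin n ⊕ Fin n) ℂ) =
      (b : MvPolynomial (Fin n ⊕ Fin n) ℂ) * (X (Sum.inl i) ^ a * X (Sum.inr i) ^ (b-1)) := by
  unfold mpsum
  rw [map_sum, Finset.sum_eq_single i]
  · rw [Derivation.leibniz, dRR, dLR]
    simp; ring
  · intro j _ hj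
    rw [Derivation.leibniz, dRR, dLR]
    simp [hj]
  · simp

lemma bracket_mpsum (a b : ℕ) :
    polyPoisson (mpsum 0 2 : MvPolynomial (Fin n ⊕ Fin n) ℂ) (mpsum (a+1) b) =
      ((2*(a+1) : ℕ) : MvPolynomial (Fin n ⊕ Fin n) ℂ) * mpsum a (b+1) := by
  unfold polyPoisson
  rw [show (mpsum a (b+1) : MvPolynomial (Fin n ⊕ Fin n) ℂ)
      = ∑ i : Fin n, X (Sum.inl i) ^ a * X (Sum.inr i) ^ (b+1) from rfl, Finset.mul_sum]
  refine Finset.sum_congr rfl fun i _ => ?_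
  rw [pderiv_inl_mpsum, pderiv_inr_mpsum, pderiv_inl_mpsum, pderiv_inr_mpsum]
  simp only [Nat.add_sub_cancel, Nat.cast_zero, zero_mul, mul_zero, sub_zero, pow_zero, one_mul,
    pow_one, Nat.cast_ofNat, Nat.cast_mul, Nat.cast_add, Nat.cast_one]
  rw [pow_succ]
  ring


noncomputable def symP (f : MvPolynomial (Fin n ⊕ Fin n) ℂ) : MvPolynomial (Fin n ⊕ Fin n) ℂ :=
  ∑ σ : Equiv.Perm (Fin n), rename (Sum.map ⇑σ ⇑σ) f

noncomputable def pairF (j : Fin n) (a b : ℕ) : (Fin n ⊕ Fin n) →₀ ℕ :=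
  Finsupp.single (Sum.inl j) a + Finsupp.single (Sum.inr j) b

noncomputable def nsupp (d : (Fin n ⊕ Fin n) →₀ ℕ) : Finset (Fin n) :=
  Finset.univ.filter (fun i => d (Sum.inl i) ≠ 0 ∨ d (Sum.inr i) ≠ 0)

lemma pairF_apply_inl (j i : Fin n) (a b : ℕ) :
    pairF j a b (Sum.inl i) = if i = j then a else 0 := by
  unfold pairF
  rw [Finsupp.add_apply, Finsupp.single_apply, Finsupp.single_apply]
  by_cases h : i = j
  · simp [h]
  · simp [h, Ne.symm h]

lemma pairF_apply_inr (j i : Fin n) (a b : ℕ) :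
    pairF j a b (Sum.inr i) = if i = j then b else 0 := by
  unfold pairF
  rw [Finsupp.add_apply, Finsupp.single_apply, Finsupp.single_apply]
  by_cases h : i = j
  · simp [h]
  · simp [h, Ne.symm h]

lemma nsupp_empty_eq_zero (d : (Fin n ⊕ Fin n) →₀ ℕ) (h : nsupp d = ∅) : d = 0 := by
  ext v
  have hv : ∀ i : Fin n, d (Sum.inl i) = 0 ∧ d (Sum.inr i) = 0 := by
    intro i
    by_contra hc
    have : i ∈ nsupp d := by
      unfold nsupp
      simp only [Finset.mem_filter, Finset.mem_univ, true_and]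
      tauto
    rw [h] at this
    exact absurd this (Finset.notMem_empty i)
  cases v with
  | inl i => simpa using (hv i).1
  | inr i => simpa using (hv i).2

section decomp

variable (d : (Fin n ⊕ Fin n) →₀ ℕ) (i0 : Fin n)

noncomputable def dres : (Fin n ⊕ Fin n) →₀ ℕ := (d.erase (Sum.inl i0)).erase (Sum.inr i0)

lemma dres_inl (i : Fin n) : dres d i0 (Sum.inl i) = if i = i0 then 0 else d (Sum.inl i) := by
  unfold dres
  by_cases h : i = i0 <;> simp [Finsupp.erase_apply, h]

lemma dres_inr (i : Fin n) : dres d i0 (Sum.inr i) = if i = i0 then 0 else d (Sum.inr i) := by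
  unfold dres
  by_cases h : i = i0 <;> simp [Finsupp.erase_apply, h]

lemma dres_decomp : d = pairF i0 (d (Sum.inl i0)) (d (Sum.inr i0)) + dres d i0 := by
  ext v
  cases v with
  | inl i =>
      rw [Finsupp.add_apply, pairF_apply_inl, dres_inl]
      by_cases h : i = i0 <;> simp [h]
  | inr i =>
      rw [Finsupp.add_apply, pairF_apply_inr, dres_inr]
      by_cases h : i = i0 <;> simp [h]

lemma nsupp_dres : nsupp (dres d i0) = (nsupp d).erase i0 := by
  unfold nsupp
  ext i
  simp only [Finset.mem_filter, Finset.mem_univ, true_and, Finset.mem_erase]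
  rw [dres_inl, dres_inr]
  by_cases h : i = i0 <;> simp [h]

lemma nsupp_add_pairF (a b : ℕ) (j : Fin n) (hj : j ∈ nsupp (dres d i0)) :
    nsupp (pairF j a b + dres d i0) = nsupp (dres d i0) := by
  unfold nsupp at *
  ext i
  simp only [Finset.mem_filter, Finset.mem_univ, true_and, Finsupp.add_apply,
    pairF_apply_inl, pairF_apply_inr] at *
  by_cases h : i = j
  · subst h
    simp only [if_pos rfl]
    constructor
    · intro _; exact hj
    · intro _
      rcases hj with h1 | h1
      · left; omega
      · right; omega
  · simp [h]

lemma pairF_add_dres_eq_mapDomain (j : Fin n)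
    (hj : dres d i0 (Sum.inl j) = 0 ∧ dres d i0 (Sum.inr j) = 0) :
    pairF j (d (Sum.inl i0)) (d (Sum.inr i0)) + dres d i0
      = Finsupp.mapDomain (Sum.map ⇑(Equiv.swap i0 j) ⇑(Equiv.swap i0 j)) d := by
  have hmd : ∀ v, Finsupp.mapDomain (Sum.map ⇑(Equiv.swap i0 j) ⇑(Equiv.swap i0 j)) d v
      = d (Sum.map ⇑(Equiv.swap i0 j) ⇑(Equiv.swap i0 j) v) := by
    intro v
    have : (Sum.map ⇑(Equiv.swap i0 j) ⇑(Equiv.swap i0 j)) =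
        ⇑(Equiv.sumCongr (Equiv.swap i0 j) (Equiv.swap i0 j)) := by
      funext w; cases w <;> rfl
    rw [this, Finsupp.mapDomain_equiv_apply]
    cases v <;> simp
  ext v
  rw [hmd]
  cases v with
  | inl i =>
      rw [Finsupp.add_apply, pairF_apply_inl, dres_inl]
      by_cases hij : i = j
      · subst hij
        by_cases hii : i = i0
        · subst hii; simp
        · have := hj.1
          rw [dres_inl] at this
          simp only [if_neg hii] at this
          simp [Equiv.swap_apply_def, hii, this]
      · by_cases hii : i = i0
        · subst hii
          have hji : j ≠ i := fun h => hij h.symm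
          have := hj.1
          rw [dres_inl, if_neg hji] at this
          simp [Equiv.swap_apply_def, hij, this]
        · simp [Equiv.swap_apply_def, hij, hii]
  | inr i =>
      rw [Finsupp.add_apply, pairF_apply_inr, dres_inr]
      by_cases hij : i = j
      · subst hij
        by_cases hii : i = i0
        · subst hii; simp
        · have := hj.2
          rw [dres_inr] at this
          simp only [if_neg hii] at this
          simp [Equiv.swap_apply_def, hii, this]
      · by_cases hii : i = i0
        · subst hii
          have hji : j ≠ i := fun h => hij h.symm
          have := hj.2
          rw [dres_inr, if_neg hji] at this
          simp [Equiv.swap_apply_def, hij, this]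
        · simp [Equiv.swap_apply_def, hij, hii]

end decomp

lemma sum_map_comp (σ τ : Equiv.Perm (Fin n)) :
    (Sum.map ⇑σ ⇑σ) ∘ (Sum.map ⇑τ ⇑τ) = Sum.map ⇑(σ * τ) ⇑(σ * τ) := by
  funext v; cases v <;> simp

lemma symP_rename (τ : Equiv.Perm (Fin n)) (f : MvPolynomial (Fin n ⊕ Fin n) ℂ) :
    symP (rename (Sum.map ⇑τ ⇑τ) f) = symP f := by
  unfold symP
  simp only [rename_rename, sum_map_comp]
  exact Fintype.sum_bijective (· * τ) (Group.mulRight_bijective τ) _ _ (fun σ => rfl)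

lemma mapDomain_pairF (σ : Equiv.Perm (Fin n)) (j : Fin n) (a b : ℕ) :
    Finsupp.mapDomain (Sum.map ⇑σ ⇑σ) (pairF j a b) = pairF (σ j) a b := by
  unfold pairF
  rw [Finsupp.mapDomain_add, Finsupp.mapDomain_single, Finsupp.mapDomain_single]
  rfl

lemma mpsum_eq_sum_monomial (a b : ℕ) :
    (∑ i : Fin n, X (Sum.inl i) ^ a * X (Sum.inr i) ^ b : MvPolynomial (Fin n ⊕ Fin n) ℂ)
      = ∑ j : Fin n, monomial (pairF j a b) 1 := by
  refine Finset.sum_congr rfl fun j _ => ?_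
  rw [X_pow_eq_monomial, X_pow_eq_monomial, monomial_mul, mul_one]
  rfl

lemma key_identity (a b : ℕ) (d : (Fin n ⊕ Fin n) →₀ ℕ) :
    (∑ i : Fin n, X (Sum.inl i) ^ a * X (Sum.inr i) ^ b : MvPolynomial (Fin n ⊕ Fin n) ℂ)
        * symP (monomial d 1)
      = ∑ j : Fin n, symP (monomial (pairF j a b + d) 1) := by
  rw [mpsum_eq_sum_monomial]
  unfold symP
  calc (∑ j : Fin n, (monomial (pairF j a b) 1 : MvPolynomial (Fin n ⊕ Fin n) ℂ))
        * ∑ σ : Equiv.Perm (Fin n), rename (Sum.map ⇑σ ⇑σ) (monomial d 1)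
      = ∑ j : Fin n, ∑ σ : Equiv.Perm (Fin n),
          (monomial (pairF j a b) 1 : MvPolynomial (Fin n ⊕ Fin n) ℂ)
            * rename (Sum.map ⇑σ ⇑σ) (monomial d 1) := Fintype.sum_mul_sum _ _
    _ = ∑ σ : Equiv.Perm (Fin n), ∑ j : Fin n,
          (monomial (pairF j a b) 1 : MvPolynomial (Fin n ⊕ Fin n) ℂ)
            * rename (Sum.map ⇑σ ⇑σ) (monomial d 1) := Finset.sum_comm
    _ = ∑ σ : Equiv.Perm (Fin n), ∑ j : Fin n,
          rename (Sum.map ⇑σ ⇑σ) (monomial (pairF j a b + d) 1) := by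
        refine Finset.sum_congr rfl fun σ _ => ?_
        have h1 : ∀ j : Fin n,
            rename (Sum.map ⇑σ ⇑σ) ((monomial (pairF j a b + d) 1 : MvPolynomial (Fin n ⊕ Fin n) ℂ))
              = monomial (pairF (σ j) a b + Finsupp.mapDomain (Sum.map ⇑σ ⇑σ) d) 1 := by
          intro j
          rw [rename_monomial, Finsupp.mapDomain_add, mapDomain_pairF]
        have h2 : ∀ j : Fin n,
            (monomial (pairF j a b) 1 : MvPolynomial (Fin n ⊕ Fin n) ℂ)
                * rename (Sum.map ⇑σ ⇑σ) (monomial d 1)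
              = monomial (pairF j a b + Finsupp.mapDomain (Sum.map ⇑σ ⇑σ) d) 1 := by
          intro j
          rw [rename_monomial, monomial_mul, one_mul]
        rw [Finset.sum_congr rfl fun j _ => h1 j, Finset.sum_congr rfl fun j _ => h2 j]
        exact (Equiv.sum_comp σ
          (fun j => monomial (pairF j a b + Finsupp.mapDomain (Sum.map ⇑σ ⇑σ) d) 1)).symm
    _ = ∑ j : Fin n, ∑ σ : Equiv.Perm (Fin n),
          rename (Sum.map ⇑σ ⇑σ) (monomial (pairF j a b + d) 1) := Finset.sum_comm

lemma mpsum_mem (A : Subalgebra ℂ (MvPolynomial (Fin n ⊕ Fin n) ℂ))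
    (hbr : ∀ f ∈ A, ∀ g ∈ A, polyPoisson f g ∈ A)
    (hx : ∀ m : ℕ, 1 ≤ m → (∑ i : Fin n, (X (Sum.inl i)) ^ m) ∈ A)
    (hp : ∀ m : ℕ, 1 ≤ m → (∑ i : Fin n, (X (Sum.inr i)) ^ m) ∈ A) :
    ∀ b a : ℕ, 1 ≤ a + b → (mpsum a b : MvPolynomial (Fin n ⊕ Fin n) ℂ) ∈ A := by
  have hx0 : ∀ a : ℕ, 1 ≤ a → (mpsum a 0 : MvPolynomial (Fin n ⊕ Fin n) ℂ) ∈ A := by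
    intro a ha
    have : (mpsum a 0 : MvPolynomial (Fin n ⊕ Fin n) ℂ) = ∑ i : Fin n, X (Sum.inl i) ^ a := by
      unfold mpsum; simp
    rw [this]; exact hx a ha
  have h02 : (mpsum 0 2 : MvPolynomial (Fin n ⊕ Fin n) ℂ) ∈ A := by
    have : (mpsum 0 2 : MvPolynomial (Fin n ⊕ Fin n) ℂ) = ∑ i : Fin n, X (Sum.inr i) ^ 2 := by
      unfold mpsum; simp
    rw [this]; exact hp 2 (by norm_num)
  intro b
  induction b with
  | zero => intro a ha; exact hx0 a (by omega)
  | succ b ih =>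
      intro a _
      have hprev : (mpsum (a+1) b : MvPolynomial (Fin n ⊕ Fin n) ℂ) ∈ A := ih (a+1) (by omega)
      have hbrk := hbr _ h02 _ hprev
      rw [bracket_mpsum] at hbrk
      have hc : ((2*(a+1) : ℕ) : MvPolynomial (Fin n ⊕ Fin n) ℂ)
          = C ((2*(a+1) : ℕ) : ℂ) := by
        rw [map_natCast (C : ℂ →+* MvPolynomial (Fin n ⊕ Fin n) ℂ)]
      have hne : ((2*(a+1) : ℕ) : ℂ) ≠ 0 := Nat.cast_ne_zero.mpr (by omega)
      have heq : (mpsum a (b+1) : MvPolynomial (Fin n ⊕ Fin n) ℂ)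
          = (((2*(a+1) : ℕ) : ℂ))⁻¹
              • (((2*(a+1) : ℕ) : MvPolynomial (Fin n ⊕ Fin n) ℂ) * mpsum a (b+1)) := by
        rw [hc, ← smul_eq_C_mul, smul_smul, inv_mul_cancel₀ hne, one_smul]
      rw [heq]
      exact A.smul_mem hbrk _

lemma symP_monomial_mem (A : Subalgebra ℂ (MvPolynomial (Fin n ⊕ Fin n) ℂ))
    (hps : ∀ a b : ℕ, 1 ≤ a + b → (mpsum a b : MvPolynomial (Fin n ⊕ Fin n) ℂ) ∈ A) :
    ∀ (k : ℕ) (d : (Fin n ⊕ Fin n) →₀ ℕ), (nsupp d).card ≤ k →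
      symP (monomial d 1 : MvPolynomial (Fin n ⊕ Fin n) ℂ) ∈ A := by
  intro k
  induction k with
  | zero =>
      intro d hd
      have hd0 : d = 0 := nsupp_empty_eq_zero d (Finset.card_eq_zero.mp (by omega))
      subst hd0
      have h1 : (monomial (0 : (Fin n ⊕ Fin n) →₀ ℕ) 1 : MvPolynomial (Fin n ⊕ Fin n) ℂ) = 1 := by
        simp
      rw [h1]
      have : symP (1 : MvPolynomial (Fin n ⊕ Fin n) ℂ)
          = (Fintype.card (Equiv.Perm (Fin n))) • (1 : MvPolynomial (Fin n ⊕ Fin n) ℂ) := by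
        unfold symP
        simp [Finset.sum_const]
      rw [this]
      exact nsmul_mem (one_mem A) _
  | succ k ih =>
      intro d hd
      by_cases hk : (nsupp d).card ≤ k
      · exact ih d hk
      have hcard : (nsupp d).card = k + 1 := by omega
      have hne : (nsupp d).Nonempty := Finset.card_pos.mp (by omega)
      obtain ⟨i0, hi0⟩ := hne
      set a := d (Sum.inl i0) with ha
      set b := d (Sum.inr i0) with hb
      have hab : 1 ≤ a + b := by
        have := hi0
        unfold nsupp at this
        simp only [Finset.mem_filter, Finset.mem_univ, true_and] at this
        omega
      have hcard2 : (nsupp (dres d i0)).card = k := by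
        rw [nsupp_dres, Finset.card_erase_of_mem hi0, hcard]; omega
      have hIH : symP (monomial (dres d i0) 1 : MvPolynomial (Fin n ⊕ Fin n) ℂ) ∈ A :=
        ih (dres d i0) (le_of_eq hcard2)
      have hkey := key_identity (n := n) a b (dres d i0)
      have hLHS : (∑ i : Fin n, X (Sum.inl i) ^ a * X (Sum.inr i) ^ b :
          MvPolynomial (Fin n ⊕ Fin n) ℂ) * symP (monomial (dres d i0) 1) ∈ A :=
        A.mul_mem (hps a b hab) hIH
      rw [hkey] at hLHS
      classical
      set P : Fin n → Prop := fun j => (dres d i0) (Sum.inl j) = 0 ∧ (dres d i0) (Sum.inr j) = 0 with hP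
      have hsplit := Finset.sum_filter_add_sum_filter_not Finset.univ P
        (fun j => symP (monomial (pairF j a b + (dres d i0)) 1 : MvPolynomial (Fin n ⊕ Fin n) ℂ))
      -- sum over zero positions
      have hzero : ∀ j ∈ Finset.univ.filter P,
          symP (monomial (pairF j a b + (dres d i0)) 1 : MvPolynomial (Fin n ⊕ Fin n) ℂ)
            = symP (monomial d 1) := by
        intro j hj
        simp only [Finset.mem_filter, Finset.mem_univ, true_and, hP] at hj
        have := pairF_add_dres_eq_mapDomain d i0 j hj
        rw [← ha, ← hb] at this
        rw [this]
        have hren : (monomial (Finsupp.mapDomain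
              (Sum.map ⇑(Equiv.swap i0 j) ⇑(Equiv.swap i0 j)) d) 1 :
              MvPolynomial (Fin n ⊕ Fin n) ℂ)
            = rename (Sum.map ⇑(Equiv.swap i0 j) ⇑(Equiv.swap i0 j)) (monomial d 1) := by
          rw [rename_monomial]
        rw [hren, symP_rename]
      have hzsum : ∑ j ∈ Finset.univ.filter P,
          symP (monomial (pairF j a b + (dres d i0)) 1 : MvPolynomial (Fin n ⊕ Fin n) ℂ)
            = ((Finset.univ.filter P).card : ℕ) • symP (monomial d 1) := by
        rw [Finset.sum_congr rfl hzero, Finset.sum_const]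
      -- sum over nonzero positions is in A
      have hnzsum : ∑ j ∈ Finset.univ.filter (fun j => ¬ P j),
          symP (monomial (pairF j a b + (dres d i0)) 1 : MvPolynomial (Fin n ⊕ Fin n) ℂ) ∈ A := by
        refine A.sum_mem fun j hj => ?_
        simp only [Finset.mem_filter, Finset.mem_univ, true_and, hP] at hj
        have hjn : j ∈ nsupp (dres d i0) := by
          unfold nsupp
          simp only [Finset.mem_filter, Finset.mem_univ, true_and]
          omega
        have := nsupp_add_pairF d i0 a b j hjn
        exact ih _ (by rw [this, hcard2])
      have hc1 : 1 ≤ (Finset.univ.filter P).card := by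
        refine Finset.card_pos.mpr ⟨i0, ?_⟩
        simp only [Finset.mem_filter, Finset.mem_univ, true_and, hP]
        constructor
        · rw [dres_inl]; simp
        · rw [dres_inr]; simp
      have hmem : ((Finset.univ.filter P).card : ℕ) • symP
          (monomial d 1 : MvPolynomial (Fin n ⊕ Fin n) ℂ) ∈ A := by
        have : ((Finset.univ.filter P).card : ℕ) • symP
            (monomial d 1 : MvPolynomial (Fin n ⊕ Fin n) ℂ)
            = (∑ j : Fin n, symP (monomial (pairF j a b + (dres d i0)) 1 :
                MvPolynomial (Fin n ⊕ Fin n) ℂ))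
              - ∑ j ∈ Finset.univ.filter (fun j => ¬ P j),
                  symP (monomial (pairF j a b + (dres d i0)) 1) := by
          rw [← hsplit, hzsum]; ring
        rw [this]
        exact A.sub_mem hLHS hnzsum
      have hcc : (((Finset.univ.filter P).card : ℕ) : ℂ) ≠ 0 :=
        Nat.cast_ne_zero.mpr (by omega)
      have : symP (monomial d 1 : MvPolynomial (Fin n ⊕ Fin n) ℂ)
          = ((((Finset.univ.filter P).card : ℕ) : ℂ))⁻¹
              • (((Finset.univ.filter P).card : ℕ) • symP (monomial d 1)) := by
        rw [← Nat.cast_smul_eq_nsmul ℂ, smul_smul, inv_mul_cancel₀ hcc, one_smul]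
      rw [this]
      exact A.smul_mem hmem _

/-- The algebra `ℂ[x_1,...,x_n,p_1,...,p_n]^{S_n}` (with `S_n` permuting the `x_i` and `p_i`
simultaneously) is generated, as a Poisson algebra, by the power sums
`f_m = Σ x_i^m` and `f_m^* = Σ p_i^m` (`m ≥ 1`): every `S_n`-invariant polynomial lies in any
subalgebra that contains all the `f_m, f_m^*` and is closed under the Poisson bracket. -/
theorem invariants_poisson_generated_by_power_sums (n : ℕ)
    (A : Subalgebra ℂ (MvPolynomial (Fin n ⊕ Fin n) ℂ))
    (hbr : ∀ f ∈ A, ∀ g ∈ A, polyPoisson f g ∈ A)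
    (hx : ∀ m : ℕ, 1 ≤ m → (∑ i : Fin n, (X (Sum.inl i)) ^ m) ∈ A)
    (hp : ∀ m : ℕ, 1 ≤ m → (∑ i : Fin n, (X (Sum.inr i)) ^ m) ∈ A)
    (F : MvPolynomial (Fin n ⊕ Fin n) ℂ)
    (hF : ∀ σ : Equiv.Perm (Fin n), rename (Sum.map σ σ) F = F) :
    F ∈ A := by
  classical
  have hmp := mpsum_mem A hbr hx hp
  have hmon : ∀ d : (Fin n ⊕ Fin n) →₀ ℕ, symP (monomial d 1) ∈ A :=
    fun d => symP_monomial_mem A (fun a b hab => hmp b a hab) (nsupp d).card d le_rfl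
  have hsymF : symP F ∈ A := by
    have h1 : ∀ σ : Equiv.Perm (Fin n), rename (Sum.map ⇑σ ⇑σ) F
        = ∑ d ∈ F.support, rename (Sum.map ⇑σ ⇑σ) (monomial d (coeff d F)) := by
      intro σ
      conv_lhs => rw [F.as_sum]
      rw [map_sum]
    have hexp : symP F = ∑ d ∈ F.support, C (coeff d F) * symP (monomial d 1) := by
      unfold symP
      rw [Finset.sum_congr rfl fun σ _ => h1 σ, Finset.sum_comm]
      refine Finset.sum_congr rfl fun d _ => ?_
      rw [Finset.mul_sum]
      refine Finset.sum_congr rfl fun σ _ => ?_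
      rw [rename_monomial, rename_monomial, C_mul_monomial, mul_one]
    rw [hexp]
    exact A.sum_mem fun d _ => by
      rw [← smul_eq_C_mul]; exact A.smul_mem (hmon d) _
  have hcardF : symP F = (Fintype.card (Equiv.Perm (Fin n))) • F := by
    unfold symP
    rw [Finset.sum_congr rfl fun σ _ => hF σ, Finset.sum_const, Finset.card_univ]
  have hne : ((Fintype.card (Equiv.Perm (Fin n)) : ℕ) : ℂ) ≠ 0 :=
    Nat.cast_ne_zero.mpr Fintype.card_ne_zero
  have hfe : F = (((Fintype.card (Equiv.Perm (Fin n)) : ℕ) : ℂ))⁻¹ • symP F := by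
    rw [hcardF, ← Nat.cast_smul_eq_nsmul ℂ, smul_smul, inv_mul_cancel₀ hne, one_smul]
  rw [hfe]
  exact A.smul_mem hsymF _
end

section
/- Let S(x,p) be a rational function on ℂ^n × ℂ^n which is a polynomial in p, and let f : ℂ^n → ℂ be a polynomial in p such that there is no nonzero vector v with df(p)(v) identically zero in p (e.g. f(p) = Σ p_i^2). If the Poisson bracket {f, S} = 0 (where {f,S} = Σ_i ∂f/∂p_i · ∂S/∂x_i), then S is a polynomial in both x and p. -/
open MvPolynomial

lemma optionEquivLeft_pderiv {σ : Type*} (a : MvPolynomial (Option σ) ℂ) :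
    optionEquivLeft ℂ σ (pderiv none a) = Polynomial.derivative (optionEquivLeft ℂ σ a) := by
  induction a using MvPolynomial.induction_on with
  | C c => simp [optionEquivLeft_apply]
  | add p q hp hq => simp only [map_add, hp, hq]
  | mul_X p j hp =>
    rw [pderiv_mul, map_add, map_mul, map_mul, map_mul, Polynomial.derivative_mul, hp]
    cases j with
    | none => simp [optionEquivLeft_X_none, pderiv_X_self]
    | some j => simp [optionEquivLeft_X_some, pderiv_X_of_ne (Option.some_ne_none j)]

lemma pderiv_eq_zero_of_dvd_pderiv {n : ℕ} (i : Fin n) (r : MvPolynomial (Fin n) ℂ)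
    (h : r ∣ pderiv i r) : pderiv i r = 0 := by
  classical
  set e := (Equiv.optionSubtypeNe i).symm with he
  have hei : e i = none := Equiv.optionSubtypeNe_symm_self i
  set Φ := (renameEquiv ℂ e).trans (optionEquivLeft ℂ {b : Fin n // b ≠ i}) with hΦ
  have key : ∀ a : MvPolynomial (Fin n) ℂ, Φ (pderiv i a) = Polynomial.derivative (Φ a) := by
    intro a
    have := pderiv_rename (f := (e : Fin n → Option {b : Fin n // b ≠ i})) e.injective i a
    simp only [hΦ, AlgEquiv.trans_apply, renameEquiv_apply]
    rw [← this, hei, optionEquivLeft_pderiv]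
  have hdvd : Φ r ∣ Polynomial.derivative (Φ r) := by
    rw [← key]; exact map_dvd Φ.toAlgHom.toRingHom h
  have hder : Polynomial.derivative (Φ r) = 0 := by
    by_contra hne
    have h1 := Polynomial.natDegree_le_of_dvd hdvd hne
    have h2 : (Φ r).natDegree ≠ 0 := by
      intro h0
      rw [Polynomial.eq_C_of_natDegree_eq_zero h0] at hne
      simp at hne
    exact absurd (Polynomial.natDegree_derivative_lt h2) (by omega)
  have : Φ (pderiv i r) = 0 := by rw [key, hder]
  simpa using Φ.injective (by simpa using this)

lemma eq_C_of_pderiv_eq_zero {n : ℕ} (r : MvPolynomial (Fin n) ℂ)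
    (h : ∀ i, pderiv i r = 0) : r = C (coeff 0 r) := by
  classical
  ext m
  rcases eq_or_ne m 0 with rfl | hm
  · simp
  · rw [coeff_C, if_neg (Ne.symm hm)]
    obtain ⟨i, hi⟩ : ∃ i, m i ≠ 0 := by
      by_contra hc
      push_neg at hc
      exact hm (Finsupp.ext fun i => hc i)
    by_contra hc
    have hmem : m ∈ r.support := by rwa [mem_support_iff]
    have h0 : coeff (m - Finsupp.single i 1) (pderiv i r) = 0 := by rw [h i]; simp
    rw [r.as_sum] at h0
    rw [map_sum] at h0
    simp only [pderiv_monomial] at h0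
    rw [coeff_sum, Finset.sum_eq_single m] at h0
    · rw [coeff_monomial, if_pos rfl] at h0
      have : (m i : ℂ) ≠ 0 := Nat.cast_ne_zero.mpr hi
      exact hc (by
        have := mul_eq_zero.mp h0
        tauto)
    · intro m' hm' hne
      rw [coeff_monomial]
      split_ifs with heq
      · rcases eq_or_ne (m' i) 0 with h0' | h0'
        · simp [h0']
        · exfalso
          apply hne
          have : m' - Finsupp.single i 1 + Finsupp.single i 1 = m' := by
            ext j
            rcases eq_or_ne j i with rfl | hj
            · simp [Finsupp.single_eq_same]
              omega
            · simp [Finsupp.single_eq_of_ne' (Ne.symm hj)]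
          have that : m - Finsupp.single i 1 + Finsupp.single i 1 = m := by
            ext j
            rcases eq_or_ne j i with rfl | hj
            · simp [Finsupp.single_eq_same]
              omega
            · simp [Finsupp.single_eq_of_ne' (Ne.symm hj)]
          rw [← this, heq, that]
      · rfl
    · intro hmm; exact absurd hmem hmm

lemma prime_rename_inl {n : ℕ} {r : MvPolynomial (Fin n) ℂ} (hr : Prime r) :
    Prime (rename (Sum.inl : Fin n → Fin n ⊕ Fin n) r) := by
  classical
  have h1 : rename (Sum.inl : Fin n → Fin n ⊕ Fin n) r
      = rename (Subtype.val : Set.range (Sum.inl : Fin n → Fin n ⊕ Fin n) → Fin n ⊕ Fin n)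
        (rename (Equiv.ofInjective _ Sum.inl_injective) r) := by
    rw [rename_rename]
    have : (Subtype.val : Set.range (Sum.inl : Fin n → Fin n ⊕ Fin n) → Fin n ⊕ Fin n)
        ∘ (Equiv.ofInjective (Sum.inl : Fin n → Fin n ⊕ Fin n) Sum.inl_injective)
        = Sum.inl := by
      funext i
      simp
    rw [this]
  rw [h1, prime_rename_iff]
  exact (MulEquiv.prime_iff
    (renameEquiv ℂ (Equiv.ofInjective (Sum.inl : Fin n → Fin n ⊕ Fin n)
      Sum.inl_injective)).toMulEquiv).mpr hr

lemma dvd_of_rename_inl_dvd {n : ℕ} {a b : MvPolynomial (Fin n) ℂ}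
    (h : rename (Sum.inl : Fin n → Fin n ⊕ Fin n) a ∣ rename Sum.inl b) : a ∣ b := by
  have := map_dvd (aeval (Sum.elim X (fun _ => 0) : Fin n ⊕ Fin n → MvPolynomial (Fin n) ℂ)) h
  rwa [aeval_rename, aeval_rename, Sum.elim_comp_inl, aeval_X_left_apply, aeval_X_left_apply]
    at this

lemma aeval_rename_inr {n : ℕ} (w : Fin n → ℂ) (g : MvPolynomial (Fin n) ℂ) :
    aeval (Sum.elim X (fun j => C (w j)) : Fin n ⊕ Fin n → MvPolynomial (Fin n) ℂ)
      (rename Sum.inr g) = C (eval w g) := by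
  rw [aeval_rename, Sum.elim_comp_inr]
  induction g using MvPolynomial.induction_on with
  | C c => simp [algebraMap_eq]
  | add p q hp hq => simp only [map_add, hp, hq]
  | mul_X p j hp => simp only [map_mul, aeval_X, eval_mul, eval_X, hp]

lemma aeval_rename_inl {n : ℕ} (w : Fin n → ℂ) (a : MvPolynomial (Fin n) ℂ) :
    aeval (Sum.elim X (fun j => C (w j)) : Fin n ⊕ Fin n → MvPolynomial (Fin n) ℂ)
      (rename Sum.inl a) = a := by
  rw [aeval_rename, Sum.elim_comp_inl, aeval_X_left_apply]

lemma span_eval_pderiv_top {n : ℕ} (f : MvPolynomial (Fin n) ℂ)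
    (hf : ∀ v : Fin n → ℂ, v ≠ 0 → (∑ i : Fin n, C (v i) * pderiv i f) ≠ 0) :
    Submodule.span ℂ (Set.range fun w : Fin n → ℂ => fun i => eval w (pderiv i f)) = ⊤ := by
  by_contra hW
  obtain ⟨φ, hφ0, hφ⟩ := Submodule.exists_dual_map_eq_bot_of_lt_top
    (lt_top_iff_ne_top.mpr hW) inferInstance
  classical
  set v : Fin n → ℂ := fun i => φ (fun j => if i = j then 1 else 0) with hv
  have hvne : v ≠ 0 := by
    intro h0
    apply hφ0
    refine LinearMap.ext fun x => ?_
    rw [LinearMap.pi_apply_eq_sum_univ φ x]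
    have : ∀ i, φ (fun j => if i = j then 1 else 0) = 0 := fun i => congrFun h0 i
    simp [this]
  apply hf v hvne
  apply MvPolynomial.funext
  intro w
  have hmem : (fun i => eval w (pderiv i f)) ∈ Submodule.span ℂ
      (Set.range fun w : Fin n → ℂ => fun i => eval w (pderiv i f)) :=
    Submodule.subset_span ⟨w, rfl⟩
  have hker : φ (fun i => eval w (pderiv i f)) = 0 := by
    have h2 : φ (fun i => eval w (pderiv i f)) ∈ Submodule.map φ (Submodule.span ℂ
        (Set.range fun w : Fin n → ℂ => fun i => eval w (pderiv i f))) :=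
      Submodule.mem_map_of_mem hmem
    rw [hφ] at h2
    exact (Submodule.mem_bot ℂ).mp h2
  rw [LinearMap.pi_apply_eq_sum_univ φ (fun i => eval w (pderiv i f))] at hker
  simp only [map_sum, eval_mul, eval_C, map_zero]
  rw [← hker]
  simp [smul_eq_mul, mul_comm, ← hv]
  rfl




lemma dvd_components {n : ℕ} (f : MvPolynomial (Fin n) ℂ)
    (hf : ∀ v : Fin n → ℂ, v ≠ 0 → (∑ i : Fin n, C (v i) * pderiv i f) ≠ 0)
    (r : MvPolynomial (Fin n) ℂ) (c : Fin n → MvPolynomial (Fin n) ℂ)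
    (hdvd : rename (Sum.inl : Fin n → Fin n ⊕ Fin n) r ∣
      ∑ i : Fin n, rename Sum.inr (pderiv i f) * rename Sum.inl (c i)) :
    ∀ j, r ∣ c j := by
  classical
  have hw : ∀ w : Fin n → ℂ, r ∣ ∑ i : Fin n, C (eval w (pderiv i f)) * c i := by
    intro w
    have := map_dvd (aeval (Sum.elim X (fun j => C (w j)) :
      Fin n ⊕ Fin n → MvPolynomial (Fin n) ℂ)) hdvd
    rw [aeval_rename_inl w r, map_sum] at this
    simpa only [map_mul, aeval_rename_inr, aeval_rename_inl] using this
  -- spanning property transfer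
  have hprop : ∀ x : Fin n → ℂ, x ∈ Submodule.span ℂ
      (Set.range fun w : Fin n → ℂ => fun i => eval w (pderiv i f)) →
      r ∣ ∑ i : Fin n, C (x i) * c i := by
    intro x hx
    induction hx using Submodule.span_induction with
    | mem y hy =>
      obtain ⟨w, rfl⟩ := hy
      exact hw w
    | zero => simp
    | add y z _ _ hy hz =>
      have : ∑ i : Fin n, C ((y + z) i) * c i
          = (∑ i : Fin n, C (y i) * c i) + ∑ i : Fin n, C (z i) * c i := by
        rw [← Finset.sum_add_distrib]
        congr 1; funext i
        simp [add_mul]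
      rw [this]; exact dvd_add hy hz
    | smul a y _ hy =>
      have : ∑ i : Fin n, C ((a • y) i) * c i = C a * ∑ i : Fin n, C (y i) * c i := by
        rw [Finset.mul_sum]
        congr 1; funext i
        simp [mul_assoc, smul_eq_mul]
      rw [this]; exact Dvd.dvd.mul_left hy _
  intro j
  have hj := hprop (fun i => if j = i then 1 else 0) (by
    rw [span_eval_pderiv_top f hf]; trivial)
  simpa [Finset.sum_eq_single j, apply_ite] using hj






lemma key_lemma {n : ℕ} (f : MvPolynomial (Fin n) ℂ)
    (hf : ∀ v : Fin n → ℂ, v ≠ 0 → (∑ i : Fin n, C (v i) * pderiv i f) ≠ 0)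
    (P : MvPolynomial (Fin n ⊕ Fin n) ℂ) (q r : MvPolynomial (Fin n) ℂ)
    (hq : q ≠ 0) (hr : Prime r) (hrq : r ∣ q)
    (hbr : ∑ i : Fin n, (rename Sum.inr (pderiv i f)) *
        (rename Sum.inl q * pderiv (Sum.inl i) P - P * rename Sum.inl (pderiv i q)) = 0) :
    rename (Sum.inl : Fin n → Fin n ⊕ Fin n) r ∣ P := by
  classical
  obtain ⟨m, q1, hq1, rfl⟩ := WfDvdMonoid.max_power_factor hq hr.irreducible
  have hm : m ≠ 0 := by
    rintro rfl
    simp only [pow_zero, one_mul] at hrq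
    exact hq1 hrq
  obtain ⟨k, rfl⟩ : ∃ k, m = k + 1 := ⟨m - 1, (Nat.succ_pred_eq_of_pos (Nat.pos_of_ne_zero hm)).symm⟩
  by_contra hP
  set r' : MvPolynomial (Fin n ⊕ Fin n) ℂ := rename Sum.inl r with hr'def
  have hr' : Prime r' := prime_rename_inl hr
  set q1' : MvPolynomial (Fin n ⊕ Fin n) ℂ := rename Sum.inl q1 with hq1'def
  set F : Fin n → MvPolynomial (Fin n ⊕ Fin n) ℂ :=
    fun i => rename Sum.inr (pderiv i f) with hFdef
  set A : MvPolynomial (Fin n ⊕ Fin n) ℂ :=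
    ∑ i : Fin n, F i * (q1' * pderiv (Sum.inl i) P - P * rename Sum.inl (pderiv i q1)) with hA
  set B : MvPolynomial (Fin n ⊕ Fin n) ℂ :=
    ∑ i : Fin n, F i * rename Sum.inl (pderiv i r) with hB
  have hterm : ∀ i : Fin n,
      F i * (rename Sum.inl (r ^ (k + 1) * q1) * pderiv (Sum.inl i) P
        - P * rename Sum.inl (pderiv i (r ^ (k + 1) * q1)))
      = r' ^ k * (r' * (F i * (q1' * pderiv (Sum.inl i) P - P * rename Sum.inl (pderiv i q1)))
          - (((k : MvPolynomial (Fin n ⊕ Fin n) ℂ) + 1) * (P * (F i * rename Sum.inl (pderiv i r)) * q1'))) := by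
    intro i
    rw [pderiv_mul, pderiv_pow]
    simp only [Nat.add_sub_cancel, map_add, map_mul, map_pow, map_natCast]
    push_cast
    ring
  have hsum : r' ^ k * (r' * A - ((k : MvPolynomial (Fin n ⊕ Fin n) ℂ) + 1) * (P * B * q1')) = 0 := by
    rw [hA, hB, ← hbr]
    simp only [Finset.mul_sum, Finset.sum_mul, ← Finset.sum_sub_distrib]
    refine Finset.sum_congr rfl fun i _ => ?_
    rw [hterm i]
  have hrne : r' ^ k ≠ 0 := pow_ne_zero _ hr'.ne_zero
  have heq : r' * A = ((k : MvPolynomial (Fin n ⊕ Fin n) ℂ) + 1) * (P * B * q1') := by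
    rcases mul_eq_zero.mp hsum with h | h
    · exact absurd h hrne
    · exact sub_eq_zero.mp h
  have hdvd : r' ∣ ((k : MvPolynomial (Fin n ⊕ Fin n) ℂ) + 1) * (P * B * q1') :=
    ⟨A, heq.symm⟩
  have hculprit : r' ∣ B := by
    have hcu : IsUnit ((k : MvPolynomial (Fin n ⊕ Fin n) ℂ) + 1) := by
      have : ((k : MvPolynomial (Fin n ⊕ Fin n) ℂ) + 1) = C ((k : ℂ) + 1) := by
        push_cast
        simp
      rw [this]
      exact (isUnit_iff_ne_zero.mpr (Nat.cast_add_one_ne_zero (R := ℂ) k)).map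
        (C : ℂ →+* MvPolynomial (Fin n ⊕ Fin n) ℂ)
    rcases hr'.dvd_mul.mp hdvd with h | h
    · exact absurd (isUnit_of_dvd_unit h hcu) hr'.not_unit
    rcases hr'.dvd_mul.mp h with h2 | h2
    · rcases hr'.dvd_mul.mp h2 with h3 | h3
      · exact absurd h3 hP
      · exact h3
    · exact absurd (dvd_of_rename_inl_dvd h2) hq1
  have hpz : ∀ j, pderiv j r = 0 := by
    intro j
    exact pderiv_eq_zero_of_dvd_pderiv j r (dvd_components f hf r (fun i => pderiv i r) hculprit j)
  have hC := eq_C_of_pderiv_eq_zero r hpz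
  rcases eq_or_ne (coeff 0 r) 0 with h0 | h0
  · rw [h0, map_zero] at hC
    exact hr.ne_zero hC
  · rw [hC] at hr
    exact hr.not_unit ((isUnit_iff_ne_zero.mpr h0).map (C : ℂ →+* MvPolynomial (Fin n) ℂ))

/-- Let `S = P / q` be a rational function on `ℂⁿ × ℂⁿ` (variables `x` indexed by `Sum.inl`,
variables `p` indexed by `Sum.inr`) which is polynomial in `p` and rational in `x`: `P` is a
polynomial in `(x, p)` and `q ≠ 0` is a polynomial in `x` only. Let `f` be a polynomial in `p`
such that for no nonzero vector `v` the function `df(p)(v) = Σᵢ vᵢ ∂f/∂pᵢ` vanishes identically.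
If the Poisson bracket `{f, S} = Σᵢ (∂f/∂pᵢ)(∂S/∂xᵢ)` vanishes (equivalently, after clearing the
denominator `q²`, the polynomial identity below holds), then `S` is a polynomial, i.e. `q ∣ P`. -/
theorem rational_first_integral_is_polynomial (n : ℕ)
    (P : MvPolynomial (Fin n ⊕ Fin n) ℂ) (q : MvPolynomial (Fin n) ℂ) (hq : q ≠ 0)
    (f : MvPolynomial (Fin n) ℂ)
    (hf : ∀ v : Fin n → ℂ, v ≠ 0 → (∑ i : Fin n, C (v i) * pderiv i f) ≠ 0)
    (hbr : ∑ i : Fin n, (rename Sum.inr (pderiv i f)) *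
        (rename Sum.inl q * pderiv (Sum.inl i) P - P * rename Sum.inl (pderiv i q)) = 0) :
    rename Sum.inl q ∣ P := by
  classical
  induction q using UniqueFactorizationMonoid.induction_on_prime generalizing P with
  | h₁ => exact absurd rfl hq
  | h₂ x hx =>
    exact ((hx.map (rename (Sum.inl : Fin n → Fin n ⊕ Fin n) :
      MvPolynomial (Fin n) ℂ →ₐ[ℂ] MvPolynomial (Fin n ⊕ Fin n) ℂ))).dvd
  | h₃ a p ha hp IH =>
    have hpP : rename (Sum.inl : Fin n → Fin n ⊕ Fin n) p ∣ P :=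
      key_lemma f hf P (p * a) p hq hp (dvd_mul_right p a) hbr
    obtain ⟨P1, rfl⟩ := hpP
    set p' : MvPolynomial (Fin n ⊕ Fin n) ℂ := rename Sum.inl p with hp'def
    have hp'ne : p' ≠ 0 := fun h =>
      hp.ne_zero ((map_eq_zero_iff _ (rename_injective _ Sum.inl_injective)).mp h)
    have hterm2 : ∀ i : Fin n,
        rename Sum.inr (pderiv i f) * (rename Sum.inl (p * a) * pderiv (Sum.inl i) (p' * P1)
          - p' * P1 * rename Sum.inl (pderiv i (p * a)))
        = p' ^ 2 * (rename Sum.inr (pderiv i f) *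
            (rename Sum.inl a * pderiv (Sum.inl i) P1 - P1 * rename Sum.inl (pderiv i a))) := by
      intro i
      rw [pderiv_mul, pderiv_mul]
      have hpr : pderiv (Sum.inl i) p' = rename Sum.inl (pderiv i p) :=
        pderiv_rename Sum.inl_injective i p
      simp only [map_add, map_mul, hpr]
      ring
    have hbr2 : ∑ i : Fin n, rename Sum.inr (pderiv i f) *
        (rename Sum.inl a * pderiv (Sum.inl i) P1 - P1 * rename Sum.inl (pderiv i a)) = 0 := by
      have h0 : p' ^ 2 * ∑ i : Fin n, rename Sum.inr (pderiv i f) *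
          (rename Sum.inl a * pderiv (Sum.inl i) P1 - P1 * rename Sum.inl (pderiv i a)) = 0 := by
        rw [Finset.mul_sum, ← hbr]
        exact Finset.sum_congr rfl fun i _ => (hterm2 i).symm
      rcases mul_eq_zero.mp h0 with h | h
      · exact absurd h (pow_ne_zero _ hp'ne)
      · exact h
    have := IH P1 ha hbr2
    rw [map_mul]
    exact mul_dvd_mul_left p' this
end

section
/- Suppose the finite group W ⊂ GL(h) preserves a nondegenerate symmetric bilinear form on h, and let x_i, y_i be dual orthonormal bases of h* and h. Then in H_{1,c}(W,h), the elements h (as above), E = (1/2)Σ x_i², F = −(1/2)Σ y_i² form an sl₂-triple: [h, E] = 2E, [h, F] = −2F, [E, F] = h. -/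
noncomputable section
open scoped Matrix

/-- The general linear group of `ℂ^ℓ`. -/
abbrev GLC (ℓ : ℕ) := Matrix.GeneralLinearGroup (Fin ℓ) ℂ

/-- The matrix of an element of a subgroup `W ⊆ GL(ℂ^ℓ)`. -/
def matOf {ℓ : ℕ} {W : Subgroup (GLC ℓ)} (g : W) : Matrix (Fin ℓ) (Fin ℓ) ℂ :=
  ((g : GLC ℓ) : Matrix (Fin ℓ) (Fin ℓ) ℂ)

/-- Generators of the rational Cherednik algebra `H_{1,c}(W, h)`: the basis `x_i` of `h*`
(left-left), the dual basis `y_i` of `h` (left-right), and the group elements `g ∈ W`. -/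
abbrev CherGen (ℓ : ℕ) (W : Subgroup (GLC ℓ)) := (Fin ℓ ⊕ Fin ℓ) ⊕ W

def xg {ℓ : ℕ} {W : Subgroup (GLC ℓ)} (i : Fin ℓ) : FreeAlgebra ℂ (CherGen ℓ W) :=
  FreeAlgebra.ι ℂ (Sum.inl (Sum.inl i))
def yg {ℓ : ℕ} {W : Subgroup (GLC ℓ)} (i : Fin ℓ) : FreeAlgebra ℂ (CherGen ℓ W) :=
  FreeAlgebra.ι ℂ (Sum.inl (Sum.inr i))
def wg {ℓ : ℕ} {W : Subgroup (GLC ℓ)} (g : W) : FreeAlgebra ℂ (CherGen ℓ W) :=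
  FreeAlgebra.ι ℂ (Sum.inr g)

/-- The defining relations of the rational Cherednik algebra `H_{1,c}(W,h)`:
`ℂW ⋉ T(h ⊕ h*)` modulo `[x,x'] = 0`, `[y,y'] = 0`,
`[y, x] = (y,x) - Σ_{s ∈ S} c_s (y, α_s)(x, α_s^∨) s`, where `S` is the set of complex
reflections of `W`, `α_s` (`= al s`) the root and `α_s^∨` (`= cr s`) the coroot of `s`. -/
inductive CherRel {ℓ : ℕ} (W : Subgroup (GLC ℓ)) (S : Finset W)
    (al cr : W → Fin ℓ → ℂ) (c : W → ℂ) :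
    FreeAlgebra ℂ (CherGen ℓ W) → FreeAlgebra ℂ (CherGen ℓ W) → Prop
  | w_one : CherRel W S al cr c (wg (1 : W)) 1
  | w_mul (g g' : W) : CherRel W S al cr c (wg g * wg g') (wg (g * g'))
  | xx (i j : Fin ℓ) : CherRel W S al cr c (xg i * xg j) (xg j * xg i)
  | yy (i j : Fin ℓ) : CherRel W S al cr c (yg i * yg j) (yg j * yg i)
  | yx (i j : Fin ℓ) : CherRel W S al cr c (yg i * xg j)
      (xg j * yg i + algebraMap ℂ _ (if i = j then 1 else 0)
        - ∑ s ∈ S, algebraMap ℂ _ (c s * al s i * cr s j) * wg s)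
  | wx (g : W) (i : Fin ℓ) : CherRel W S al cr c (wg g * xg i)
      ((∑ j : Fin ℓ, algebraMap ℂ _ (matOf g⁻¹ i j) * xg j) * wg g)
  | wy (g : W) (i : Fin ℓ) : CherRel W S al cr c (wg g * yg i)
      ((∑ j : Fin ℓ, algebraMap ℂ _ (matOf g j i) * yg j) * wg g)

/-- The rational Cherednik algebra `H_{1,c}(W,h)`. -/
abbrev CherednikAlgebra {ℓ : ℕ} (W : Subgroup (GLC ℓ)) (S : Finset W)
    (al cr : W → Fin ℓ → ℂ) (c : W → ℂ) := RingQuot (CherRel W S al cr c)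

section Scalar
variable {ℓ : ℕ} {W : Subgroup (GLC ℓ)}

lemma matOf_mul (g g' : W) : matOf (g * g') = matOf g * matOf g' := rfl

lemma matOf_one : matOf (1 : W) = 1 := rfl

lemma matOf_inv_mulVec (g : W) (v : Fin ℓ → ℂ) :
    matOf g⁻¹ *ᵥ (matOf g *ᵥ v) = v := by
  rw [Matrix.mulVec_mulVec, ← matOf_mul, inv_mul_cancel, matOf_one, Matrix.one_mulVec]

lemma dot_pres (horth : ∀ g : W, (matOf g)ᵀ * matOf g = 1) (g : W) (u v : Fin ℓ → ℂ) :
    (matOf g *ᵥ u) ⬝ᵥ (matOf g *ᵥ v) = u ⬝ᵥ v := by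
  rw [Matrix.dotProduct_mulVec, ← Matrix.mulVec_transpose, Matrix.mulVec_mulVec, horth,
    Matrix.one_mulVec]

end Scalar
set_option linter.unusedVariables false
section Refl
variable {ℓ : ℕ} {W : Subgroup (GLC ℓ)} {lam : ℂ} {a b : Fin ℓ → ℂ} {s : W}
variable (horth : ∀ g : W, (matOf g)ᵀ * matOf g = 1)
    (hl1 : lam ≠ 1)
    (hey : matOf s *ᵥ b = lam⁻¹ • b)
    (hp : (∑ i, a i * b i) = 2)
    (hfx : ∀ v : Fin ℓ → ℂ, (∑ i, a i * v i) = 0 → matOf s *ᵥ v = v)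

include horth hl1 hey hp hfx

lemma lam_ne_zero : lam ≠ 0 := by
  intro h0
  rw [h0, inv_zero, zero_smul] at hey
  have h2 := matOf_inv_mulVec s b
  rw [hey, Matrix.mulVec_zero] at h2
  rw [← h2] at hp
  simp at hp

lemma cr_dot_fixed (v : Fin ℓ → ℂ) (hv : (∑ i, a i * v i) = 0) : b ⬝ᵥ v = 0 := by
  have h := dot_pres horth s b v
  rw [hey, hfx v hv, smul_dotProduct] at h
  simp only [smul_eq_mul] at h
  have h2 : (lam⁻¹ - 1) * (b ⬝ᵥ v) = 0 := by linear_combination h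
  rcases mul_eq_zero.mp h2 with h3 | h3
  · exact absurd (inv_eq_one.mp (by linear_combination h3)) hl1
  · exact h3

lemma lam_eq_neg_one : lam = -1 := by
  by_contra hne
  have hnz := lam_ne_zero horth hl1 hey hp hfx
  have hD : b ⬝ᵥ b = 0 := by
    have h := dot_pres horth s b b
    rw [hey, smul_dotProduct, dotProduct_smul] at h
    simp only [smul_eq_mul] at h
    have hsq : lam⁻¹ * lam⁻¹ - 1 ≠ 0 := by
      intro he
      have h1 : (lam - 1) * (lam + 1) = 0 := by
        have h5 := mul_eq_zero_of_left he (lam * lam)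
        field_simp at h5
        linear_combination -h5
      rcases mul_eq_zero.mp h1 with h2 | h2
      · exact hl1 (by linear_combination h2)
      · exact hne (by linear_combination h2)
    have h3 : (lam⁻¹ * lam⁻¹ - 1) * (b ⬝ᵥ b) = 0 := by linear_combination h
    exact (mul_eq_zero.mp h3).resolve_left hsq
  have hb : ∀ k, b k = 0 := by
    intro k
    set v : Fin ℓ → ℂ := (Pi.single k 1 : Fin ℓ → ℂ) - (a k / 2) • b with hvdef
    have key : ∀ i, a i * v i = a i * (if i = k then 1 else 0) - a k / 2 * (a i * b i) := by
      intro i; simp only [hvdef, Pi.sub_apply, Pi.smul_apply, Pi.single_apply, smul_eq_mul]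
      split <;> ring
    have hv : (∑ i, a i * v i) = 0 := by
      rw [Finset.sum_congr rfl fun i _ => key i, Finset.sum_sub_distrib, ← Finset.mul_sum, hp]
      simp [mul_ite, Finset.sum_ite_eq']
    have h0 := cr_dot_fixed horth hl1 hey hp hfx _ hv
    rw [hvdef, dotProduct_sub, dotProduct_smul, hD] at h0
    simpa [dotProduct_single] using h0
  rw [show b = 0 from funext hb] at hp
  simp at hp

lemma mulVec_refl_eq (v : Fin ℓ → ℂ) :
    matOf s *ᵥ v = v - (∑ i, a i * v i) • b := by
  have hl := lam_eq_neg_one horth hl1 hey hp hfx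
  set t := (∑ i, a i * v i) with ht
  have key : ∀ i, a i * (v - (t / 2) • b) i = a i * v i - t / 2 * (a i * b i) := by
    intro i; simp [smul_eq_mul]; ring
  have h0 : (∑ i, a i * (v - (t / 2) • b) i) = 0 := by
    rw [Finset.sum_congr rfl fun i _ => key i, Finset.sum_sub_distrib, ← Finset.mul_sum, hp,
      ← ht]
    ring
  have hfix2 := hfx _ h0
  calc matOf s *ᵥ v = matOf s *ᵥ ((v - (t / 2) • b) + (t / 2) • b) := by
        rw [sub_add_cancel]
    _ = (v - (t / 2) • b) + (t / 2) • (lam⁻¹ • b) := by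
        rw [Matrix.mulVec_add, Matrix.mulVec_smul, hfix2, hey]
    _ = v - t • b := by
        rw [hl, show ((-1 : ℂ))⁻¹ = -1 by norm_num]
        module

lemma matOf_refl_apply (k j : Fin ℓ) :
    matOf s k j = (if k = j then 1 else 0) - a j * b k := by
  have h := congrFun (mulVec_refl_eq horth hl1 hey hp hfx (Pi.single j 1)) k
  rw [Matrix.mulVec_single] at h
  simpa [Pi.single_apply, mul_ite, Finset.sum_ite_eq', eq_comm] using h

lemma mulVec_refl_invol (v : Fin ℓ → ℂ) : matOf s *ᵥ (matOf s *ᵥ v) = v := by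
  rw [mulVec_refl_eq horth hl1 hey hp hfx, mulVec_refl_eq horth hl1 hey hp hfx]
  have key : ∀ i, a i * (v - (∑ i, a i * v i) • b) i
      = a i * v i - (∑ i, a i * v i) * (a i * b i) := by
    intro i; simp [smul_eq_mul]; ring
  rw [Finset.sum_congr rfl fun i _ => key i, Finset.sum_sub_distrib, ← Finset.mul_sum, hp]
  module

lemma matOf_refl_inv_apply (k j : Fin ℓ) :
    matOf (s⁻¹ : W) k j = (if k = j then 1 else 0) - a j * b k := by
  have hv : ∀ v, matOf (s⁻¹ : W) *ᵥ v = matOf s *ᵥ v := by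
    intro v
    conv_lhs => rw [← mulVec_refl_invol horth hl1 hey hp hfx v]
    rw [matOf_inv_mulVec]
  have h := congrFun (hv (Pi.single j 1)) k
  rw [Matrix.mulVec_single, Matrix.mulVec_single] at h
  simp only [Pi.smul_apply, Matrix.col_apply, MulOpposite.op_one, one_smul] at h
  rw [h]
  exact matOf_refl_apply horth hl1 hey hp hfx k j

lemma refl_symm (k j : Fin ℓ) : a j * b k = a k * b j := by
  have hMM : matOf s * matOf s = 1 := by
    ext k j
    have h := congrFun (mulVec_refl_invol horth hl1 hey hp hfx (Pi.single j 1)) k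
    rw [Matrix.mulVec_mulVec] at h
    simpa [Matrix.mulVec_single, Matrix.one_apply, Pi.single_apply, eq_comm] using h
  have hT : (matOf s)ᵀ = matOf s := by
    calc (matOf s)ᵀ = (matOf s)ᵀ * (matOf s * matOf s) := by rw [hMM, mul_one]
      _ = ((matOf s)ᵀ * matOf s) * matOf s := by rw [mul_assoc]
      _ = matOf s := by rw [horth, one_mul]
  have h3 : matOf s k j = matOf s j k := by
    conv_lhs => rw [← hT]
    rfl
  rw [matOf_refl_apply horth hl1 hey hp hfx, matOf_refl_apply horth hl1 hey hp hfx] at h3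
  have h4 : (if k = j then (1:ℂ) else 0) = (if j = k then 1 else 0) := by simp [eq_comm]
  rw [h4] at h3
  linear_combination -h3

end Refl
section Helpers
variable {A : Type*} [Ring A] [Algebra ℂ A]

/-- scalar multiplication in an algebra, as multiplication by a central element -/
def sm (r : ℂ) (x : A) : A := algebraMap ℂ A r * x

lemma sm_def (r : ℂ) (x : A) : sm r x = algebraMap ℂ A r * x := rfl

lemma sm_mul (r : ℂ) (x y : A) : sm r x * y = sm r (x * y) := by rw [sm, sm, mul_assoc]

lemma mul_sm (r : ℂ) (x y : A) : x * sm r y = sm r (x * y) := by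
  rw [sm, sm, ← mul_assoc, ← Algebra.commutes, mul_assoc]

lemma sm_sm (r t : ℂ) (x : A) : sm r (sm t x) = sm (r * t) x := by
  rw [sm, sm, sm, ← mul_assoc, ← map_mul]

lemma sm_add (r : ℂ) (x y : A) : sm r (x + y) = sm r x + sm r y := mul_add _ _ _

lemma sm_sub (r : ℂ) (x y : A) : sm r (x - y) = sm r x - sm r y := mul_sub _ _ _

lemma sm_neg (r : ℂ) (x : A) : sm r (-x) = -sm r x := mul_neg _ _

lemma add_sm (r t : ℂ) (x : A) : sm (r + t) x = sm r x + sm t x := by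
  rw [sm, sm, sm, map_add, add_mul]

lemma sub_sm (r t : ℂ) (x : A) : sm (r - t) x = sm r x - sm t x := by
  rw [sm, sm, sm, map_sub, sub_mul]

lemma ite_sm (P : Prop) [Decidable P] (r t : ℂ) (x : A) :
    sm (if P then r else t) x = if P then sm r x else sm t x := by
  split <;> rfl

lemma sm_one_c (x : A) : sm 1 x = x := by rw [sm, map_one, one_mul]

lemma sm_zero_c (x : A) : sm 0 x = 0 := by rw [sm, map_zero, zero_mul]

lemma sm_zero' (r : ℂ) : sm r (0:A) = 0 := mul_zero _

lemma sm_sum {n : ℕ} (r : ℂ) (f : Fin n → A) : sm r (∑ i, f i) = ∑ i, sm r (f i) :=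
  Finset.mul_sum _ _ _

lemma sm_sum' {ι : Type*} (T : Finset ι) (r : ℂ) (f : ι → A) :
    sm r (∑ i ∈ T, f i) = ∑ i ∈ T, sm r (f i) :=
  Finset.mul_sum _ _ _

lemma sum_sm {ι : Type*} (T : Finset ι) (f : ι → ℂ) (x : A) :
    sm (∑ i ∈ T, f i) x = ∑ i ∈ T, sm (f i) x := by
  rw [sm, map_sum, Finset.sum_mul]
  rfl

lemma sum_sm_mul {n : ℕ} (r : ℂ) (f : Fin n → ℂ) (u : Fin n → A) (g : A) :
    sm r ((∑ k, sm (f k) (u k)) * g) = ∑ k, sm (r * f k) (u k * g) := by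
  rw [Finset.sum_mul, sm_sum]
  exact Finset.sum_congr rfl fun k _ => by rw [sm_mul, sm_sm]

lemma negdist (x y : A) : -(x + x) * y + y * -(x + x) = -(x * y + y * x + (x * y + y * x)) := by
  noncomm_ring

lemma negswap2 (u v : A) : u * -v - -v * u = -(u * v - v * u) := by noncomm_ring

lemma negsq (x : A) : -x * x + x * -x = -(x * x + x * x) := by noncomm_ring

lemma wrapF {h u v : A} (hc : h * u - u * h = -v) (hv : (2:A) * u = v) :
    h * -u - -u * h = -(2 * -u) := by
  have h1 : h * -u - -u * h = -(h * u - u * h) := by noncomm_ring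
  rw [h1, hc, neg_neg, ← hv]
  noncomm_ring

lemma comm_sq {h a d : A} (hc : h * a - a * h = d) :
    h * (a * a) - (a * a) * h = d * a + a * d := by
  have h1 : h * a = a * h + d := by rw [← hc]; abel
  have h2 : h * (a * a) = a * a * h + (d * a + a * d) := by
    calc h * (a * a) = (h * a) * a := (mul_assoc _ _ _).symm
      _ = (a * h + d) * a := by rw [h1]
      _ = a * (h * a) + d * a := by noncomm_ring
      _ = a * (a * h + d) + d * a := by rw [h1]
      _ = a * a * h + (d * a + a * d) := by noncomm_ring
  rw [h2]; abel

end Helpers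

section Alg
variable {ℓ : ℕ} {W : Subgroup (GLC ℓ)} {S : Finset W} {al cr : W → Fin ℓ → ℂ} {c : W → ℂ}

/-- image of `x_i` in the Cherednik algebra -/
def Xq (S : Finset W) (al cr : W → Fin ℓ → ℂ) (c : W → ℂ) (i : Fin ℓ) :
    CherednikAlgebra W S al cr c :=
  RingQuot.mkAlgHom ℂ (CherRel W S al cr c) (xg i)

/-- image of `y_i` in the Cherednik algebra -/
def Yq (S : Finset W) (al cr : W → Fin ℓ → ℂ) (c : W → ℂ) (i : Fin ℓ) :
    CherednikAlgebra W S al cr c :=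
  RingQuot.mkAlgHom ℂ (CherRel W S al cr c) (yg i)

/-- image of `g ∈ W` in the Cherednik algebra -/
def Gq (S : Finset W) (al cr : W → Fin ℓ → ℂ) (c : W → ℂ) (g : W) :
    CherednikAlgebra W S al cr c :=
  RingQuot.mkAlgHom ℂ (CherRel W S al cr c) (wg g)

lemma rel_xx (i j : Fin ℓ) : Xq S al cr c i * Xq S al cr c j = Xq S al cr c j * Xq S al cr c i := by
  simpa only [Xq, map_mul] using
    RingQuot.mkAlgHom_rel ℂ (CherRel.xx (W := W) (S := S) (al := al) (cr := cr) (c := c) i j)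

lemma rel_yy (i j : Fin ℓ) : Yq S al cr c i * Yq S al cr c j = Yq S al cr c j * Yq S al cr c i := by
  simpa only [Yq, map_mul] using
    RingQuot.mkAlgHom_rel ℂ (CherRel.yy (W := W) (S := S) (al := al) (cr := cr) (c := c) i j)

lemma rel_yx (i j : Fin ℓ) :
    Yq S al cr c i * Xq S al cr c j
      = Xq S al cr c j * Yq S al cr c i + sm (if i = j then (1:ℂ) else 0) 1
        - ∑ s ∈ S, sm (c s * al s i * cr s j) (Gq S al cr c s) := by
  have h := RingQuot.mkAlgHom_rel ℂ
    (CherRel.yx (W := W) (S := S) (al := al) (cr := cr) (c := c) i j)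
  simp only [map_mul, map_sub, map_add, map_sum, AlgHom.commutes] at h
  simpa only [Xq, Yq, Gq, sm_def, map_mul, mul_assoc, mul_one] using h

lemma rel_wx (g : W) (i : Fin ℓ) :
    Gq S al cr c g * Xq S al cr c i
      = (∑ j, sm (matOf g⁻¹ i j) (Xq S al cr c j)) * Gq S al cr c g := by
  have h := RingQuot.mkAlgHom_rel ℂ
    (CherRel.wx (W := W) (S := S) (al := al) (cr := cr) (c := c) g i)
  simp only [map_mul, map_sum, AlgHom.commutes] at h
  simpa only [Xq, Gq, sm_def] using h

lemma rel_wy (g : W) (i : Fin ℓ) :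
    Gq S al cr c g * Yq S al cr c i
      = (∑ j, sm (matOf g j i) (Yq S al cr c j)) * Gq S al cr c g := by
  have h := RingQuot.mkAlgHom_rel ℂ
    (CherRel.wy (W := W) (S := S) (al := al) (cr := cr) (c := c) g i)
  simp only [map_mul, map_sum, AlgHom.commutes] at h
  simpa only [Yq, Gq, sm_def] using h

end Alg
section Derived
variable {ℓ : ℕ} {W : Subgroup (GLC ℓ)} {S : Finset W} {al cr : W → Fin ℓ → ℂ} {c : W → ℂ}
variable (hentInv : ∀ s ∈ S, ∀ k j, matOf (s⁻¹ : W) k j = (if k = j then 1 else 0) - al s j * cr s k)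
  (hent : ∀ s ∈ S, ∀ k j, matOf s k j = (if k = j then 1 else 0) - al s j * cr s k)
  (hprs : ∀ s ∈ S, (∑ i, al s i * cr s i) = 2)
  (hsym : ∀ s ∈ S, ∀ k j, al s j * cr s k = al s k * cr s j)

set_option linter.unusedSectionVars false

include hentInv in
lemma GX {s : W} (hs : s ∈ S) (i : Fin ℓ) :
    Gq S al cr c s * Xq S al cr c i
      = Xq S al cr c i * Gq S al cr c s
        - sm (cr s i) ((∑ k, sm (al s k) (Xq S al cr c k)) * Gq S al cr c s) := by
  rw [rel_wx]
  have h1 : ∀ j, sm (matOf (s⁻¹ : W) i j) (Xq S al cr c j)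
      = (if i = j then Xq S al cr c j else 0) - sm (cr s i * al s j) (Xq S al cr c j) := by
    intro j
    rw [hentInv s hs i j, sub_sm, ite_sm, sm_one_c, sm_zero_c, mul_comm (al s j) (cr s i)]
  have h2 : (∑ j, sm (matOf (s⁻¹ : W) i j) (Xq S al cr c j))
      = Xq S al cr c i - sm (cr s i) (∑ k, sm (al s k) (Xq S al cr c k)) := by
    rw [Finset.sum_congr rfl fun j _ => h1 j, Finset.sum_sub_distrib]
    congr 1
    · simp [Finset.sum_ite_eq]
    · rw [sm_sum]
      exact Finset.sum_congr rfl fun k _ => (sm_sm _ _ _).symm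
  rw [h2, sub_mul, sm_mul]

include hent in
lemma GY {s : W} (hs : s ∈ S) (i : Fin ℓ) :
    Gq S al cr c s * Yq S al cr c i
      = Yq S al cr c i * Gq S al cr c s
        - sm (al s i) ((∑ k, sm (cr s k) (Yq S al cr c k)) * Gq S al cr c s) := by
  rw [rel_wy]
  have h1 : ∀ j, sm (matOf s j i) (Yq S al cr c j)
      = (if j = i then Yq S al cr c j else 0) - sm (al s i * cr s j) (Yq S al cr c j) := by
    intro j
    rw [hent s hs j i, sub_sm, ite_sm, sm_one_c, sm_zero_c]
  have h2 : (∑ j, sm (matOf s j i) (Yq S al cr c j))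
      = Yq S al cr c i - sm (al s i) (∑ k, sm (cr s k) (Yq S al cr c k)) := by
    rw [Finset.sum_congr rfl fun j _ => h1 j, Finset.sum_sub_distrib]
    congr 1
    · simp [Finset.sum_ite_eq']
    · rw [sm_sum]
      exact Finset.sum_congr rfl fun k _ => (sm_sm _ _ _).symm
  rw [h2, sub_mul, sm_mul]

include hprs hsym in
lemma coeff_two {s : W} (hs : s ∈ S) (k : Fin ℓ) :
    (∑ i, cr s i * cr s i) * al s k = 2 * cr s k := by
  rw [Finset.sum_mul]
  rw [Finset.sum_congr rfl fun i (_ : i ∈ Finset.univ) =>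
    show cr s i * cr s i * al s k = (al s i * cr s i) * cr s k by
      linear_combination cr s i * (hsym s hs i k)]
  rw [← Finset.sum_mul, hprs s hs]

include hentInv hprs hsym in
lemma crGX {s : W} (hs : s ∈ S) :
    ∑ i, sm (cr s i) (Gq S al cr c s * Xq S al cr c i)
      = -((∑ k, sm (cr s k) (Xq S al cr c k)) * Gq S al cr c s) := by
  have h0 : ∀ i, sm (cr s i) (Gq S al cr c s * Xq S al cr c i)
      = sm (cr s i) (Xq S al cr c i * Gq S al cr c s)
        - sm (cr s i) (sm (cr s i) ((∑ k, sm (al s k) (Xq S al cr c k)) * Gq S al cr c s)) := by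
    intro i; rw [GX hentInv hs i, sm_sub]
  rw [Finset.sum_congr rfl fun i _ => h0 i, Finset.sum_sub_distrib]
  have h1 : (∑ i, sm (cr s i) (Xq S al cr c i * Gq S al cr c s))
      = (∑ k, sm (cr s k) (Xq S al cr c k)) * Gq S al cr c s := by
    rw [Finset.sum_mul]
    exact Finset.sum_congr rfl fun k _ => (sm_mul _ _ _).symm
  have h2 : (∑ i, sm (cr s i) (sm (cr s i) ((∑ k, sm (al s k) (Xq S al cr c k)) * Gq S al cr c s)))
      = (∑ k, sm (cr s k) (Xq S al cr c k)) * Gq S al cr c s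
        + (∑ k, sm (cr s k) (Xq S al cr c k)) * Gq S al cr c s := by
    rw [Finset.sum_congr rfl fun i (_ : i ∈ Finset.univ) => sm_sm (cr s i) (cr s i) _,
      ← sum_sm, sum_sm_mul]
    rw [Finset.sum_congr rfl fun k (_ : k ∈ Finset.univ) =>
      congrArg (sm · (Xq S al cr c k * Gq S al cr c s)) (coeff_two hprs hsym hs k)]
    rw [Finset.sum_congr rfl fun k (_ : k ∈ Finset.univ) =>
      show sm (2 * cr s k) (Xq S al cr c k * Gq S al cr c s)
        = sm (cr s k) (Xq S al cr c k * Gq S al cr c s)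
          + sm (cr s k) (Xq S al cr c k * Gq S al cr c s) by
        rw [two_mul, add_sm]]
    rw [Finset.sum_add_distrib]
    congr 1 <;>
      (rw [Finset.sum_mul]; exact Finset.sum_congr rfl fun k _ => (sm_mul _ _ _).symm) <;> rfl
  rw [h1, h2]
  abel

include hentInv hprs hsym in
lemma crXGGX {s : W} (hs : s ∈ S) :
    ∑ i, sm (cr s i) (Xq S al cr c i * Gq S al cr c s + Gq S al cr c s * Xq S al cr c i) = 0 := by
  have h0 : ∀ i, sm (cr s i) (Xq S al cr c i * Gq S al cr c s + Gq S al cr c s * Xq S al cr c i)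
      = sm (cr s i) (Xq S al cr c i * Gq S al cr c s)
        + sm (cr s i) (Gq S al cr c s * Xq S al cr c i) := fun i => sm_add _ _ _
  rw [Finset.sum_congr rfl fun i _ => h0 i, Finset.sum_add_distrib,
    crGX hentInv hprs hsym hs]
  have h1 : (∑ i, sm (cr s i) (Xq S al cr c i * Gq S al cr c s))
      = (∑ k, sm (cr s k) (Xq S al cr c k)) * Gq S al cr c s := by
    rw [Finset.sum_mul]
    exact Finset.sum_congr rfl fun k _ => (sm_mul _ _ _).symm
  rw [h1, add_neg_cancel]

include hent hprs in
lemma crGY {s : W} (hs : s ∈ S) :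
    ∑ i, sm (cr s i) (Gq S al cr c s * Yq S al cr c i)
      = -((∑ k, sm (cr s k) (Yq S al cr c k)) * Gq S al cr c s) := by
  have h0 : ∀ i, sm (cr s i) (Gq S al cr c s * Yq S al cr c i)
      = sm (cr s i) (Yq S al cr c i * Gq S al cr c s)
        - sm (cr s i) (sm (al s i) ((∑ k, sm (cr s k) (Yq S al cr c k)) * Gq S al cr c s)) := by
    intro i; rw [GY hent hs i, sm_sub]
  rw [Finset.sum_congr rfl fun i _ => h0 i, Finset.sum_sub_distrib]
  have h1 : (∑ i, sm (cr s i) (Yq S al cr c i * Gq S al cr c s))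
      = (∑ k, sm (cr s k) (Yq S al cr c k)) * Gq S al cr c s := by
    rw [Finset.sum_mul]
    exact Finset.sum_congr rfl fun k _ => (sm_mul _ _ _).symm
  have h2 : (∑ i, sm (cr s i) (sm (al s i) ((∑ k, sm (cr s k) (Yq S al cr c k)) * Gq S al cr c s)))
      = (∑ k, sm (cr s k) (Yq S al cr c k)) * Gq S al cr c s
        + (∑ k, sm (cr s k) (Yq S al cr c k)) * Gq S al cr c s := by
    rw [Finset.sum_congr rfl fun i (_ : i ∈ Finset.univ) => sm_sm (cr s i) (al s i) _,
      ← sum_sm]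
    have h3 : (∑ i, cr s i * al s i) = 2 := by
      rw [← hprs s hs]
      exact Finset.sum_congr rfl fun i _ => mul_comm _ _
    rw [h3, show (2:ℂ) = 1 + 1 by norm_num, add_sm, sm_one_c]
  rw [h1, h2]
  abel

end Derived
section Comms
variable {ℓ : ℕ} {W : Subgroup (GLC ℓ)} {S : Finset W} {al cr : W → Fin ℓ → ℂ} {c : W → ℂ}

local notation "X!" => Xq S al cr c
local notation "Y!" => Yq S al cr c
local notation "G!" => Gq S al cr c

variable (hentInv : ∀ s ∈ S, ∀ k j, matOf (s⁻¹ : W) k j = (if k = j then 1 else 0) - al s j * cr s k)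
  (hent : ∀ s ∈ S, ∀ k j, matOf s k j = (if k = j then 1 else 0) - al s j * cr s k)
  (hprs : ∀ s ∈ S, (∑ i, al s i * cr s i) = 2)
  (hsym : ∀ s ∈ S, ∀ k j, al s j * cr s k = al s k * cr s j)

set_option linter.unusedSectionVars false

lemma commTX (j : Fin ℓ) :
    (∑ i, X! i * Y! i) * X! j - X! j * (∑ i, X! i * Y! i)
      = X! j - ∑ s ∈ S, sm (c s * cr s j) ((∑ k, sm (al s k) (X! k)) * G! s) := by
  have e1 : ∀ i, (X! i * Y! i) * X! j - X! j * (X! i * Y! i)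
      = sm (if i = j then 1 else 0) (X! i)
        - ∑ s ∈ S, sm (c s * al s i * cr s j) (X! i * G! s) := by
    intro i
    rw [mul_assoc, rel_yx i j, mul_sub, mul_add, Finset.mul_sum, mul_sm, mul_one,
      Finset.sum_congr rfl fun s (_ : s ∈ S) =>
        mul_sm (c s * al s i * cr s j) (X! i) (G! s),
      ← mul_assoc, rel_xx i j, mul_assoc]
    abel
  rw [Finset.sum_mul, Finset.mul_sum, ← Finset.sum_sub_distrib,
    Finset.sum_congr rfl fun i _ => e1 i, Finset.sum_sub_distrib]
  congr 1
  · have e2 : ∀ i, sm (if i = j then (1:ℂ) else 0) (X! i) = if i = j then X! i else 0 :=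
      fun i => by rw [ite_sm, sm_one_c, sm_zero_c]
    rw [Finset.sum_congr rfl fun i _ => e2 i]
    simp [Finset.sum_ite_eq, Finset.sum_ite_eq']
  · rw [Finset.sum_comm]
    refine Finset.sum_congr rfl fun s hs => ?_
    rw [sum_sm_mul]
    exact Finset.sum_congr rfl fun k _ => by
      rw [show c s * cr s j * al s k = c s * al s k * cr s j by ring]

include hent hprs in
lemma commTY (j : Fin ℓ) :
    (∑ i, X! i * Y! i) * Y! j - Y! j * (∑ i, X! i * Y! i)
      = -(Y! j) - ∑ s ∈ S, sm (c s * al s j) ((∑ k, sm (cr s k) (Y! k)) * G! s) := by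
  have e1 : ∀ i, (X! i * Y! i) * Y! j - Y! j * (X! i * Y! i)
      = -(sm (if j = i then 1 else 0) (Y! i))
        + ∑ s ∈ S, sm (c s * al s j * cr s i) (G! s * Y! i) := by
    intro i
    rw [← mul_assoc, rel_yx j i, sub_mul, add_mul, sm_mul, one_mul, Finset.sum_mul,
      Finset.sum_congr rfl fun s (_ : s ∈ S) =>
        sm_mul (c s * al s j * cr s i) (G! s) (Y! i),
      mul_assoc (X! i) (Y! j) (Y! i), rel_yy j i, ← mul_assoc]
    abel
  rw [Finset.sum_mul, Finset.mul_sum, ← Finset.sum_sub_distrib,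
    Finset.sum_congr rfl fun i _ => e1 i, Finset.sum_add_distrib]
  have hdelta : (∑ i, -(sm (if j = i then (1:ℂ) else 0) (Y! i))) = -(Y! j) := by
    have e2 : ∀ i, -(sm (if j = i then (1:ℂ) else 0) (Y! i)) = -(if j = i then Y! i else 0) :=
      fun i => by rw [ite_sm, sm_one_c, sm_zero_c]
    rw [Finset.sum_congr rfl fun i _ => e2 i, Finset.sum_neg_distrib]
    simp [Finset.sum_ite_eq, Finset.sum_ite_eq']
  have hrest : (∑ i, ∑ s ∈ S, sm (c s * al s j * cr s i) (G! s * Y! i))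
      = -∑ s ∈ S, sm (c s * al s j) ((∑ k, sm (cr s k) (Y! k)) * G! s) := by
    rw [Finset.sum_comm]
    have e4 : ∀ s ∈ S, (∑ i, sm (c s * al s j * cr s i) (G! s * Y! i))
        = -(sm (c s * al s j) ((∑ k, sm (cr s k) (Y! k)) * G! s)) := by
      intro s hs
      have e3 : ∀ i, sm (c s * al s j * cr s i) (G! s * Y! i)
          = sm (c s * al s j) (sm (cr s i) (G! s * Y! i)) := fun i => by rw [sm_sm]
      rw [Finset.sum_congr rfl fun i _ => e3 i, ← sm_sum, crGY hent hprs hs, sm_neg]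
    rw [Finset.sum_congr rfl e4, Finset.sum_neg_distrib]
  rw [hdelta, hrest, ← sub_eq_add_neg]

include hentInv hprs hsym in
lemma commXXY (j : Fin ℓ) :
    (∑ i, X! i * X! i) * Y! j - Y! j * (∑ i, X! i * X! i)
      = -(X! j + X! j) := by
  have e1 : ∀ i, (X! i * X! i) * Y! j - Y! j * (X! i * X! i)
      = -(sm (if j = i then 1 else 0) (X! i) + sm (if j = i then 1 else 0) (X! i))
        + (∑ s ∈ S, sm (c s * al s j * cr s i) (X! i * G! s)
            + ∑ s ∈ S, sm (c s * al s j * cr s i) (G! s * X! i)) := by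
    intro i
    rw [← mul_assoc, rel_yx j i, sub_mul, add_mul, sm_mul, one_mul, Finset.sum_mul,
      Finset.sum_congr rfl fun s (_ : s ∈ S) =>
        sm_mul (c s * al s j * cr s i) (G! s) (X! i),
      mul_assoc (X! i) (Y! j) (X! i), rel_yx j i, mul_sub, mul_add, mul_sm, mul_one,
      Finset.mul_sum,
      Finset.sum_congr rfl fun s (_ : s ∈ S) =>
        mul_sm (c s * al s j * cr s i) (X! i) (G! s),
      ← mul_assoc (X! i) (X! i) (Y! j)]
    abel
  rw [Finset.sum_mul, Finset.mul_sum, ← Finset.sum_sub_distrib,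
    Finset.sum_congr rfl fun i _ => e1 i, Finset.sum_add_distrib]
  have hdelta : (∑ i, -(sm (if j = i then (1:ℂ) else 0) (X! i)
      + sm (if j = i then (1:ℂ) else 0) (X! i))) = -(X! j + X! j) := by
    have e2 : ∀ i, -(sm (if j = i then (1:ℂ) else 0) (X! i)
        + sm (if j = i then (1:ℂ) else 0) (X! i))
        = -((if j = i then X! i else 0) + (if j = i then X! i else 0)) :=
      fun i => by rw [ite_sm, sm_one_c, sm_zero_c]
    rw [Finset.sum_congr rfl fun i _ => e2 i, Finset.sum_neg_distrib,
      Finset.sum_add_distrib]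
    simp [Finset.sum_ite_eq, Finset.sum_ite_eq']
  have hrest : (∑ i, (∑ s ∈ S, sm (c s * al s j * cr s i) (X! i * G! s)
      + ∑ s ∈ S, sm (c s * al s j * cr s i) (G! s * X! i))) = 0 := by
    have e3 : ∀ i, (∑ s ∈ S, sm (c s * al s j * cr s i) (X! i * G! s)
        + ∑ s ∈ S, sm (c s * al s j * cr s i) (G! s * X! i))
        = ∑ s ∈ S, sm (c s * al s j)
            (sm (cr s i) (X! i * G! s + G! s * X! i)) := by
      intro i
      rw [← Finset.sum_add_distrib]
      exact Finset.sum_congr rfl fun s _ => by rw [sm_sm, sm_add]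
    rw [Finset.sum_congr rfl fun i _ => e3 i, Finset.sum_comm]
    refine Finset.sum_eq_zero fun s hs => ?_
    rw [← sm_sum, crXGGX hentInv hprs hsym hs, sm_zero']
  rw [hdelta, hrest, add_zero]

end Comms
section Final
variable {ℓ : ℕ} {W : Subgroup (GLC ℓ)} {S : Finset W} {al cr : W → Fin ℓ → ℂ} {c : W → ℂ}

local notation "X!" => Xq S al cr c
local notation "Y!" => Yq S al cr c
local notation "G!" => Gq S al cr c

variable (hentInv : ∀ s ∈ S, ∀ k j, matOf (s⁻¹ : W) k j = (if k = j then 1 else 0) - al s j * cr s k)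
  (hent : ∀ s ∈ S, ∀ k j, matOf s k j = (if k = j then 1 else 0) - al s j * cr s k)
  (hprs : ∀ s ∈ S, (∑ i, al s i * cr s i) = 2)
  (hsym : ∀ s ∈ S, ∀ k j, al s j * cr s k = al s k * cr s j)

set_option linter.unusedSectionVars false

include hentInv in
lemma commHX (j : Fin ℓ) :
    ((∑ i, X! i * Y! i) + sm ((ℓ:ℂ)/2) 1 - ∑ s ∈ S, sm (c s) (G! s)) * X! j
      - X! j * ((∑ i, X! i * Y! i) + sm ((ℓ:ℂ)/2) 1 - ∑ s ∈ S, sm (c s) (G! s)) = X! j := by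
  have expand : ∀ T z R u : CherednikAlgebra W S al cr c,
      (T + z - R) * u - u * (T + z - R)
        = ((T * u - u * T) - (R * u - u * R)) + (z * u - u * z) := by
    intros T z R u
    rw [sub_mul, add_mul, mul_sub, mul_add]
    abel
  rw [expand]
  have hz : sm ((ℓ:ℂ)/2) (1 : CherednikAlgebra W S al cr c) * X! j
      - X! j * sm ((ℓ:ℂ)/2) 1 = 0 := by
    rw [sm_mul, mul_sm, one_mul, mul_one, sub_self]
  have hR : (∑ s ∈ S, sm (c s) (G! s)) * X! j - X! j * (∑ s ∈ S, sm (c s) (G! s))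
      = -∑ s ∈ S, sm (c s * cr s j) ((∑ k, sm (al s k) (X! k)) * G! s) := by
    rw [Finset.sum_mul, Finset.mul_sum, ← Finset.sum_sub_distrib]
    have e1 : ∀ s ∈ S, sm (c s) (G! s) * X! j - X! j * sm (c s) (G! s)
        = -(sm (c s * cr s j) ((∑ k, sm (al s k) (X! k)) * G! s)) := by
      intro s hs
      rw [sm_mul, mul_sm, ← sm_sub, GX hentInv hs j, sub_sub_cancel_left, sm_neg, sm_sm]
    rw [Finset.sum_congr rfl e1, Finset.sum_neg_distrib]
  rw [commTX j, hz, hR, add_zero]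
  abel

include hent hprs in
lemma commHY (j : Fin ℓ) :
    ((∑ i, X! i * Y! i) + sm ((ℓ:ℂ)/2) 1 - ∑ s ∈ S, sm (c s) (G! s)) * Y! j
      - Y! j * ((∑ i, X! i * Y! i) + sm ((ℓ:ℂ)/2) 1 - ∑ s ∈ S, sm (c s) (G! s)) = -(Y! j) := by
  have expand : ∀ T z R u : CherednikAlgebra W S al cr c,
      (T + z - R) * u - u * (T + z - R)
        = ((T * u - u * T) - (R * u - u * R)) + (z * u - u * z) := by
    intros T z R u
    rw [sub_mul, add_mul, mul_sub, mul_add]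
    abel
  rw [expand]
  have hz : sm ((ℓ:ℂ)/2) (1 : CherednikAlgebra W S al cr c) * Y! j
      - Y! j * sm ((ℓ:ℂ)/2) 1 = 0 := by
    rw [sm_mul, mul_sm, one_mul, mul_one, sub_self]
  have hR : (∑ s ∈ S, sm (c s) (G! s)) * Y! j - Y! j * (∑ s ∈ S, sm (c s) (G! s))
      = -∑ s ∈ S, sm (c s * al s j) ((∑ k, sm (cr s k) (Y! k)) * G! s) := by
    rw [Finset.sum_mul, Finset.mul_sum, ← Finset.sum_sub_distrib]
    have e1 : ∀ s ∈ S, sm (c s) (G! s) * Y! j - Y! j * sm (c s) (G! s)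
        = -(sm (c s * al s j) ((∑ k, sm (cr s k) (Y! k)) * G! s)) := by
      intro s hs
      rw [sm_mul, mul_sm, ← sm_sub, GY hent hs j, sub_sub_cancel_left, sm_neg, sm_sm]
    rw [Finset.sum_congr rfl e1, Finset.sum_neg_distrib]
  rw [commTY hent hprs j, hz, hR, add_zero]
  abel

include hprs in
lemma sumXYYX :
    (∑ j, (X! j * Y! j + Y! j * X! j))
      = ((∑ j, X! j * Y! j) + (∑ j, X! j * Y! j) + sm (ℓ:ℂ) 1)
        - ∑ s ∈ S, sm (2 * c s) (G! s) := by
  have e1 : ∀ j, X! j * Y! j + Y! j * X! j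
      = (X! j * Y! j + X! j * Y! j + sm 1 1)
        - ∑ s ∈ S, sm (c s * al s j * cr s j) (G! s) := by
    intro j; rw [rel_yx j j, if_pos rfl]; abel
  rw [Finset.sum_congr rfl fun j _ => e1 j, Finset.sum_sub_distrib]
  congr 1
  · rw [Finset.sum_add_distrib, Finset.sum_add_distrib]
    congr 1
    rw [Finset.sum_const, Finset.card_univ, Fintype.card_fin, nsmul_eq_mul, sm_one_c,
      mul_one, sm_def, mul_one, map_natCast]
  · rw [Finset.sum_comm]
    refine Finset.sum_congr rfl fun s hs => ?_
    have e2 : ∀ j, sm (c s * al s j * cr s j) (G! s)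
        = sm (c s * (al s j * cr s j)) (G! s) := fun j => by rw [mul_assoc]
    rw [Finset.sum_congr rfl fun j _ => e2 j, ← sum_sm, ← Finset.mul_sum, hprs s hs, mul_comm]

include hentInv hprs hsym in
lemma commPQ :
    (∑ i, X! i * X! i) * (∑ i, Y! i * Y! i) - (∑ i, Y! i * Y! i) * (∑ i, X! i * X! i)
      = -((∑ j, (X! j * Y! j + Y! j * X! j)) + (∑ j, (X! j * Y! j + Y! j * X! j))) := by
  rw [Finset.mul_sum, Finset.sum_mul, ← Finset.sum_sub_distrib]
  have e1 : ∀ j ∈ Finset.univ, (∑ i, X! i * X! i) * (Y! j * Y! j)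
      - (Y! j * Y! j) * (∑ i, X! i * X! i)
      = -((X! j * Y! j + Y! j * X! j) + (X! j * Y! j + Y! j * X! j)) := by
    intro j _
    have h := comm_sq (commXXY (c := c) hentInv hprs hsym j)
    rw [h]
    exact negdist _ _
  rw [Finset.sum_congr rfl e1, Finset.sum_neg_distrib, Finset.sum_add_distrib]

end Final
section FinalAssembly
variable {ℓ : ℕ} {W : Subgroup (GLC ℓ)} {S : Finset W} {al cr : W → Fin ℓ → ℂ} {c : W → ℂ}

local notation "X!" => Xq S al cr c
local notation "Y!" => Yq S al cr c
local notation "G!" => Gq S al cr c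

variable (hentInv : ∀ s ∈ S, ∀ k j, matOf (s⁻¹ : W) k j = (if k = j then 1 else 0) - al s j * cr s k)
  (hent : ∀ s ∈ S, ∀ k j, matOf s k j = (if k = j then 1 else 0) - al s j * cr s k)
  (hprs : ∀ s ∈ S, (∑ i, al s i * cr s i) = 2)
  (hsym : ∀ s ∈ S, ∀ k j, al s j * cr s k = al s k * cr s j)

set_option linter.unusedSectionVars false
set_option maxHeartbeats 1000000

include hentInv hent hprs hsym in
lemma final_sl2 (lam : W → ℂ) (hlam1 : ∀ s ∈ S, lam s = -1) :
    (((∑ i, X! i * Y! i) + algebraMap ℂ _ ((ℓ:ℂ)/2)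
        - ∑ s ∈ S, sm (2 * c s / (1 - lam s)) (G! s)) * sm (1/2 : ℂ) (∑ i, X! i * X! i)
      - sm (1/2 : ℂ) (∑ i, X! i * X! i) * ((∑ i, X! i * Y! i) + algebraMap ℂ _ ((ℓ:ℂ)/2)
        - ∑ s ∈ S, sm (2 * c s / (1 - lam s)) (G! s))
      = 2 * sm (1/2 : ℂ) (∑ i, X! i * X! i))
    ∧ (((∑ i, X! i * Y! i) + algebraMap ℂ _ ((ℓ:ℂ)/2)
        - ∑ s ∈ S, sm (2 * c s / (1 - lam s)) (G! s)) * -(sm (1/2 : ℂ) (∑ i, Y! i * Y! i))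
      - -(sm (1/2 : ℂ) (∑ i, Y! i * Y! i)) * ((∑ i, X! i * Y! i) + algebraMap ℂ _ ((ℓ:ℂ)/2)
        - ∑ s ∈ S, sm (2 * c s / (1 - lam s)) (G! s))
      = -(2 * -(sm (1/2 : ℂ) (∑ i, Y! i * Y! i))))
    ∧ (sm (1/2 : ℂ) (∑ i, X! i * X! i) * -(sm (1/2 : ℂ) (∑ i, Y! i * Y! i))
      - -(sm (1/2 : ℂ) (∑ i, Y! i * Y! i)) * sm (1/2 : ℂ) (∑ i, X! i * X! i)
      = (∑ i, X! i * Y! i) + algebraMap ℂ _ ((ℓ:ℂ)/2)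
        - ∑ s ∈ S, sm (2 * c s / (1 - lam s)) (G! s)) := by
  have ham : algebraMap ℂ (CherednikAlgebra W S al cr c) ((ℓ:ℂ)/2) = sm ((ℓ:ℂ)/2) 1 := by
    rw [sm_def, mul_one]
  have hcoef : (∑ s ∈ S, sm (2 * c s / (1 - lam s)) (G! s)) = ∑ s ∈ S, sm (c s) (G! s) :=
    Finset.sum_congr rfl fun s hs => by
      rw [show 2 * c s / (1 - lam s) = c s by rw [hlam1 s hs]; ring]
  rw [ham, hcoef]
  have rhsX : (2 : CherednikAlgebra W S al cr c) * sm (1/2 : ℂ) (∑ i, X! i * X! i)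
      = ∑ i, X! i * X! i := by
    rw [show (2 : CherednikAlgebra W S al cr c) = algebraMap ℂ _ 2 from
        (map_ofNat _ 2).symm, ← sm_def, sm_sm,
      show ((2:ℂ) * (1/2) : ℂ) = 1 by norm_num, sm_one_c]
  have rhsY : (2 : CherednikAlgebra W S al cr c) * sm (1/2 : ℂ) (∑ i, Y! i * Y! i)
      = ∑ i, Y! i * Y! i := by
    rw [show (2 : CherednikAlgebra W S al cr c) = algebraMap ℂ _ 2 from
        (map_ofNat _ 2).symm, ← sm_def, sm_sm,
      show ((2:ℂ) * (1/2) : ℂ) = 1 by norm_num, sm_one_c]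
  refine ⟨?_, ?_, ?_⟩
  · -- [h, E] = 2E
    have hHP : ((∑ i, X! i * Y! i) + sm ((ℓ:ℂ)/2) 1 - ∑ s ∈ S, sm (c s) (G! s))
          * (∑ i, X! i * X! i)
        - (∑ i, X! i * X! i)
          * ((∑ i, X! i * Y! i) + sm ((ℓ:ℂ)/2) 1 - ∑ s ∈ S, sm (c s) (G! s))
        = ∑ i, (X! i * X! i + X! i * X! i) := by
      rw [Finset.mul_sum, Finset.sum_mul, ← Finset.sum_sub_distrib]
      exact Finset.sum_congr rfl fun i _ => comm_sq (commHX hentInv i)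
    rw [mul_sm, sm_mul, ← sm_sub, hHP, Finset.sum_add_distrib, sm_add, ← add_sm,
      show (1/2 + 1/2 : ℂ) = 1 by norm_num, sm_one_c, rhsX]
  · -- [h, F] = -2F
    have hHQ : ((∑ i, X! i * Y! i) + sm ((ℓ:ℂ)/2) 1 - ∑ s ∈ S, sm (c s) (G! s))
          * (∑ i, Y! i * Y! i)
        - (∑ i, Y! i * Y! i)
          * ((∑ i, X! i * Y! i) + sm ((ℓ:ℂ)/2) 1 - ∑ s ∈ S, sm (c s) (G! s))
        = ∑ i, -(Y! i * Y! i + Y! i * Y! i) := by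
      rw [Finset.mul_sum, Finset.sum_mul, ← Finset.sum_sub_distrib]
      exact Finset.sum_congr rfl fun i _ =>
        (comm_sq (commHY hent hprs i)).trans (negsq _)
    have lhs2 : ((∑ i, X! i * Y! i) + sm ((ℓ:ℂ)/2) 1 - ∑ s ∈ S, sm (c s) (G! s))
          * sm (1/2 : ℂ) (∑ i, Y! i * Y! i)
        - sm (1/2 : ℂ) (∑ i, Y! i * Y! i)
          * ((∑ i, X! i * Y! i) + sm ((ℓ:ℂ)/2) 1 - ∑ s ∈ S, sm (c s) (G! s))
        = -(∑ i, Y! i * Y! i) := by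
      rw [mul_sm, sm_mul, ← sm_sub, hHQ, Finset.sum_neg_distrib, sm_neg,
        Finset.sum_add_distrib, sm_add, ← add_sm,
        show (1/2 + 1/2 : ℂ) = 1 by norm_num, sm_one_c]
    exact wrapF lhs2 rhsY
  · -- [E, F] = h
    have hPQ := commPQ (c := c) hentInv hprs hsym
    have hV := sumXYYX (c := c) (al := al) (cr := cr) (S := S) hprs
    have hq1 : sm (1/2 : ℂ) (∑ i, X! i * X! i) * sm (1/2 : ℂ) (∑ i, Y! i * Y! i)
        = sm (1/4 : ℂ) ((∑ i, X! i * X! i) * (∑ i, Y! i * Y! i)) := by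
      rw [sm_mul, mul_sm, sm_sm, show ((1/2 : ℂ) * (1/2) : ℂ) = 1/4 by norm_num]
    have hq2 : sm (1/2 : ℂ) (∑ i, Y! i * Y! i) * sm (1/2 : ℂ) (∑ i, X! i * X! i)
        = sm (1/4 : ℂ) ((∑ i, Y! i * Y! i) * (∑ i, X! i * X! i)) := by
      rw [sm_mul, mul_sm, sm_sm, show ((1/2 : ℂ) * (1/2) : ℂ) = 1/4 by norm_num]
    have step1 : sm (1/2 : ℂ) (∑ i, X! i * X! i) * -(sm (1/2 : ℂ) (∑ i, Y! i * Y! i))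
        - -(sm (1/2 : ℂ) (∑ i, Y! i * Y! i)) * sm (1/2 : ℂ) (∑ i, X! i * X! i)
        = -(sm (1/2 : ℂ) (∑ i, X! i * X! i) * sm (1/2 : ℂ) (∑ i, Y! i * Y! i)
            - sm (1/2 : ℂ) (∑ i, Y! i * Y! i) * sm (1/2 : ℂ) (∑ i, X! i * X! i)) :=
      negswap2 _ _
    rw [step1, hq1, hq2, ← sm_sub]
    rw [congrArg (sm (1/4 : ℂ)) hPQ, sm_neg, neg_neg, sm_add, ← add_sm,
      show (1/4 + 1/4 : ℂ) = 1/2 by norm_num]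
    rw [congrArg (sm (1/2 : ℂ)) hV]
    rw [sm_sub, sm_add, sm_add, ← add_sm, show (1/2 + 1/2 : ℂ) = 1 by norm_num, sm_one_c,
      sm_sm, show ((1/2 : ℂ) * (ℓ:ℂ) : ℂ) = (ℓ:ℂ)/2 by ring, sm_sum']
    congr 1
    exact Finset.sum_congr rfl fun s hs => by
      rw [sm_sm, show ((1/2 : ℂ) * (2 * c s) : ℂ) = c s by ring]

end FinalAssembly
/-- Suppose `W ⊆ GL(ℂ^ℓ)` preserves a nondegenerate symmetric bilinear form (in coordinates:
all its matrices are orthogonal, `gᵀ g = 1`), and `x_i`, `y_i` are dual orthonormal bases of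
`h*` and `h`. Then in `H_{1,c}(W,h)` the elements `h = Σ_i x_i y_i + ℓ/2 - Σ_s (2c_s/(1-λ_s))s`,
`E = (1/2) Σ_i x_i²`, `F = -(1/2) Σ_i y_i²` form an `sl₂`-triple:
`[h,E] = 2E`, `[h,F] = -2F`, `[E,F] = h`. -/
theorem cherednik_sl2_triple {ℓ : ℕ} (W : Subgroup (GLC ℓ)) (S : Finset W)
    (al cr : W → Fin ℓ → ℂ) (lam : W → ℂ) (c : W → ℂ)
    (horth : ∀ g : W, (matOf g)ᵀ * matOf g = 1)
    (hlam : ∀ s ∈ S, lam s ≠ 1)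
    (heigx : ∀ s ∈ S, Matrix.vecMul (al s) (matOf (s⁻¹ : W)) = lam s • al s)
    (heigy : ∀ s ∈ S, Matrix.mulVec (matOf s) (cr s) = (lam s)⁻¹ • cr s)
    (hpair : ∀ s ∈ S, ∑ i : Fin ℓ, al s i * cr s i = 2)
    (hfix : ∀ s ∈ S, ∀ v : Fin ℓ → ℂ,
      (∑ i : Fin ℓ, al s i * v i) = 0 → Matrix.mulVec (matOf s) v = v)
    (hconj : ∀ g : W, ∀ s ∈ S,
      g * s * g⁻¹ ∈ S ∧ c (g * s * g⁻¹) = c s ∧ lam (g * s * g⁻¹) = lam s) :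
    letI mk := RingQuot.mkAlgHom ℂ (CherRel W S al cr c)
    letI hel : CherednikAlgebra W S al cr c :=
      (∑ i : Fin ℓ, mk (xg i) * mk (yg i)) + algebraMap ℂ _ ((ℓ : ℂ) / 2)
        - ∑ s ∈ S, algebraMap ℂ _ (2 * c s / (1 - lam s)) * mk (wg s)
    letI Eel : CherednikAlgebra W S al cr c :=
      algebraMap ℂ _ (1 / 2) * ∑ i : Fin ℓ, mk (xg i) * mk (xg i)
    letI Fel : CherednikAlgebra W S al cr c :=
      - (algebraMap ℂ _ (1 / 2) * ∑ i : Fin ℓ, mk (yg i) * mk (yg i))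
    hel * Eel - Eel * hel = 2 * Eel ∧
    hel * Fel - Fel * hel = - (2 * Fel) ∧
    Eel * Fel - Fel * Eel = hel := by
  have hlam1 : ∀ s ∈ S, lam s = -1 := fun s hs =>
    lam_eq_neg_one horth (hlam s hs) (heigy s hs) (hpair s hs) (hfix s hs)
  have hent2 : ∀ s ∈ S, ∀ k j, matOf s k j = (if k = j then 1 else 0) - al s j * cr s k :=
    fun s hs => matOf_refl_apply horth (hlam s hs) (heigy s hs) (hpair s hs) (hfix s hs)
  have hentInv2 : ∀ s ∈ S, ∀ k j,
      matOf (s⁻¹ : W) k j = (if k = j then 1 else 0) - al s j * cr s k :=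
    fun s hs => matOf_refl_inv_apply horth (hlam s hs) (heigy s hs) (hpair s hs) (hfix s hs)
  have hsym2 : ∀ s ∈ S, ∀ k j, al s j * cr s k = al s k * cr s j :=
    fun s hs => refl_symm horth (hlam s hs) (heigy s hs) (hpair s hs) (hfix s hs)
  exact final_sl2 hentInv2 hent2 hpair hsym2 lam hlam1

end
end

section
/- Let H_{0,c} be the rational Cherednik algebra of type A_{n−1} at t = 0 with c ≠ 0 (relations [y_i, x_j] = c s_{ij} for i ≠ j, [y_i, x_i] = −c Σ_{j≠i} s_{ij}, with S_n acting by permutations). Then in any finite-dimensional representation E of H_{0,c}, every permutation σ ≠ 1 has trace zero: Tr_E(σ) = 0. Consequently, E is a multiple of the regular representation of S_n. -/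
noncomputable section

/-- Generators of the type `A_{n-1}` rational Cherednik algebra `H_{0,c}`:
`x_1,...,x_n` (left-left), `y_1,...,y_n` (left-right), and the symmetric group. -/
abbrev AGen (n : ℕ) := (Fin n ⊕ Fin n) ⊕ Equiv.Perm (Fin n)

def axg {n : ℕ} (i : Fin n) : FreeAlgebra ℂ (AGen n) := FreeAlgebra.ι ℂ (Sum.inl (Sum.inl i))
def ayg {n : ℕ} (i : Fin n) : FreeAlgebra ℂ (AGen n) := FreeAlgebra.ι ℂ (Sum.inl (Sum.inr i))
def apg {n : ℕ} (σ : Equiv.Perm (Fin n)) : FreeAlgebra ℂ (AGen n) :=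
  FreeAlgebra.ι ℂ (Sum.inr σ)

/-- Defining relations of `H_{0,c}` of type `A_{n-1}`: the quotient of
`S_n ⋉ ℂ⟨x_1,...,x_n,y_1,...,y_n⟩` by `[x_i,x_j] = [y_i,y_j] = 0`,
`[y_i,x_j] = c s_{ij}` for `i ≠ j`, and `[y_i,x_i] = -c Σ_{j ≠ i} s_{ij}`. -/
inductive ARel (n : ℕ) (c : ℂ) : FreeAlgebra ℂ (AGen n) → FreeAlgebra ℂ (AGen n) → Prop
  | p_one : ARel n c (apg (1 : Equiv.Perm (Fin n))) 1
  | p_mul (σ τ : Equiv.Perm (Fin n)) : ARel n c (apg σ * apg τ) (apg (σ * τ))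
  | xx (i j : Fin n) : ARel n c (axg i * axg j) (axg j * axg i)
  | yy (i j : Fin n) : ARel n c (ayg i * ayg j) (ayg j * ayg i)
  | yx (i j : Fin n) (h : i ≠ j) : ARel n c (ayg i * axg j)
      (axg j * ayg i + algebraMap ℂ _ c * apg (Equiv.swap i j))
  | yxd (i : Fin n) : ARel n c (ayg i * axg i)
      (axg i * ayg i - algebraMap ℂ _ c *
        ∑ j ∈ Finset.univ.erase i, apg (Equiv.swap i j))
  | px (σ : Equiv.Perm (Fin n)) (i : Fin n) : ARel n c (apg σ * axg i) (axg (σ i) * apg σ)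
  | py (σ : Equiv.Perm (Fin n)) (i : Fin n) : ARel n c (apg σ * ayg i) (ayg (σ i) * apg σ)

/-- The rational Cherednik algebra `H_{0,c}` of type `A_{n-1}` at `t = 0`. -/
abbrev H0c (n : ℕ) (c : ℂ) := RingQuot (ARel n c)

/-- For `c ≠ 0`, in any finite-dimensional representation `E` of the type `A_{n-1}` rational
Cherednik algebra `H_{0,c}`, every permutation `σ ≠ 1` has trace zero; consequently the
character of `E` as an `S_n`-representation is that of a multiple of the regular
representation. -/
theorem traces_vanish_in_finite_dim_reps (n : ℕ) (c : ℂ) (hc : c ≠ 0)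
    (E : Type*) [AddCommGroup E] [Module ℂ E] [FiniteDimensional ℂ E]
    (ρ : H0c n c →ₐ[ℂ] Module.End ℂ E) :
    (∀ σ : Equiv.Perm (Fin n), σ ≠ 1 →
      LinearMap.trace ℂ E (ρ (RingQuot.mkAlgHom ℂ (ARel n c) (apg σ))) = 0) ∧
    (∃ m : ℕ, ∀ σ : Equiv.Perm (Fin n),
      LinearMap.trace ℂ E (ρ (RingQuot.mkAlgHom ℂ (ARel n c) (apg σ)))
        = if σ = 1 then (m * n.factorial : ℂ) else 0) := by
  classical
  set mk := RingQuot.mkAlgHom ℂ (ARel n c) with hmk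
  set f : Equiv.Perm (Fin n) → Module.End ℂ E := fun σ => ρ (mk (apg σ)) with hf
  have hf1 : f 1 = 1 := by
    have h := RingQuot.mkAlgHom_rel ℂ (ARel.p_one (n := n) (c := c))
    show ρ (mk (apg 1)) = 1
    rw [hmk, h, map_one, map_one]
  have hfmul : ∀ σ τ : Equiv.Perm (Fin n), f σ * f τ = f (σ * τ) := by
    intro σ τ
    have h := RingQuot.mkAlgHom_rel ℂ (ARel.p_mul (n := n) (c := c) σ τ)
    show ρ (mk (apg σ)) * ρ (mk (apg τ)) = ρ (mk (apg (σ * τ)))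
    rw [← map_mul, ← map_mul, hmk, h]
  -- Part 1: traces of nontrivial permutations vanish
  have htr : ∀ σ : Equiv.Perm (Fin n), σ ≠ 1 → LinearMap.trace ℂ E (f σ) = 0 := by
    intro σ hσ
    obtain ⟨j, hj⟩ : ∃ j, σ j ≠ j := by
      by_contra h
      push_neg at h
      exact hσ (Equiv.ext h)
    set i := σ j with hi
    have hji : j ≠ i := Ne.symm hj
    set τ := Equiv.swap i j * σ with hτ
    have hτj : τ j = j := by
      simp [hτ, ← hi, Equiv.swap_apply_left]
    have hswapτ : Equiv.swap j i * τ = σ := by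
      rw [hτ, Equiv.swap_comm, ← mul_assoc, Equiv.swap_mul_self, one_mul]
    -- key identity: [y_j, x_i * τ] = c • σ in H_{0,c}
    have key : mk (ayg j) * (mk (axg i) * mk (apg τ)) - (mk (axg i) * mk (apg τ)) * mk (ayg j)
        = c • mk (apg σ) := by
      have r1 : mk (ayg j * axg i)
          = mk (axg i * ayg j + algebraMap ℂ _ c * apg (Equiv.swap j i)) :=
        RingQuot.mkAlgHom_rel ℂ (ARel.yx j i hji)
      have r2 : mk (apg τ * ayg j) = mk (ayg (τ j) * apg τ) :=
        RingQuot.mkAlgHom_rel ℂ (ARel.py τ j)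
      have r3 : mk (apg (Equiv.swap j i) * apg τ) = mk (apg (Equiv.swap j i * τ)) :=
        RingQuot.mkAlgHom_rel ℂ (ARel.p_mul (Equiv.swap j i) τ)
      rw [hτj] at r2
      calc mk (ayg j) * (mk (axg i) * mk (apg τ)) - (mk (axg i) * mk (apg τ)) * mk (ayg j)
          = mk (ayg j * axg i) * mk (apg τ) - mk (axg i) * mk (apg τ * ayg j) := by
            simp only [map_mul, mul_assoc]
        _ = mk (axg i * ayg j + algebraMap ℂ _ c * apg (Equiv.swap j i)) * mk (apg τ)
            - mk (axg i) * mk (ayg j * apg τ) := by rw [r1, r2]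
        _ = algebraMap ℂ _ c * (mk (apg (Equiv.swap j i)) * mk (apg τ)) := by
            simp only [map_add, map_mul, AlgHom.commutes]
            noncomm_ring
        _ = algebraMap ℂ _ c * mk (apg (Equiv.swap j i * τ)) := by rw [← map_mul, r3]
        _ = c • mk (apg σ) := by rw [hswapτ, Algebra.smul_def]
    have h0 : LinearMap.trace ℂ E (ρ (c • mk (apg σ))) = 0 := by
      rw [← key]
      simp only [map_sub, map_mul]
      rw [LinearMap.trace_mul_comm, sub_self]
    rw [map_smul, map_smul, smul_eq_mul] at h0
    have := mul_eq_zero.mp h0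
    tauto
  refine ⟨htr, ?_⟩
  -- Part 2: the averaging projector
  have hfac : (n.factorial : ℂ) ≠ 0 := Nat.cast_ne_zero.mpr (Nat.factorial_ne_zero n)
  have hSmul : ∀ σ : Equiv.Perm (Fin n),
      f σ * (∑ τ : Equiv.Perm (Fin n), f τ) = ∑ τ : Equiv.Perm (Fin n), f τ := by
    intro σ
    rw [Finset.mul_sum]
    refine Fintype.sum_equiv (Equiv.mulLeft σ) _ _ (fun τ => ?_)
    rw [hfmul]
    rfl
  have hSS : (∑ σ : Equiv.Perm (Fin n), f σ) * (∑ σ : Equiv.Perm (Fin n), f σ)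
      = (n.factorial : ℂ) • ∑ σ : Equiv.Perm (Fin n), f σ := by
    rw [Finset.sum_mul, Finset.sum_congr rfl (fun σ _ => hSmul σ), Finset.sum_const,
      Finset.card_univ, Fintype.card_perm, Fintype.card_fin, ← Nat.cast_smul_eq_nsmul ℂ]
  set P : Module.End ℂ E := ((n.factorial : ℂ))⁻¹ • ∑ σ : Equiv.Perm (Fin n), f σ with hP
  have hidem : P ∘ₗ P = P := by
    show P * P = P
    rw [hP, smul_mul_assoc, mul_smul_comm, hSS, smul_smul, smul_smul]
    congr 1
    field_simp
  obtain ⟨p, hp⟩ := (LinearMap.isProj_iff_isIdempotentElem P).mpr hidem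
  have htrP : LinearMap.trace ℂ E P = (Module.finrank ℂ p : ℂ) := hp.trace
  have htrS : LinearMap.trace ℂ E (∑ σ : Equiv.Perm (Fin n), f σ)
      = (Module.finrank ℂ E : ℂ) := by
    rw [map_sum, Finset.sum_eq_single 1]
    · rw [hf1, LinearMap.trace_one]
    · intro σ _ hσ; exact htr σ hσ
    · intro h; exact absurd (Finset.mem_univ 1) h
  have hdim : (Module.finrank ℂ E : ℂ) = (Module.finrank ℂ p : ℂ) * (n.factorial : ℂ) := by
    rw [hP, map_smul, smul_eq_mul, htrS] at htrP
    field_simp at htrP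
    linear_combination htrP
  refine ⟨Module.finrank ℂ p, fun σ => ?_⟩
  by_cases hσ : σ = 1
  · subst hσ
    rw [if_pos rfl]
    show LinearMap.trace ℂ E (f 1) = _
    rw [hf1, LinearMap.trace_one, hdim]
  · rw [if_neg hσ]
    exact htr σ hσ

end
end

section
/- Let μ_1,...,μ_p ∈ ℂ with Σ μ_j ∈ ℤ and Σ μ_j > −p, let y_1,...,y_p be distinct complex numbers, and set a(z) = Π_{j=1}^p (z − y_j)^{μ_j} (a multivalued function with single-valued residue expansion at ∞). If Res_∞ a(z) z^i dz = 0 for i = 0, 1, ..., p−2, then a(z) is a polynomial, i.e. all μ_j are nonnegative integers. -/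
noncomputable section
open PowerSeries

/-- The formal binomial series `(1 - y w)^μ = Σ_k (μ choose k) (-y)^k w^k` in the variable
`w = 1/z`, used to expand `(z - y)^μ = z^μ (1 - y/z)^μ` at `z = ∞`. -/
def binomSeries (μ y : ℂ) : PowerSeries ℂ :=
  PowerSeries.mk fun k => (∏ i ∈ Finset.range k, (μ - i)) / k.factorial * (-y) ^ k

namespace ResidueAux

lemma coeff_binomSeries (μ y : ℂ) (k : ℕ) :
    PowerSeries.coeff k (binomSeries μ y)
      = (∏ i ∈ Finset.range k, (μ - i)) / k.factorial * (-y) ^ k :=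
  PowerSeries.coeff_mk _ _

lemma constantCoeff_binomSeries (μ y : ℂ) :
    PowerSeries.constantCoeff (binomSeries μ y) = 1 := by
  rw [← PowerSeries.coeff_zero_eq_constantCoeff_apply, coeff_binomSeries]; simp

lemma binom_step (μ y : ℂ) (k : ℕ) :
    PowerSeries.coeff (k+1) (binomSeries μ y) * ((k : ℂ)+1)
      = (μ - k) * (-y) * PowerSeries.coeff k (binomSeries μ y) := by
  rw [coeff_binomSeries, coeff_binomSeries, Finset.prod_range_succ, Nat.factorial_succ]
  have hk : (k.factorial : ℂ) ≠ 0 := by exact_mod_cast k.factorial_ne_zero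
  have hk1 : ((k:ℂ)+1) ≠ 0 := Nat.cast_add_one_ne_zero k
  push_cast
  field_simp
  ring

lemma binom_ODE (μ y : ℂ) :
    (1 - PowerSeries.C y * PowerSeries.X) * (d⁄dX ℂ) (binomSeries μ y)
      = PowerSeries.C (-(μ * y)) * binomSeries μ y := by
  ext k
  rw [sub_mul, one_mul, map_sub, PowerSeries.coeff_C_mul, mul_assoc, PowerSeries.coeff_C_mul]
  cases k with
  | zero =>
      rw [PowerSeries.coeff_zero_X_mul, PowerSeries.coeff_derivative]
      have h := binom_step μ y 0
      push_cast at h ⊢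
      linear_combination h
  | succ k =>
      rw [PowerSeries.coeff_succ_X_mul, PowerSeries.coeff_derivative,
        PowerSeries.coeff_derivative]
      have h := binom_step μ y (k+1)
      push_cast at h ⊢
      linear_combination h

lemma prod_ODE {p : ℕ} (μ y : Fin p → ℂ) (s : Finset (Fin p)) :
    (∏ j ∈ s, (1 - PowerSeries.C (y j) * PowerSeries.X))
        * (d⁄dX ℂ) (∏ j ∈ s, binomSeries (μ j) (y j))
      = (∑ j ∈ s, PowerSeries.C (-(μ j * y j))
            * ∏ i ∈ s.erase j, (1 - PowerSeries.C (y i) * PowerSeries.X))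
        * ∏ j ∈ s, binomSeries (μ j) (y j) := by
  induction s using Finset.induction with
  | empty => simp
  | @insert a s ha ih =>
      rw [Finset.prod_insert ha, Finset.prod_insert ha, Finset.sum_insert ha,
        Derivation.leibniz, smul_eq_mul, smul_eq_mul, Finset.erase_insert ha]
      have hsum : (∑ j ∈ s, PowerSeries.C (-(μ j * y j))
            * ∏ i ∈ (insert a s).erase j, (1 - PowerSeries.C (y i) * PowerSeries.X))
          = (1 - PowerSeries.C (y a) * PowerSeries.X) * ∑ j ∈ s, PowerSeries.C (-(μ j * y j))
            * ∏ i ∈ s.erase j, (1 - PowerSeries.C (y i) * PowerSeries.X) := by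
        rw [Finset.mul_sum]
        refine Finset.sum_congr rfl fun j hj => ?_
        rw [Finset.erase_insert_of_ne (ne_of_mem_of_not_mem hj ha).symm,
          Finset.prod_insert (fun h => ha (Finset.mem_of_mem_erase h))]
        ring
      rw [hsum]
      linear_combination ((1 - PowerSeries.C (y a) * PowerSeries.X)
          * binomSeries (μ a) (y a)) * ih
        + ((∏ j ∈ s, (1 - PowerSeries.C (y j) * PowerSeries.X))
            * ∏ j ∈ s, binomSeries (μ j) (y j)) * binom_ODE (μ a) (y a)

def Qp (p : ℕ) (y : Fin p → ℂ) : Polynomial ℂ :=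
  ∏ j, (1 - Polynomial.C (y j) * Polynomial.X)

def Rp (p : ℕ) (μ y : Fin p → ℂ) : Polynomial ℂ :=
  ∑ j, Polynomial.C (-(μ j * y j))
    * ∏ i ∈ Finset.univ.erase j, (1 - Polynomial.C (y i) * Polynomial.X)

lemma coe_linear (c : ℂ) : ((1 - Polynomial.C c * Polynomial.X : Polynomial ℂ) : ℂ⟦X⟧)
    = 1 - PowerSeries.C c * PowerSeries.X := by
  simp [Polynomial.coe_sub, Polynomial.coe_mul, Polynomial.coe_one, Polynomial.coe_C,
    Polynomial.coe_X]

lemma coe_Qp (p : ℕ) (y : Fin p → ℂ) :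
    ((Qp p y : Polynomial ℂ) : ℂ⟦X⟧) = ∏ j, (1 - PowerSeries.C (y j) * PowerSeries.X) := by
  rw [Qp, ← Polynomial.coeToPowerSeries.ringHom_apply, map_prod]
  exact Finset.prod_congr rfl fun j _ => by
    rw [Polynomial.coeToPowerSeries.ringHom_apply, coe_linear]

lemma coe_Rp (p : ℕ) (μ y : Fin p → ℂ) :
    ((Rp p μ y : Polynomial ℂ) : ℂ⟦X⟧) = ∑ j, PowerSeries.C (-(μ j * y j))
      * ∏ i ∈ Finset.univ.erase j, (1 - PowerSeries.C (y i) * PowerSeries.X) := by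
  rw [Rp, ← Polynomial.coeToPowerSeries.ringHom_apply, map_sum]
  refine Finset.sum_congr rfl fun j _ => ?_
  rw [map_mul, map_prod, Polynomial.coeToPowerSeries.ringHom_apply, Polynomial.coe_C]
  congr 1
  exact Finset.prod_congr rfl fun i _ => by
    rw [Polynomial.coeToPowerSeries.ringHom_apply, coe_linear]

lemma QR_ODE (p : ℕ) (μ y : Fin p → ℂ) :
    ((Qp p y : Polynomial ℂ) : ℂ⟦X⟧) * (d⁄dX ℂ) (∏ j, binomSeries (μ j) (y j))
      = ((Rp p μ y : Polynomial ℂ) : ℂ⟦X⟧) * ∏ j, binomSeries (μ j) (y j) := by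
  rw [coe_Qp, coe_Rp]; exact prod_ODE μ y Finset.univ

lemma natDegree_linear_le (c : ℂ) : (1 - Polynomial.C c * Polynomial.X).natDegree ≤ 1 := by
  refine le_trans (Polynomial.natDegree_sub_le _ _) ?_
  simp [Polynomial.natDegree_C_mul_le]
  exact le_trans (Polynomial.natDegree_C_mul_le _ _) (by simp)

lemma natDegree_Qp (p : ℕ) (y : Fin p → ℂ) : (Qp p y).natDegree ≤ p := by
  refine le_trans (Polynomial.natDegree_prod_le _ _) ?_
  refine le_trans (Finset.sum_le_sum fun j _ => natDegree_linear_le (y j)) ?_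
  simp

lemma natDegree_Rp (p : ℕ) (μ y : Fin p → ℂ) : (Rp p μ y).natDegree ≤ p - 1 := by
  refine Polynomial.natDegree_sum_le_of_forall_le _ _ fun j _ => ?_
  refine le_trans (Polynomial.natDegree_C_mul_le _ _) ?_
  refine le_trans (Polynomial.natDegree_prod_le _ _) ?_
  refine le_trans (Finset.sum_le_sum fun i _ => natDegree_linear_le (y i)) ?_
  simp [Finset.card_erase_of_mem]

lemma coeff_one_linear (c : ℂ) : (1 - Polynomial.C c * Polynomial.X).coeff 1 = -c := by
  simp [Polynomial.coeff_sub, Polynomial.coeff_one]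

lemma coeff_Qp_top (p : ℕ) (y : Fin p → ℂ) : (Qp p y).coeff p = ∏ j, (-(y j)) := by
  have h := Polynomial.coeff_prod_of_natDegree_le Finset.univ
    (fun j => (1 - Polynomial.C (y j) * Polynomial.X)) 1
    (fun j _ => natDegree_linear_le (y j))
  simp only [Finset.card_univ, Fintype.card_fin, mul_one] at h
  rw [Qp, h]
  exact Finset.prod_congr rfl fun j _ => coeff_one_linear (y j)

lemma coeff_Rp_top (p : ℕ) (μ y : Fin p → ℂ) :
    (Rp p μ y).coeff (p - 1) = (∑ j, μ j) * ∏ j, (-(y j)) := by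
  rw [Rp, Polynomial.finset_sum_coeff, Finset.sum_mul]
  refine Finset.sum_congr rfl fun j _ => ?_
  rw [Polynomial.coeff_C_mul]
  have h := Polynomial.coeff_prod_of_natDegree_le (Finset.univ.erase j)
    (fun i => (1 - Polynomial.C (y i) * Polynomial.X)) 1
    (fun i (_ : i ∈ Finset.univ.erase j) => natDegree_linear_le (y i))
  simp only [Finset.card_erase_of_mem (Finset.mem_univ j), Finset.card_univ,
    Fintype.card_fin, mul_one] at h
  rw [h]
  have h2 : ∏ i ∈ Finset.univ.erase j, (1 - Polynomial.C (y i) * Polynomial.X).coeff 1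
      = ∏ i ∈ Finset.univ.erase j, (-(y i)) :=
    Finset.prod_congr rfl fun i _ => coeff_one_linear (y i)
  rw [h2, ← Finset.mul_prod_erase Finset.univ (fun i => -(y i)) (Finset.mem_univ j)]
  ring

lemma coeff_Qp_zero (p : ℕ) (y : Fin p → ℂ) : (Qp p y).coeff 0 = 1 := by
  rw [Qp, Polynomial.coeff_zero_eq_eval_zero, Polynomial.eval_prod]
  simp

lemma key_step (p : ℕ) (hp : 1 ≤ p) (μ y : Fin p → ℂ) (N : ℤ)
    (hN : (∑ j, μ j) = (N : ℂ)) (hNp : -(p : ℤ) < N) (k : ℕ) (hk : N + p ≤ (k : ℤ))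
    (IH : ∀ m : ℕ, m < k → N + 1 ≤ (m : ℤ) →
      PowerSeries.coeff m (∏ j, binomSeries (μ j) (y j)) = 0) :
    PowerSeries.coeff k (∏ j, binomSeries (μ j) (y j)) = 0 := by
  set A := ∏ j, binomSeries (μ j) (y j) with hA
  have hk1 : 1 ≤ k := by omega
  obtain ⟨K, rfl⟩ : ∃ K, k = K + 1 := ⟨k - 1, by omega⟩
  set F : ℕ → ℂ := fun m => (Qp p y).coeff m
    * (PowerSeries.coeff (K - m + 1) A * (((K - m : ℕ) : ℂ) + 1)) with hF
  set G : ℕ → ℂ := fun m => (Rp p μ y).coeff m * PowerSeries.coeff (K - m) A with hG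
  have hQRc : ∑ m ∈ Finset.range (K + 1), F m = ∑ m ∈ Finset.range (K + 1), G m := by
    have h := congrArg (PowerSeries.coeff K) (QR_ODE p μ y)
    rw [← hA] at h
    rw [PowerSeries.coeff_mul, PowerSeries.coeff_mul,
      Finset.Nat.sum_antidiagonal_eq_sum_range_succ_mk,
      Finset.Nat.sum_antidiagonal_eq_sum_range_succ_mk] at h
    refine Eq.trans ?_ (h.trans ?_)
    · refine Finset.sum_congr rfl fun m _ => ?_
      simp only [hF, Polynomial.coeff_coe, PowerSeries.coeff_derivative]
    · refine Finset.sum_congr rfl fun m _ => ?_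
      simp only [hG, Polynomial.coeff_coe]
  have hterm : ∀ m ∈ Finset.range K, F (m + 1) = G m := by
    intro m hm
    rw [Finset.mem_range] at hm
    have hn : K - (m + 1) + 1 = K - m := by omega
    show (Qp p y).coeff (m + 1)
        * (PowerSeries.coeff (K - (m + 1) + 1) A * (((K - (m + 1) : ℕ) : ℂ) + 1))
      = (Rp p μ y).coeff m * PowerSeries.coeff (K - m) A
    rw [hn]
    by_cases hcase : N + 1 ≤ ((K - m : ℕ) : ℤ)
    · rw [IH (K - m) (by omega) hcase]
      ring
    · push_neg at hcase
      have hm1 : (p : ℤ) ≤ (m : ℤ) + 1 := by omega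
      by_cases hp' : m + 1 = p
      · have hnN : ((K - m : ℕ) : ℤ) = N := by omega
        have hmp : m = p - 1 := by omega
        have h1 : ((K - (m + 1) + 1 : ℕ) : ℤ) = N := by rw [hn]; exact hnN
        have hc : ((K - (m + 1) : ℕ) : ℂ) + 1 = (N : ℂ) := by
          have h2 : (((K - (m + 1) + 1 : ℕ) : ℤ) : ℂ) = ((N : ℤ) : ℂ) := by rw [h1]
          push_cast at h2
          exact h2
        have hQc : (Qp p y).coeff (m + 1) = ∏ j, (-(y j)) := by
          rw [hp']; exact coeff_Qp_top p y
        have hRc : (Rp p μ y).coeff m = (N : ℂ) * ∏ j, (-(y j)) := by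
          rw [hmp, coeff_Rp_top, hN]
        rw [hQc, hRc, hc]
        ring
      · have h1 : (Qp p y).coeff (m + 1) = 0 :=
          Polynomial.coeff_eq_zero_of_natDegree_lt
            (lt_of_le_of_lt (natDegree_Qp p y) (by omega))
        have h2 : (Rp p μ y).coeff m = 0 :=
          Polynomial.coeff_eq_zero_of_natDegree_lt
            (lt_of_le_of_lt (natDegree_Rp p μ y) (by omega))
        rw [h1, h2]
        ring
  have hGK : G K = 0 := by
    show (Rp p μ y).coeff K * PowerSeries.coeff (K - K) A = 0
    by_cases hNneg : N + 1 ≤ 0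
    · rw [Nat.sub_self, IH 0 (by omega) (by exact_mod_cast hNneg)]
      ring
    · push_neg at hNneg
      by_cases hKp : K = p - 1
      · have hN0 : N = 0 := by omega
        rw [hKp, coeff_Rp_top, hN, hN0]
        simp
      · have h2 : (Rp p μ y).coeff K = 0 :=
          Polynomial.coeff_eq_zero_of_natDegree_lt
            (lt_of_le_of_lt (natDegree_Rp p μ y) (by omega))
        rw [h2]
        ring
  rw [Finset.sum_range_succ' F K, Finset.sum_range_succ G K,
    Finset.sum_congr rfl hterm, hGK, add_zero] at hQRc
  have hF0 : F 0 = 0 := add_eq_left.mp hQRc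
  have hF0' : PowerSeries.coeff (K + 1) A * ((K : ℂ) + 1) = 0 := by
    have : F 0 = (Qp p y).coeff 0
        * (PowerSeries.coeff (K - 0 + 1) A * (((K - 0 : ℕ) : ℂ) + 1)) := rfl
    rw [this, coeff_Qp_zero, Nat.sub_zero, one_mul] at hF0
    exact hF0
  have hne : ((K : ℂ) + 1) ≠ 0 := Nat.cast_add_one_ne_zero K
  exact (mul_eq_zero.1 hF0').resolve_right hne

lemma coeff_vanish (p : ℕ) (hp : 1 ≤ p) (μ y : Fin p → ℂ) (N : ℤ)
    (hN : (∑ j, μ j) = (N : ℂ)) (hNp : -(p : ℤ) < N)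
    (hres : ∀ i ∈ Finset.range (p - 1), ∀ k : ℕ, (k : ℤ) = N + i + 1 →
      PowerSeries.coeff k (∏ j, binomSeries (μ j) (y j)) = 0) :
    ∀ k : ℕ, N + 1 ≤ (k : ℤ) → PowerSeries.coeff k (∏ j, binomSeries (μ j) (y j)) = 0 := by
  intro k
  induction k using Nat.strong_induction_on with
  | _ k IH =>
      intro hk
      by_cases hbig : N + p ≤ (k : ℤ)
      · exact key_step p hp μ y N hN hNp k hbig fun m hm hm' => IH m hm hm'
      · push_neg at hbig
        have hi : ((k : ℤ) - N - 1).toNat < p - 1 := by omega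
        refine hres (((k : ℤ) - N - 1).toNat) (Finset.mem_range.2 hi) k ?_
        omega

lemma constantCoeff_A (p : ℕ) (μ y : Fin p → ℂ) :
    PowerSeries.coeff 0 (∏ j, binomSeries (μ j) (y j)) = 1 := by
  rw [PowerSeries.coeff_zero_eq_constantCoeff_apply, map_prod]
  exact Finset.prod_eq_one fun j _ => constantCoeff_binomSeries (μ j) (y j)

lemma N_nonneg (p : ℕ) (hp : 1 ≤ p) (μ y : Fin p → ℂ) (N : ℤ)
    (hN : (∑ j, μ j) = (N : ℂ)) (hNp : -(p : ℤ) < N)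
    (hres : ∀ i ∈ Finset.range (p - 1), ∀ k : ℕ, (k : ℤ) = N + i + 1 →
      PowerSeries.coeff k (∏ j, binomSeries (μ j) (y j)) = 0) :
    0 ≤ N := by
  by_contra h
  push_neg at h
  have h0 := coeff_vanish p hp μ y N hN hNp hres 0 (by omega)
  rw [constantCoeff_A] at h0
  exact one_ne_zero h0

open Polynomial in
lemma mu_eq_mult (p : ℕ) (μ y : Fin p → ℂ) (hy : Function.Injective y)
    (P : Polynomial ℂ) (hP0 : P ≠ 0)
    (hident : Qp p y * Polynomial.derivative P = Rp p μ y * P)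
    (j : Fin p) (hyj : y j ≠ 0) :
    μ j = (P.rootMultiplicity (y j)⁻¹ : ℕ) := by
  set r := (y j)⁻¹ with hr
  set m := P.rootMultiplicity r with hm
  set Cq := P /ₘ (Polynomial.X - Polynomial.C r) ^ m with hCq
  have hfact : (Polynomial.X - Polynomial.C r) ^ m * Cq = P := by
    rw [hCq, hm]; exact pow_mul_divByMonic_rootMultiplicity_eq P r
  have hCr : Cq.eval r ≠ 0 := by
    rw [hCq, hm]; exact eval_divByMonic_pow_rootMultiplicity_ne_zero r hP0
  set Qj : Polynomial ℂ := ∏ i ∈ Finset.univ.erase j, (1 - Polynomial.C (y i) * Polynomial.X) with hQj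
  have h3 : Qp p y = (1 - Polynomial.C (y j) * Polynomial.X) * Qj :=
    (Finset.mul_prod_erase Finset.univ _ (Finset.mem_univ j)).symm
  have h4 : (1 - Polynomial.C (y j) * Polynomial.X) = Polynomial.C (-(y j)) * (Polynomial.X - Polynomial.C r) := by
    have hyr : (y j) * r = 1 := mul_inv_cancel₀ hyj
    have : Polynomial.C ((y j) * r) = (Polynomial.C (y j) * Polynomial.C r : Polynomial ℂ) := by rw [Polynomial.C_mul]
    rw [hyr] at this
    rw [map_one] at this
    rw [map_neg]
    linear_combination this
  have h5 : Polynomial.derivative P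
      = Polynomial.derivative ((Polynomial.X - Polynomial.C r) ^ m) * Cq + (Polynomial.X - Polynomial.C r) ^ m * Polynomial.derivative Cq := by
    conv_lhs => rw [← hfact]
    rw [Polynomial.derivative_mul]
  have h6 : (Polynomial.X - Polynomial.C r) * Polynomial.derivative ((Polynomial.X - Polynomial.C r) ^ m) = (m : Polynomial ℂ) * (Polynomial.X - Polynomial.C r) ^ m := by
    rw [Polynomial.derivative_pow, Polynomial.derivative_X_sub_C, mul_one]
    cases m with
    | zero => simp
    | succ k => rw [Nat.succ_sub_one, pow_succ]; simp only [Nat.cast_add, Nat.cast_one, map_add, Polynomial.C_1, Polynomial.C_eq_natCast]; ring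
  have E : (Polynomial.X - Polynomial.C r) ^ m * (Polynomial.C (-(y j)) * Qj
        * ((m : Polynomial ℂ) * Cq + (Polynomial.X - Polynomial.C r) * Polynomial.derivative Cq))
      = (Polynomial.X - Polynomial.C r) ^ m * (Rp p μ y * Cq) := by
    linear_combination (-(Polynomial.C (-(y j)) * Qj * Cq)) * h6
      + (-(Polynomial.C (-(y j)) * Qj * (Polynomial.X - Polynomial.C r))) * h5
      + (-(Qj * Polynomial.derivative P)) * h4
      + (-(Polynomial.derivative P)) * h3
      + hident - (Rp p μ y) * hfact
  have E' : Polynomial.C (-(y j)) * Qj * ((m : Polynomial ℂ) * Cq + (Polynomial.X - Polynomial.C r) * Polynomial.derivative Cq)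
      = Rp p μ y * Cq :=
    mul_left_cancel₀ (pow_ne_zero m (Polynomial.X_sub_C_ne_zero r)) E
  have Eev := congrArg (Polynomial.eval r) E'
  simp only [eval_mul, eval_add, eval_sub, eval_C, eval_X, eval_natCast, sub_self,
    zero_mul, add_zero] at Eev
  -- evaluate Rp at r
  have hRr : (Rp p μ y).eval r = -(μ j * y j) * Qj.eval r := by
    rw [Rp, Polynomial.eval_finset_sum]
    rw [Finset.sum_eq_single j]
    · rw [eval_mul, eval_C]
    · intro i _ hij
      rw [eval_mul]
      have hj : j ∈ Finset.univ.erase i := Finset.mem_erase.2 ⟨(Ne.symm hij), Finset.mem_univ j⟩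
      have : ((∏ l ∈ Finset.univ.erase i, (1 - Polynomial.C (y l) * Polynomial.X)).eval r) = 0 := by
        rw [Polynomial.eval_prod]
        refine Finset.prod_eq_zero hj ?_
        have : (y j) * r = 1 := mul_inv_cancel₀ hyj
        simp [this]
      rw [this, mul_zero]
    · intro h
      exact absurd (Finset.mem_univ j) h
  have hQjr : Qj.eval r ≠ 0 := by
    rw [hQj, Polynomial.eval_prod]
    refine Finset.prod_ne_zero_iff.2 fun i hi => ?_
    intro h
    rw [eval_sub, eval_one, eval_mul, eval_C, eval_X, sub_eq_zero] at h
    have : y i = y j := by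
      field_simp [hr] at h
      exact (div_eq_one_iff_eq hyj).1 (by rw [div_eq_mul_inv, ← hr]; exact h.symm)
    exact (Finset.mem_erase.1 hi).1 (hy this)
  rw [hRr] at Eev
  have hfin : ((μ j : ℂ) - m) * (y j * Qj.eval r * Cq.eval r) = 0 := by
    linear_combination Eev
  rcases mul_eq_zero.1 hfin with h | h
  · linear_combination h
  · exact absurd h (by
      refine mul_ne_zero (mul_ne_zero hyj hQjr) hCr)

end ResidueAux

open ResidueAux

/-- The residue lemma: let `a(z) = Π_{j=1}^p (z - y_j)^{μ_j}` with `y_j` distinct,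
`N := Σ μ_j ∈ ℤ` and `N > -p`. Expanding at infinity,
`a(z) = z^N Π_j (1 - y_j/z)^{μ_j} = w^{-N} A(w)` where `w = 1/z` and
`A = Π_j binomSeries (μ j) (y_j)`, so that `Res_∞ a(z) z^i dz` is (up to sign) the coefficient
of `w^{N+i+1}` in `A`. If `Res_∞ a(z) z^i dz = 0` for `i = 0, 1, ..., p-2`, then `a(z)` is a
polynomial, i.e. every `μ_j` is a nonnegative integer. -/
theorem residue_lemma (p : ℕ) (μ : Fin p → ℂ) (y : Fin p → ℂ) (hy : Function.Injective y)
    (N : ℤ) (hN : (∑ j, μ j) = (N : ℂ)) (hNp : -(p : ℤ) < N)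
    (hres : ∀ i ∈ Finset.range (p - 1), ∀ k : ℕ, (k : ℤ) = N + i + 1 →
      PowerSeries.coeff k (∏ j, binomSeries (μ j) (y j)) = 0) :
    ∀ j, ∃ m : ℕ, μ j = m := by
  intro j
  have hp : 1 ≤ p := j.pos
  have hN0 : 0 ≤ N := N_nonneg p hp μ y N hN hNp hres
  set A := ∏ j, binomSeries (μ j) (y j) with hA
  set P : Polynomial ℂ := PowerSeries.trunc (N.toNat + 1) A with hP
  have hPA : (P : PowerSeries ℂ) = A := by
    ext k
    rw [Polynomial.coeff_coe, hP, PowerSeries.coeff_trunc]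
    split_ifs with h
    · rfl
    · exact (coeff_vanish p hp μ y N hN hNp hres k (by omega)).symm
  have hP0 : P ≠ 0 := by
    intro h
    have h1 : PowerSeries.coeff 0 A = 1 := constantCoeff_A p μ y
    rw [← hPA, h] at h1
    simp at h1
  have hident : Qp p y * Polynomial.derivative P = Rp p μ y * P := by
    rw [← Polynomial.coe_inj, Polynomial.coe_mul, Polynomial.coe_mul,
      ← PowerSeries.derivative_coe, hPA]
    exact QR_ODE p μ y
  have hmult : ∀ i : Fin p, y i ≠ 0 → μ i = (P.rootMultiplicity (y i)⁻¹ : ℕ) :=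
    fun i hi => mu_eq_mult p μ y hy P hP0 hident i hi
  by_cases hyj : y j ≠ 0
  · exact ⟨P.rootMultiplicity (y j)⁻¹, hmult j hyj⟩
  · push_neg at hyj
    -- all other y i are nonzero
    have hy0 : ∀ i ∈ Finset.univ.erase j, y i ≠ 0 := by
      intro i hi h0
      exact (Finset.mem_erase.1 hi).1 (hy (h0.trans hyj.symm))
    set S : ℕ := ∑ i ∈ Finset.univ.erase j, P.rootMultiplicity (y i)⁻¹ with hS
    have hsum : (∑ i ∈ Finset.univ.erase j, μ i) = (S : ℂ) := by
      rw [hS, Nat.cast_sum]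
      exact Finset.sum_congr rfl fun i hi => hmult i (hy0 i hi)
    have hμj : μ j = (N : ℂ) - S := by
      have := Finset.add_sum_erase Finset.univ μ (Finset.mem_univ j)
      rw [hsum, hN] at this
      linear_combination this
    -- S ≤ N.toNat via divisibility
    have hdvd : (∏ i ∈ Finset.univ.erase j,
        (Polynomial.X - Polynomial.C (y i)⁻¹) ^ P.rootMultiplicity (y i)⁻¹) ∣ P := by
      refine Finset.prod_dvd_of_coprime ?_ fun i _ => Polynomial.pow_rootMultiplicity_dvd P _
      intro a ha b hb hab
      refine IsCoprime.pow ?_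
      refine Polynomial.isCoprime_X_sub_C_of_isUnit_sub ?_
      refine (sub_ne_zero_of_ne ?_).isUnit
      intro h
      exact hab (hy (inv_injective h))
    have hdegprod : (∏ i ∈ Finset.univ.erase j,
        (Polynomial.X - Polynomial.C (y i)⁻¹) ^ P.rootMultiplicity (y i)⁻¹).natDegree = S := by
      rw [Polynomial.natDegree_prod _ _ fun i _ => pow_ne_zero _ (Polynomial.X_sub_C_ne_zero _)]
      rw [hS]
      exact Finset.sum_congr rfl fun i _ => by
        rw [Polynomial.natDegree_pow, Polynomial.natDegree_X_sub_C, mul_one]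
    have hdegP : P.natDegree ≤ N.toNat := by
      rw [hP]
      exact Nat.lt_succ_iff.1 (PowerSeries.natDegree_trunc_lt A N.toNat)
    have hSle : S ≤ N.toNat := by
      rw [← hdegprod]
      exact le_trans (Polynomial.natDegree_le_of_dvd hdvd hP0) hdegP
    refine ⟨N.toNat - S, ?_⟩
    rw [hμj, Nat.cast_sub hSle]
    have : ((N.toNat : ℕ) : ℂ) = (N : ℂ) := by
      exact_mod_cast congrArg (fun z : ℤ => (z : ℂ)) (Int.toNat_of_nonneg hN0)
    rw [this]

end
end

section
/- Let n ≥ 2, r a positive integer coprime to n, and for distinct complex numbers y_1,...,y_p with positive integer multiplicities m_1,...,m_p summing to n, suppose that Res_∞ (Π_{j=1}^p (z − y_j)^{m_j r/n − 1}) z^i dz = 0 for all i = 0, ..., p−1. Then p = 1, i.e. all coordinates are equal. -/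
noncomputable section
open PowerSeries

lemma binomSeries_constantCoeff (μ y : ℂ) : constantCoeff (binomSeries μ y) = 1 := by
  rw [← coeff_zero_eq_constantCoeff_apply]
  simp [binomSeries]

lemma binom_ode (μ y : ℂ) :
    ((1 : ℂ⟦X⟧) - PowerSeries.C y * PowerSeries.X) * (d⁄dX ℂ (binomSeries μ y))
      = PowerSeries.C (μ * (-y)) * binomSeries μ y := by
  ext k
  rw [sub_mul, one_mul, map_sub, coeff_C_mul, mul_assoc, coeff_C_mul]
  cases k with
  | zero =>
    simp only [coeff_zero_X_mul, mul_zero, sub_zero, coeff_derivative, binomSeries, coeff_mk]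
    simp
  | succ k =>
    rw [coeff_succ_X_mul, coeff_derivative, coeff_derivative, binomSeries, coeff_mk, coeff_mk,
      Finset.prod_range_succ]
    rw [Finset.prod_range_succ]
    have hf : ((k+1).factorial : ℂ) ≠ 0 := by exact_mod_cast (Nat.factorial_ne_zero (k+1))
    have hf' : ((1+k).factorial : ℂ) ≠ 0 := by exact_mod_cast (Nat.factorial_ne_zero (1+k))
    have h3 : ((k:ℂ)+1+1) ≠ 0 := by exact_mod_cast Nat.succ_ne_zero (k+1)
    rw [Nat.factorial_succ (k+1)]
    push_cast
    field_simp
    ring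

lemma deriv_prod {ι : Type*} [DecidableEq ι] (s : Finset ι) (b : ι → ℂ⟦X⟧) :
    d⁄dX ℂ (∏ i ∈ s, b i) = ∑ j ∈ s, (d⁄dX ℂ (b j)) * ∏ i ∈ s.erase j, b i := by
  induction s using Finset.induction_on with
  | empty => simp
  | insert a s h ih =>
    rw [Finset.prod_insert h, Derivation.leibniz, smul_eq_mul, smul_eq_mul, ih,
      Finset.sum_insert h, Finset.erase_insert h, Finset.mul_sum]
    rw [add_comm]
    congr 1
    · rw [mul_comm]
    · refine Finset.sum_congr rfl fun j hj => ?_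
      rw [Finset.erase_insert_of_ne (fun hja => h (by rw [hja]; exact hj)),
        Finset.prod_insert (fun ha => h (Finset.mem_of_mem_erase ha))]
      ring

lemma vanish_prop (f Q P : ℂ⟦X⟧) (p N : ℕ) (hN : 1 ≤ N)
    (hode : Q * d⁄dX ℂ f = P * f)
    (hQ0 : PowerSeries.coeff 0 Q = 1)
    (hQ : ∀ s, p < s → PowerSeries.coeff s Q = 0)
    (hP : ∀ s, p ≤ s → PowerSeries.coeff s P = 0)
    (hbase : ∀ k, N ≤ k → k < N + p → PowerSeries.coeff k f = 0) :
    ∀ k, N ≤ k → PowerSeries.coeff k f = 0 := by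
  intro k
  induction k using Nat.strong_induction_on with
  | _ k ih =>
    intro hk
    by_cases hkp : k < N + p
    · exact hbase k hk hkp
    · push_neg at hkp
      have hk1 : 1 ≤ k := le_trans hN hk
      have hL : PowerSeries.coeff (k-1) (Q * d⁄dX ℂ f) = (k : ℂ) * PowerSeries.coeff k f := by
        rw [coeff_mul, Finset.sum_eq_single (0, k-1)]
        · rw [hQ0, one_mul, coeff_derivative, Nat.sub_add_cancel hk1, Nat.cast_sub hk1]
          push_cast
          ring
        · rintro ⟨s, t⟩ hst hne
          rw [Finset.HasAntidiagonal.mem_antidiagonal] at hst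
          have hs : s ≠ 0 := by
            rintro rfl
            exact hne (by simp [← hst])
          by_cases hsp : p < s
          · rw [hQ s hsp, zero_mul]
          · push_neg at hsp
            have h1 : N ≤ t + 1 := by omega
            have h2 : t + 1 < k := by omega
            rw [coeff_derivative, ih (t+1) h2 h1, zero_mul, mul_zero]
        · intro h
          exact absurd (Finset.HasAntidiagonal.mem_antidiagonal.mpr (by simp)) h
      have hR : PowerSeries.coeff (k-1) (P * f) = 0 := by
        rw [coeff_mul]
        refine Finset.sum_eq_zero ?_
        rintro ⟨s, t⟩ hst
        rw [Finset.HasAntidiagonal.mem_antidiagonal] at hst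
        by_cases hsp : p ≤ s
        · rw [hP s hsp, zero_mul]
        · push_neg at hsp
          have h1 : N ≤ t := by omega
          have h2 : t < k := by omega
          rw [ih t h2 h1, mul_zero]
      rw [hode, hR] at hL
      have hkne : (k : ℂ) ≠ 0 := Nat.cast_ne_zero.mpr (by omega)
      exact (mul_eq_zero.mp hL.symm).resolve_left hkne

/-- Support theorem for the type `A` rational Cherednik algebra at `k = r/n` with
`gcd(r,n) = 1`: let `n ≥ 2`, `r > 0` coprime to `n`, and let `y_1,...,y_p` be distinct complex
numbers with positive multiplicities `m_1,...,m_p` summing to `n`. Expanding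
`a(z) = Π_j (z - y_j)^{m_j r/n - 1}` at infinity (note `Σ_j (m_j r/n - 1) = r - p ∈ ℤ`),
suppose all the residues `Res_∞ a(z) z^i dz` vanish for `i = 0, ..., p - 1`, i.e. the
coefficient of `w^{(r-p)+i+1}` in `Π_j binomSeries (m_j r/n - 1) (y_j)` vanishes. Then `p = 1`:
all the coordinates are equal. -/
theorem support_theorem_coprime_case (n r p : ℕ) (hn : 2 ≤ n) (hr : 0 < r)
    (hcop : Nat.Coprime r n)
    (y : Fin p → ℂ) (hy : Function.Injective y)
    (m : Fin p → ℕ) (hm : ∀ j, 0 < m j) (hsum : ∑ j, m j = n)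
    (hres : ∀ i ∈ Finset.range p, ∀ k : ℕ, (k : ℤ) = (r : ℤ) - p + i + 1 →
      PowerSeries.coeff k
        (∏ j, binomSeries ((m j : ℂ) * r / n - 1) (y j)) = 0) :
    p = 1 := by
  classical
  -- p ≥ 1
  have hp1 : 1 ≤ p := by
    by_contra h
    have hp0 : p = 0 := by omega
    subst hp0
    simp at hsum
    omega
  by_contra hne
  have hp2 : 2 ≤ p := by omega
  -- notation
  set μ : Fin p → ℂ := fun j => (m j : ℂ) * r / n - 1 with hμdef
  set f : ℂ⟦X⟧ := ∏ j, binomSeries (μ j) (y j) with hfdef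
  have hres' : ∀ i ∈ Finset.range p, ∀ k : ℕ, (k : ℤ) = (r : ℤ) - p + i + 1 →
      PowerSeries.coeff k f = 0 := by
    intro i hi k hk
    simpa only [hfdef, hμdef] using hres i hi k hk
  have hf0 : PowerSeries.coeff 0 f = 1 := by
    rw [hfdef, coeff_zero_eq_constantCoeff_apply, map_prod]
    simp [binomSeries_constantCoeff]
  -- rule out p > r
  by_cases hpr : r < p
  · have h0 := hres' (p - r - 1) (Finset.mem_range.mpr (by omega)) 0 (by push_cast; omega)
    rw [hf0] at h0
    exact one_ne_zero h0
  push_neg at hpr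
  -- N and base vanishing
  set N : ℕ := r - p + 1 with hNdef
  have hN1 : 1 ≤ N := by omega
  have hbase : ∀ k, N ≤ k → k < N + p → PowerSeries.coeff k f = 0 := by
    intro k h1 h2
    exact hres' (k - N) (Finset.mem_range.mpr (by omega)) k (by push_cast; omega)
  -- the ODE
  set Qps : ℂ⟦X⟧ := ∏ j, ((1 : ℂ⟦X⟧) - PowerSeries.C (y j) * PowerSeries.X) with hQpsdef
  set Pps : ℂ⟦X⟧ := ∑ j, PowerSeries.C (μ j * (-(y j))) *
      ∏ i ∈ Finset.univ.erase j, ((1 : ℂ⟦X⟧) - PowerSeries.C (y i) * PowerSeries.X) with hPpsdef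
  have hode : Qps * d⁄dX ℂ f = Pps * f := by
    rw [hfdef, deriv_prod, Finset.mul_sum, hPpsdef, Finset.sum_mul]
    refine Finset.sum_congr rfl fun j _ => ?_
    have h2 : Qps = ((1:ℂ⟦X⟧) - PowerSeries.C (y j) * PowerSeries.X) *
        ∏ i ∈ Finset.univ.erase j, ((1:ℂ⟦X⟧) - PowerSeries.C (y i) * PowerSeries.X) :=
      (Finset.mul_prod_erase _ _ (Finset.mem_univ j)).symm
    have h3 : (∏ i, binomSeries (μ i) (y i)) = binomSeries (μ j) (y j) *
        ∏ i ∈ Finset.univ.erase j, binomSeries (μ i) (y i) :=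
      (Finset.mul_prod_erase _ _ (Finset.mem_univ j)).symm
    calc Qps * (d⁄dX ℂ (binomSeries (μ j) (y j)) * ∏ i ∈ Finset.univ.erase j, binomSeries (μ i) (y i))
        = ((((1:ℂ⟦X⟧) - PowerSeries.C (y j) * PowerSeries.X) * d⁄dX ℂ (binomSeries (μ j) (y j))) *
            (∏ i ∈ Finset.univ.erase j, ((1:ℂ⟦X⟧) - PowerSeries.C (y i) * PowerSeries.X))) *
            ∏ i ∈ Finset.univ.erase j, binomSeries (μ i) (y i) := by
          rw [h2]; ring
      _ = ((PowerSeries.C (μ j * (-(y j))) * binomSeries (μ j) (y j)) *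
            (∏ i ∈ Finset.univ.erase j, ((1:ℂ⟦X⟧) - PowerSeries.C (y i) * PowerSeries.X))) *
            ∏ i ∈ Finset.univ.erase j, binomSeries (μ i) (y i) := by
          rw [binom_ode]
      _ = (PowerSeries.C (μ j * (-(y j))) *
            ∏ i ∈ Finset.univ.erase j, ((1:ℂ⟦X⟧) - PowerSeries.C (y i) * PowerSeries.X)) *
            ∏ i, binomSeries (μ i) (y i) := by
          rw [h3]; ring
  -- polynomial versions
  set Qp : Polynomial ℂ := ∏ j, ((1 : Polynomial ℂ) - Polynomial.C (y j) * Polynomial.X)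
    with hQpdef
  set Pp : Polynomial ℂ := ∑ j, Polynomial.C (μ j * (-(y j))) *
      ∏ i ∈ Finset.univ.erase j, ((1 : Polynomial ℂ) - Polynomial.C (y i) * Polynomial.X)
    with hPpdef
  have hQcoe : ((Qp : Polynomial ℂ) : ℂ⟦X⟧) = Qps := by
    rw [hQpdef, hQpsdef, ← Polynomial.coeToPowerSeries.ringHom_apply, map_prod]
    refine Finset.prod_congr rfl fun j _ => ?_
    simp [Polynomial.coeToPowerSeries.ringHom_apply, Polynomial.coe_sub, Polynomial.coe_mul,
      Polynomial.coe_C, Polynomial.coe_X, Polynomial.coe_one]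
  have hPcoe : ((Pp : Polynomial ℂ) : ℂ⟦X⟧) = Pps := by
    rw [hPpdef, hPpsdef, ← Polynomial.coeToPowerSeries.ringHom_apply, map_sum]
    refine Finset.sum_congr rfl fun j _ => ?_
    rw [map_mul, map_prod]
    simp [Polynomial.coeToPowerSeries.ringHom_apply, Polynomial.coe_sub, Polynomial.coe_mul,
      Polynomial.coe_C, Polynomial.coe_X, Polynomial.coe_one]
  -- coefficient bounds
  have hQdeg : Qp.natDegree ≤ p := by
    refine le_trans (Polynomial.natDegree_prod_le _ _) ?_
    refine le_trans (Finset.sum_le_card_nsmul _ _ 1 fun j _ => ?_) (by simp)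
    refine le_trans (Polynomial.natDegree_sub_le _ _) ?_
    simp [Polynomial.natDegree_C_mul_le]
    exact le_trans (Polynomial.natDegree_mul_le) (by simp)
  have hPdeg : ∀ s, p ≤ s → Pp.coeff s = 0 := by
    intro s hs
    rw [hPpdef, Polynomial.finset_sum_coeff]
    refine Finset.sum_eq_zero fun j _ => ?_
    refine Polynomial.coeff_eq_zero_of_natDegree_lt (lt_of_le_of_lt ?_ (show p - 1 < s by omega))
    refine le_trans (Polynomial.natDegree_C_mul_le _ _) ?_
    refine le_trans (Polynomial.natDegree_prod_le _ _) ?_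
    refine le_trans (Finset.sum_le_card_nsmul _ _ 1 fun i _ => ?_) ?_
    · refine le_trans (Polynomial.natDegree_sub_le _ _) ?_
      simp
      exact le_trans (Polynomial.natDegree_mul_le) (by simp)
    · simp [Finset.card_erase_of_mem]
  have hQ0 : PowerSeries.coeff 0 Qps = 1 := by
    rw [hQpsdef, coeff_zero_eq_constantCoeff_apply, map_prod]
    simp
  have hQb : ∀ s, p < s → PowerSeries.coeff s Qps = 0 := by
    intro s hs
    rw [← hQcoe, Polynomial.coeff_coe]
    exact Polynomial.coeff_eq_zero_of_natDegree_lt (lt_of_le_of_lt hQdeg hs)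
  have hPb : ∀ s, p ≤ s → PowerSeries.coeff s Pps = 0 := by
    intro s hs
    rw [← hPcoe, Polynomial.coeff_coe]
    exact hPdeg s hs
  -- all high coefficients vanish
  have hvan : ∀ k, N ≤ k → PowerSeries.coeff k f = 0 :=
    vanish_prop f Qps Pps p N hN1 hode hQ0 hQb hPb hbase
  -- f is a polynomial
  set F : Polynomial ℂ := trunc N f with hFdef
  have hFcoe : ((F : Polynomial ℂ) : ℂ⟦X⟧) = f := by
    ext k
    rw [Polynomial.coeff_coe, hFdef, coeff_trunc]
    split_ifs with h
    · rfl
    · exact (hvan k (by omega)).symm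
  have hF0 : F.coeff 0 = 1 := by
    rw [← Polynomial.coeff_coe, hFcoe, hf0]
  have hFne : F ≠ 0 := fun h => by simp [h] at hF0
  -- polynomial ODE
  have hpode : Qp * Polynomial.derivative F = Pp * F := by
    have h : ((Qp * Polynomial.derivative F : Polynomial ℂ) : ℂ⟦X⟧)
        = ((Pp * F : Polynomial ℂ) : ℂ⟦X⟧) := by
      rw [Polynomial.coe_mul, Polynomial.coe_mul, hQcoe, hPcoe, hFcoe, ← hode]
      congr 1
      rw [← PowerSeries.derivative_coe, hFcoe]
    exact Polynomial.coe_inj.mp h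
  -- pick j with y j ≠ 0, and j' ≠ j
  obtain ⟨j, j', hjj', hyj⟩ : ∃ j j' : Fin p, j ≠ j' ∧ y j ≠ 0 := by
    have h0 : (0:ℕ) < p := by omega
    have h1 : (1:ℕ) < p := by omega
    have hne01 : (⟨0, h0⟩ : Fin p) ≠ ⟨1, h1⟩ := by simp [Fin.ext_iff]
    by_cases hy0 : y ⟨0, h0⟩ = 0
    · exact ⟨⟨1, h1⟩, ⟨0, h0⟩, hne01.symm, fun h => hne01 (hy (by rw [hy0, h]))⟩
    · exact ⟨⟨0, h0⟩, ⟨1, h1⟩, hne01, hy0⟩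
  set c : ℂ := (y j)⁻¹ with hcdef
  have hc : y j * c = 1 := mul_inv_cancel₀ hyj
  have hcne : c ≠ 0 := inv_ne_zero hyj
  set Qj : Polynomial ℂ := ∏ i ∈ Finset.univ.erase j,
      ((1 : Polynomial ℂ) - Polynomial.C (y i) * Polynomial.X) with hQjdef
  have hQsplit : Qp = ((1 : Polynomial ℂ) - Polynomial.C (y j) * Polynomial.X) * Qj :=
    (Finset.mul_prod_erase _ _ (Finset.mem_univ j)).symm
  have hfac : ((1 : Polynomial ℂ) - Polynomial.C (y j) * Polynomial.X) =
      (-(Polynomial.C (y j))) * (Polynomial.X - Polynomial.C c) := by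
    rw [neg_mul, mul_sub, ← Polynomial.C_mul, hc, Polynomial.C_1]
    ring
  have hQjc : Qj.eval c ≠ 0 := by
    rw [hQjdef, Polynomial.eval_prod]
    refine Finset.prod_ne_zero_iff.mpr fun i hi => ?_
    simp only [Polynomial.eval_sub, Polynomial.eval_one, Polynomial.eval_mul,
      Polynomial.eval_C, Polynomial.eval_X]
    intro h0
    have h1 : y i * c = 1 := by linear_combination -h0
    have h2 : y i = y j := mul_right_cancel₀ hcne (h1.trans hc.symm)
    exact (Finset.mem_erase.mp hi).1 (hy h2)
  have hPc : Pp.eval c = μ j * (-(y j)) * Qj.eval c := by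
    rw [hPpdef, Polynomial.eval_finset_sum, Finset.sum_eq_single j]
    · rw [Polynomial.eval_mul, Polynomial.eval_C, hQjdef]
    · intro i _ hij
      rw [Polynomial.eval_mul]
      rw [Polynomial.eval_prod]
      rw [Finset.prod_eq_zero (Finset.mem_erase.mpr ⟨Ne.symm hij, Finset.mem_univ j⟩)
        (by simp [hc])]
      ring
    · simp
  -- μ j is a nonnegative integer
  obtain ⟨E, hE⟩ : ∃ E : ℕ, μ j = (E : ℂ) := by
    set e : ℕ := Polynomial.rootMultiplicity c F with hedef
    rcases Nat.eq_zero_or_pos e with he0 | hepos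
    · refine ⟨0, ?_⟩
      have hnr : ¬ F.IsRoot c := by
        intro hroot
        have := (Polynomial.rootMultiplicity_pos hFne).mpr hroot
        omega
      have heval := congrArg (Polynomial.eval c) hpode
      rw [Polynomial.eval_mul, Polynomial.eval_mul, hQsplit, Polynomial.eval_mul] at heval
      have hz : Polynomial.eval c ((1 : Polynomial ℂ) - Polynomial.C (y j) * Polynomial.X) = 0 := by
        simp [hc]
      rw [hz, zero_mul, zero_mul, hPc] at heval
      have hFc : F.eval c ≠ 0 := hnr
      have : μ j * (-(y j)) * Qj.eval c = 0 := by
        rcases mul_eq_zero.mp heval.symm with h | h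
        · exact h
        · exact absurd h hFc
      rcases mul_eq_zero.mp this with h | h
      · rcases mul_eq_zero.mp h with h' | h'
        · simpa using h'
        · exact absurd (neg_eq_zero.mp h') hyj
      · exact absurd h hQjc
    · obtain ⟨e', he'⟩ : ∃ e', e = e' + 1 := ⟨e - 1, by omega⟩
      refine ⟨e, ?_⟩
      set G : Polynomial ℂ := F /ₘ (Polynomial.X - Polynomial.C c) ^ e with hGdef
      have hFe : (Polynomial.X - Polynomial.C c) ^ e * G = F :=
        Polynomial.pow_mul_divByMonic_rootMultiplicity_eq F c
      have hGc : G.eval c ≠ 0 :=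
        Polynomial.eval_divByMonic_pow_rootMultiplicity_ne_zero c hFne
      have hd : Polynomial.derivative F =
          Polynomial.C (e : ℂ) * (Polynomial.X - Polynomial.C c) ^ e' * G +
            (Polynomial.X - Polynomial.C c) ^ e * Polynomial.derivative G := by
        rw [← hFe, Polynomial.derivative_mul, Polynomial.derivative_pow,
          Polynomial.derivative_X_sub_C, mul_one, he']
        simp
      have key : (Polynomial.X - Polynomial.C c) ^ e *
          ((-(Polynomial.C (y j))) * Qj *
            (Polynomial.C (e : ℂ) * G + (Polynomial.X - Polynomial.C c) * Polynomial.derivative G))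
          = (Polynomial.X - Polynomial.C c) ^ e * (Pp * G) := by
        have h1 : (Polynomial.X - Polynomial.C c) ^ e * (Pp * G) = Pp * F := by
          rw [← hFe]; ring
        rw [h1, ← hpode, hQsplit, hfac, hd, he']
        ring
      have key2 : (-(Polynomial.C (y j))) * Qj *
            (Polynomial.C (e : ℂ) * G + (Polynomial.X - Polynomial.C c) * Polynomial.derivative G)
          = Pp * G :=
        mul_left_cancel₀ (pow_ne_zero _ (Polynomial.X_sub_C_ne_zero c)) key
      have heval := congrArg (Polynomial.eval c) key2
      simp only [Polynomial.eval_mul, Polynomial.eval_add, Polynomial.eval_neg,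
        Polynomial.eval_C, Polynomial.eval_sub, Polynomial.eval_X, sub_self, zero_mul,
        add_zero] at heval
      rw [hPc] at heval
      -- heval : -(y j) * Qj.eval c * ((e:ℂ) * G.eval c) = μ j * -(y j) * Qj.eval c * G.eval c
      have hfactor : (-(y j)) * Qj.eval c * G.eval c ≠ 0 :=
        mul_ne_zero (mul_ne_zero (neg_ne_zero.mpr hyj) hQjc) hGc
      have : ((e:ℂ) - μ j) * ((-(y j)) * Qj.eval c * G.eval c) = 0 := by
        linear_combination heval
      rcases mul_eq_zero.mp this with h | h
      · linear_combination -h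
      · exact absurd h hfactor
  -- conclude n ∣ m j, contradiction
  have hn0 : (n:ℂ) ≠ 0 := Nat.cast_ne_zero.mpr (by omega)
  have hmnc : ((m j * r : ℕ) : ℂ) = ((n * (E + 1) : ℕ) : ℂ) := by
    rw [hμdef] at hE
    simp only at hE
    push_cast
    field_simp at hE
    linear_combination hE
  have hmn : m j * r = n * (E + 1) := Nat.cast_injective hmnc
  have hdvd : n ∣ m j * r := Dvd.intro _ hmn.symm
  have hdvd2 : n ∣ m j := (Nat.Coprime.symm hcop).dvd_of_dvd_mul_right hdvd
  have hnle : n ≤ m j := Nat.le_of_dvd (hm j) hdvd2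
  have hsplit : m j' + ∑ i ∈ Finset.univ.erase j', m i = n := by
    rw [Finset.add_sum_erase _ _ (Finset.mem_univ j')]
    exact hsum
  have hle : m j ≤ ∑ i ∈ Finset.univ.erase j', m i :=
    Finset.single_le_sum (fun i _ => Nat.zero_le _)
      (Finset.mem_erase.mpr ⟨hjj', Finset.mem_univ j⟩)
  have := hm j'
  omega


end
end

section
/- Let A₁ be the Weyl algebra ℂ⟨x,y⟩/(xy − yx − 1), and let g = diag(λ, λ^{−1}) with λ ≠ 1 act on A₁ by x ↦ λx, y ↦ λ^{−1}y. Then the zeroth Hochschild cohomology of A₁ with coefficients in the twisted bimodule A₁g vanishes: there is no nonzero b ∈ A₁ with a·b = b·a^g for all a ∈ A₁. -/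
noncomputable section
open MvPolynomial

def wx : FreeAlgebra ℂ (Fin 2) := FreeAlgebra.ι ℂ 0
def wy : FreeAlgebra ℂ (Fin 2) := FreeAlgebra.ι ℂ 1

/-- The defining relation of the Weyl algebra `A₁ = ℂ⟨x,y⟩/(xy - yx - 1)`. -/
inductive WeylRel : FreeAlgebra ℂ (Fin 2) → FreeAlgebra ℂ (Fin 2) → Prop
  | xy : WeylRel (wx * wy) (wy * wx + 1)

/-- The Weyl algebra `A₁`. -/
abbrev WeylA1 := RingQuot WeylRel


abbrev WV := MvPolynomial (Fin 2) ℂ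
def oX : Module.End ℂ WV := LinearMap.mulLeft ℂ (X 0)
def oY : Module.End ℂ WV := LinearMap.mulLeft ℂ (X 1)
def dX : Module.End ℂ WV := (pderiv 0).toLinearMap
def dY : Module.End ℂ WV := (pderiv 1).toLinearMap
@[simp] lemma oX_apply (p : WV) : oX p = X 0 * p := rfl
@[simp] lemma oY_apply (p : WV) : oY p = X 1 * p := rfl
@[simp] lemma dX_apply (p : WV) : dX p = pderiv 0 p := rfl
@[simp] lemma dY_apply (p : WV) : dY p = pderiv 1 p := rfl
lemma end_mul_apply (f g : Module.End ℂ WV) (p : WV) : (f * g) p = f (g p) := rfl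
lemma cXX : dX * oX = oX * dX + 1 := by
  refine LinearMap.ext fun p => ?_; simp [end_mul_apply, pderiv_mul]
lemma cYY : dY * oY = oY * dY + 1 := by
  refine LinearMap.ext fun p => ?_; simp [end_mul_apply, pderiv_mul]
lemma cXY : dX * oY = oY * dX := by
  refine LinearMap.ext fun p => ?_; simp [end_mul_apply, pderiv_mul]
lemma cYX : dY * oX = oX * dY := by
  refine LinearMap.ext fun p => ?_; simp [end_mul_apply, pderiv_mul]
lemma cOO : oX * oY = oY * oX := by
  refine LinearMap.ext fun p => ?_; simp [end_mul_apply]; ring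
lemma cDD : dX * dY = dY * dX := by
  ext m; simp [end_mul_apply, single_eq_monomial, tsub_right_comm, mul_comm]

/-- left action generators -/
def Lx : Module.End ℂ WV := oX
def Ly : Module.End ℂ WV := oY - dX
/-- right action generators -/
def Rx : Module.End ℂ WV := oX - dY
def Ry : Module.End ℂ WV := oY

lemma weylL : Lx * Ly = Ly * Lx + 1 := by
  unfold Lx Ly
  rw [mul_sub, sub_mul, cOO, cXX]
  abel

/-- The left-regular-type representation of the Weyl algebra. -/
def Lrep : WeylA1 →ₐ[ℂ] Module.End ℂ WV :=
  RingQuot.liftAlgHom ℂ ⟨FreeAlgebra.lift ℂ ![Lx, Ly], by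
    rintro a b ⟨⟩
    simp [wx, wy, weylL]⟩

def mkx : WeylA1 := RingQuot.mkAlgHom ℂ WeylRel wx
def mky : WeylA1 := RingQuot.mkAlgHom ℂ WeylRel wy

@[simp] lemma Lrep_mkx : Lrep mkx = Lx := by
  simp [Lrep, mkx, wx, RingQuot.liftAlgHom_mkAlgHom_apply]
@[simp] lemma Lrep_mky : Lrep mky = Ly := by
  simp [Lrep, mky, wy, RingQuot.liftAlgHom_mkAlgHom_apply]

lemma pderiv01 (p : WV) : pderiv 0 (pderiv 1 p) = pderiv 1 (pderiv 0 p) :=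
  LinearMap.congr_fun cDD p

lemma commLxRx : Commute Lx Rx := by
  refine LinearMap.ext fun p => ?_
  simp [Lx, Rx, end_mul_apply, pderiv_mul, mul_sub, sub_mul]; try ring
lemma commLxRy : Commute Lx Ry := by
  refine LinearMap.ext fun p => ?_
  simp [Lx, Ry, end_mul_apply]; try ring
lemma commLyRx : Commute Ly Rx := by
  refine LinearMap.ext fun p => ?_
  simp [Ly, Rx, end_mul_apply, pderiv_mul, pderiv01, mul_sub, sub_mul]; try ring
lemma commLyRy : Commute Ly Ry := by
  refine LinearMap.ext fun p => ?_
  simp [Ly, Ry, end_mul_apply, pderiv_mul, mul_sub, sub_mul]; try ring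

lemma commL (a : WeylA1) : Commute (Lrep a) Rx ∧ Commute (Lrep a) Ry := by
  obtain ⟨c, rfl⟩ := RingQuot.mkAlgHom_surjective ℂ WeylRel a
  induction c using FreeAlgebra.induction with
  | grade0 r =>
      rw [AlgHom.commutes, AlgHom.commutes]
      exact ⟨Algebra.commute_algebraMap_left r Rx, Algebra.commute_algebraMap_left r Ry⟩
  | grade1 i =>
      have hL : Lrep (RingQuot.mkAlgHom ℂ WeylRel (FreeAlgebra.ι ℂ i)) = ![Lx, Ly] i := by
        simp [Lrep, RingQuot.liftAlgHom_mkAlgHom_apply]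
      rw [hL]
      fin_cases i
      · exact ⟨commLxRx, commLxRy⟩
      · exact ⟨commLyRx, commLyRy⟩
  | mul a b ha hb =>
      rw [map_mul, map_mul]
      exact ⟨ha.1.mul_left hb.1, ha.2.mul_left hb.2⟩
  | add a b ha hb =>
      rw [map_add, map_add]
      exact ⟨ha.1.add_left hb.1, ha.2.add_left hb.2⟩

def Phi (a : WeylA1) : WV := Lrep a 1

lemma Phi_one : Phi 1 = 1 := by simp [Phi]

lemma Rx_one : Rx (1 : WV) = X 0 := by simp [Rx]
lemma Ry_one : Ry (1 : WV) = X 1 := by simp [Ry]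
lemma Lx_one : Lx (1 : WV) = X 0 := by simp [Lx]
lemma Ly_one : Ly (1 : WV) = X 1 := by simp [Ly]

lemma Phi_mul_x (a : WeylA1) : Phi (a * mkx) = Rx (Phi a) := by
  have : Phi (a * mkx) = Lrep a (Rx 1) := by
    simp [Phi, map_mul, end_mul_apply, Rx_one, ← Lx_one]
  rw [this, ← end_mul_apply, (commL a).1.eq, end_mul_apply, Phi]

lemma Phi_mul_y (a : WeylA1) : Phi (a * mky) = Ry (Phi a) := by
  have : Phi (a * mky) = Lrep a (Ry 1) := by
    simp [Phi, map_mul, end_mul_apply, Ry_one, ← Ly_one]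
  rw [this, ← end_mul_apply, (commL a).2.eq, end_mul_apply, Phi]

lemma mk_rel : mkx * mky = mky * mkx + 1 := by
  have := RingQuot.mkAlgHom_rel ℂ WeylRel.xy
  simpa [mkx, mky, map_mul, map_add, map_one] using this

lemma yx_rel : mky * mkx = mkx * mky - 1 := by
  rw [mk_rel, add_sub_cancel_right]

lemma pow_comm (j : ℕ) : mky ^ j * mkx = mkx * mky ^ j - (j : ℂ) • mky ^ (j - 1) := by
  induction j with
  | zero => simp
  | succ j ih =>
      have step : mky ^ (j + 1) * mkx = (mky ^ j * mkx) * mky - mky ^ j := by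
        rw [pow_succ, mul_assoc, yx_rel, mul_sub, mul_one, mul_assoc]
      have hj : (j : ℂ) • (mky ^ (j - 1) * mky) = (j : ℂ) • mky ^ j := by
        cases j with
        | zero => simp
        | succ k => rw [Nat.succ_sub_one, ← pow_succ]
      rw [step, ih, sub_mul, smul_mul_assoc, hj, mul_assoc, ← pow_succ, sub_sub]
      push_cast
      rw [add_smul, one_smul]

@[simp] lemma Rx_apply (p : WV) : Rx p = X 0 * p - pderiv 1 p := rfl
@[simp] lemma Ry_apply (p : WV) : Ry p = X 1 * p := rfl

def Psi : WV →ₗ[ℂ] WeylA1 :=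
  (MvPolynomial.basisMonomials (Fin 2) ℂ).constr ℂ fun s => mkx ^ (s 0) * mky ^ (s 1)

lemma Psi_basis (s : Fin 2 →₀ ℕ) :
    Psi (monomial s 1) = mkx ^ (s 0) * mky ^ (s 1) := by
  have : (monomial s (1:ℂ)) = (MvPolynomial.basisMonomials (Fin 2) ℂ) s := by
    rw [coe_basisMonomials]
  rw [this, Psi, Module.Basis.constr_basis]

lemma Psi_monomial (s : Fin 2 →₀ ℕ) (a : ℂ) :
    Psi (monomial s a) = a • (mkx ^ (s 0) * mky ^ (s 1)) := by
  have : (monomial s a : WV) = a • monomial s 1 := by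
    rw [smul_monomial, smul_eq_mul, mul_one]
  rw [this, map_smul, Psi_basis]

lemma Psi_Ry (p : WV) : Psi (Ry p) = Psi p * mky := by
  have : Psi.comp Ry = (LinearMap.mulRight ℂ mky).comp Psi := by
    apply (MvPolynomial.basisMonomials (Fin 2) ℂ).ext
    intro s
    rw [coe_basisMonomials]
    simp only [LinearMap.comp_apply, LinearMap.mulRight_apply, Psi_basis]
    rw [Ry_apply, X, monomial_mul, Psi_monomial, one_mul, one_smul]
    have e0 : ((Finsupp.single (1 : Fin 2) 1 + s : Fin 2 →₀ ℕ)) 0 = s 0 := by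
      simp [Finsupp.add_apply, Finsupp.single_apply]
    have e1 : ((Finsupp.single (1 : Fin 2) 1 + s : Fin 2 →₀ ℕ)) 1 = s 1 + 1 := by
      simp [Finsupp.add_apply, Finsupp.single_apply, add_comm]
    rw [e0, e1, pow_succ, ← mul_assoc]
  exact LinearMap.congr_fun this p

lemma Psi_Rx (p : WV) : Psi (Rx p) = Psi p * mkx := by
  have : Psi.comp Rx = (LinearMap.mulRight ℂ mkx).comp Psi := by
    apply (MvPolynomial.basisMonomials (Fin 2) ℂ).ext
    intro s
    rw [coe_basisMonomials]
    simp only [LinearMap.comp_apply, LinearMap.mulRight_apply, Psi_basis]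
    rw [Rx_apply, X, monomial_mul, pderiv_monomial, map_sub, Psi_monomial, Psi_monomial,
      one_mul, one_smul]
    have e0 : ((Finsupp.single (0 : Fin 2) 1 + s : Fin 2 →₀ ℕ)) 0 = s 0 + 1 := by
      simp [Finsupp.add_apply, Finsupp.single_apply, add_comm]
    have e1 : ((Finsupp.single (0 : Fin 2) 1 + s : Fin 2 →₀ ℕ)) 1 = s 1 := by
      simp [Finsupp.add_apply, Finsupp.single_apply]
    have f0 : ((s - Finsupp.single (1 : Fin 2) 1 : Fin 2 →₀ ℕ)) 0 = s 0 := by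
      simp [Finsupp.sub_apply, Finsupp.single_apply]
    have f1 : ((s - Finsupp.single (1 : Fin 2) 1 : Fin 2 →₀ ℕ)) 1 = s 1 - 1 := by
      simp [Finsupp.sub_apply, Finsupp.single_apply]
    rw [e0, e1, f0, f1]
    rw [mul_assoc, pow_comm, mul_sub, ← mul_assoc, ← pow_succ, mul_smul_comm, one_mul]
  exact LinearMap.congr_fun this p

lemma Phi_smul (r : ℂ) (c : WeylA1) : Phi (r • c) = r • Phi c := by
  simp [Phi, map_smul]
lemma Phi_add (u v : WeylA1) : Phi (u + v) = Phi u + Phi v := by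
  simp [Phi, map_add]

lemma Psi_one : Psi (1 : WV) = 1 := by
  have : (1 : WV) = monomial 0 1 := by simp
  rw [this, Psi_basis]
  simp

lemma Psi_Phi (a : WeylA1) : Psi (Phi a) = a := by
  have key : ∀ e : FreeAlgebra ℂ (Fin 2), ∀ c : WeylA1,
      Psi (Phi (c * RingQuot.mkAlgHom ℂ WeylRel e)) =
        Psi (Phi c) * RingQuot.mkAlgHom ℂ WeylRel e := by
    intro e
    induction e using FreeAlgebra.induction with
    | grade0 r =>
        intro c
        rw [AlgHom.commutes]
        have h1 : c * algebraMap ℂ WeylA1 r = r • c := by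
          rw [Algebra.algebraMap_eq_smul_one, mul_smul_comm, mul_one]
        have h2 : Psi (Phi c) * algebraMap ℂ WeylA1 r = r • Psi (Phi c) := by
          rw [Algebra.algebraMap_eq_smul_one, mul_smul_comm, mul_one]
        rw [h1, h2, Phi_smul, map_smul]
    | grade1 i =>
        intro c
        fin_cases i
        · show Psi (Phi (c * mkx)) = Psi (Phi c) * mkx
          rw [Phi_mul_x, Psi_Rx]
        · show Psi (Phi (c * mky)) = Psi (Phi c) * mky
          rw [Phi_mul_y, Psi_Ry]
    | mul a b ha hb =>
        intro c
        rw [map_mul, ← mul_assoc, hb, ha, mul_assoc]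
    | add a b ha hb =>
        intro c
        rw [map_add, mul_add, Phi_add, map_add, ha, hb, mul_add]
  obtain ⟨e, rfl⟩ := RingQuot.mkAlgHom_surjective ℂ WeylRel a
  have := key e 1
  rw [one_mul, Phi_one, Psi_one, one_mul] at this
  exact this


lemma key_poly (c : ℂ) (hc : c ≠ 0) (P : WV) (h : pderiv 0 P = c • (X 1 * P)) :
    P = 0 := by
  by_contra hP
  rcases Nat.eq_zero_or_pos (degreeOf 0 P) with hd | hd
  · -- no X-variable: derivative is zero, so X 1 * P = 0, contradiction
    have hv : (0 : Fin 2) ∉ P.vars := by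
      intro hmem
      obtain ⟨m, hm, h0⟩ := (mem_vars 0).1 hmem
      have := monomial_le_degreeOf 0 hm
      rw [hd] at this
      exact (Finsupp.mem_support_iff.1 h0) (Nat.le_zero.1 this)
    rw [pderiv_eq_zero_of_notMem_vars hv] at h
    have : (X 1 * P : WV) = 0 := by
      have := h.symm
      rwa [smul_eq_zero, or_iff_right hc] at this
    rcases mul_eq_zero.1 this with h' | h'
    · exact X_ne_zero 1 h'
    · exact hP h'
  · -- positive X-degree: derivative drops it, contradiction
    have hlt : degreeOf 0 (pderiv 0 P) < degreeOf 0 P := by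
      classical
      rw [degreeOf_lt_iff hd]
      intro m hm
      rw [show pderiv 0 P = ∑ s ∈ P.support, monomial (s - Finsupp.single 0 1)
            (coeff s P * s 0) from by
          conv_lhs => rw [P.as_sum]
          rw [map_sum]
          exact Finset.sum_congr rfl fun s _ => pderiv_monomial] at hm
      obtain ⟨s, hs, hms⟩ := Finset.mem_biUnion.1 (support_sum hm)
      have hsub := support_monomial_subset hms
      rw [Finset.mem_singleton] at hsub
      subst hsub
      have h1 : s 0 ≤ degreeOf 0 P := monomial_le_degreeOf 0 hs
      have h2 : ((s - Finsupp.single 0 1 : Fin 2 →₀ ℕ)) 0 = s 0 - 1 := by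
        simp [Finsupp.sub_apply, Finsupp.single_apply]
      rw [h2]
      omega
    have heq : degreeOf 0 (X 1 * P) = degreeOf 0 P := by
      rw [mul_comm]
      exact degreeOf_mul_X_of_ne P (by decide)
    have h3 : (X 1 * P : WV) = c⁻¹ • pderiv 0 P := by
      rw [h, smul_smul, inv_mul_cancel₀ hc, one_smul]
    have h4 : degreeOf 0 (X 1 * P) ≤ degreeOf 0 (pderiv 0 P) := by
      rw [h3, smul_eq_C_mul]
      exact degreeOf_C_mul_le _ _ _
    omega


/-- Vanishing of `H⁰(A₁, A₁ g)` for `g = diag(λ, λ⁻¹)`, `λ ≠ 1`, acting by `x ↦ λ x`,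
`y ↦ λ⁻¹ y`: there is no nonzero `b ∈ A₁` with `a b = b a^g` for all `a`; equivalently,
if `x b = λ (b x)` and `y b = λ⁻¹ (b y)` then `b = 0`. -/
theorem weyl_twisted_H0_vanishes (lam : ℂ) (h0 : lam ≠ 0) (h1 : lam ≠ 1) (b : WeylA1)
    (hx : RingQuot.mkAlgHom ℂ WeylRel wx * b = lam • (b * RingQuot.mkAlgHom ℂ WeylRel wx))
    (hy : RingQuot.mkAlgHom ℂ WeylRel wy * b = lam⁻¹ • (b * RingQuot.mkAlgHom ℂ WeylRel wy)) :
    b = 0 := by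
  have hy' : mky * b = lam⁻¹ • (b * mky) := hy
  set P := Phi b with hPdef
  have e1 : Phi (mky * b) = X 1 * P - pderiv 0 P := by
    rw [Phi, map_mul, Lrep_mky, end_mul_apply]
    simp [Ly, LinearMap.sub_apply, hPdef, Phi]
  have e2 : Phi (b * mky) = X 1 * P := by
    rw [Phi_mul_y, Ry_apply]
  have e3 : X 1 * P - pderiv 0 P = lam⁻¹ • (X 1 * P) := by
    have hcong := congrArg Phi hy'
    rw [e1, Phi_smul, e2] at hcong
    exact hcong
  have e4 : pderiv 0 P = (1 - lam⁻¹) • (X 1 * P) := by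
    have : pderiv 0 P = X 1 * P - lam⁻¹ • (X 1 * P) := by
      rw [← e3, sub_sub_cancel]
    rw [this, sub_smul, one_smul]
  have hc : (1 : ℂ) - lam⁻¹ ≠ 0 := by
    rw [sub_ne_zero]
    intro hh
    exact h1 (by rw [← inv_inv lam, ← hh, inv_one])
  have hP0 : P = 0 := key_poly _ hc P e4
  calc b = Psi (Phi b) := (Psi_Phi b).symm
    _ = Psi 0 := by rw [← hPdef, hP0]
    _ = 0 := map_zero Psi

end
end
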